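/- arXiv:2604.18480 — 10 statements merged into one kernel-verified Lean document; each statement's English description precedes it below -/
import Mathlib

section
/- Let D be a division ring and k its center (which is a field). Let D[z] denote the ordinary polynomial ring over D (with z a central indeterminate), which is a left and right noetherian domain, and let (E, f) be a ring of fractions of D[z]. Then E is not finitely generated as a k-algebra: there is no finite subset F of E such that the smallest subring of E containing f(c·1) for all c ∈ k together with F equals E. -/
open Polynomial

namespace Stmt2Aux

noncomputable section

variable {D : Type*} [DivisionRing D]

/-- The embedding of central polynomials into `D[z]`. -/
def μ (p : Polynomial (Subring.center D)) : Polynomial D :=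
  p.map (Subring.center D).subtype

theorem μ_injective : Function.Injective (μ (D := D)) :=
  Polynomial.map_injective _ (Subring.center D).subtype_injective

theorem μ_natDegree (p : Polynomial (Subring.center D)) :
    (μ (D := D) p).natDegree = p.natDegree :=
  natDegree_map_eq_of_injective (f := (Subring.center D).subtype)
    Subtype.coe_injective p

theorem μ_mul (p q : Polynomial (Subring.center D)) : μ (p * q) = μ p * μ q :=
  Polynomial.map_mul _

theorem μ_add (p q : Polynomial (Subring.center D)) : μ (p + q) = μ p + μ q :=
  Polynomial.map_add _

theorem μ_one : μ (1 : Polynomial (Subring.center D)) = 1 :=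
  Polynomial.map_one _

theorem commute_C_center (c : Subring.center D) (q : Polynomial D) :
    Commute (C (c : D)) q := by
  induction q using Polynomial.induction_on' with
  | add p q hp hq => exact hp.add_right hq
  | monomial n a =>
    unfold Commute SemiconjBy
    rw [C_mul_monomial, monomial_mul_C]
    congr 1
    exact (Subring.mem_center_iff.mp c.2 a).symm

theorem μ_commute (p : Polynomial (Subring.center D)) (q : Polynomial D) :
    Commute (μ p) q := by
  induction p using Polynomial.induction_on' with
  | add r s hr hs => rw [μ_add]; exact hr.add_left hs
  | monomial n a =>
    have : μ (D := D) (monomial n a) = C (a : D) * X ^ n := by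
      unfold μ
      rw [Polynomial.map_monomial, ← C_mul_X_pow_eq_monomial]
      rfl
    rw [this]
    exact (commute_C_center a q).mul_left ((Polynomial.commute_X q).pow_left n)

theorem euclid (y b : Polynomial D) (hb : b ≠ 0) :
    ∃ q r : Polynomial D, y = b * q + r ∧ r.degree < b.degree := by
  have hlc : b.leadingCoeff ≠ 0 := leadingCoeff_ne_zero.mpr hb
  set b' := b * C b.leadingCoeff⁻¹ with hb'def
  have hmon : b'.Monic := by
    unfold Polynomial.Monic
    rw [hb'def, leadingCoeff_mul, leadingCoeff_C, mul_inv_cancel₀ hlc]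
  have hdegeq : b'.degree = b.degree := by
    rw [hb'def, degree_mul, degree_C (inv_ne_zero hlc), add_zero]
  refine ⟨C b.leadingCoeff⁻¹ * (y /ₘ b'), y %ₘ b', ?_, ?_⟩
  · have h1 := modByMonic_eq_sub_mul_div y b'
    rw [← mul_assoc, ← hb'def, h1]
    abel
  · exact hdegeq ▸ degree_modByMonic_lt y hmon


theorem exists_min_dvd (b c : Polynomial D) (hex : ∃ w, w ≠ 0 ∧ ∃ s, c * w = b * s) :
    ∃ b₁, b₁ ≠ 0 ∧ (∃ s, c * b₁ = b * s) ∧ ∀ w, (∃ s, c * w = b * s) → b₁ ∣ w := by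
  classical
  have hS : ∃ n, ∃ w : Polynomial D, (w ≠ 0 ∧ ∃ s, c * w = b * s) ∧ w.natDegree = n := by
    obtain ⟨w, hw, hs⟩ := hex
    exact ⟨w.natDegree, w, ⟨hw, hs⟩, rfl⟩
  obtain ⟨b₁, ⟨hb₁, s₁, hs₁⟩, hdeg⟩ := Nat.find_spec hS
  refine ⟨b₁, hb₁, ⟨s₁, hs₁⟩, ?_⟩
  rintro w ⟨sw, hsw⟩
  by_cases hw0 : w = 0
  · exact hw0 ▸ dvd_zero b₁
  obtain ⟨q, r, hqr, hr⟩ := euclid w b₁ hb₁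
  by_cases hr0 : r = 0
  · exact ⟨q, by rw [hqr, hr0, add_zero]⟩
  exfalso
  have hrI : ∃ s, c * r = b * s := by
    refine ⟨sw - s₁ * q, ?_⟩
    have h2 : c * r = c * w - c * b₁ * q := by
      rw [hqr, mul_add, ← mul_assoc]; abel
    rw [h2, hsw, hs₁, mul_sub, mul_assoc]
  have hmin : Nat.find hS ≤ r.natDegree := Nat.find_min' hS ⟨r, ⟨hr0, hrI⟩, rfl⟩
  have hlt : r.natDegree < b₁.natDegree := natDegree_lt_natDegree hr0 hr
  omega

/-- The set of monic irreducible central polynomials `p` such that right multiplication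
by `p` is not injective on `D[z]/bD[z]`. -/
def Bad (b : Polynomial D) : Set (Polynomial (Subring.center D)) :=
  {p | p.Monic ∧ Irreducible p ∧ ∃ x : Polynomial D, ¬ b ∣ x ∧ b ∣ x * μ p}

theorem bad_one : Bad (1 : Polynomial D) = ∅ := by
  ext p
  simp only [Bad, Set.mem_setOf_eq, Set.mem_empty_iff_false, iff_false, not_and]
  rintro - - ⟨x, hx, -⟩
  exact hx (one_dvd x)

theorem bad_mul {d b₁ : Polynomial D} (hd : d ≠ 0) : Bad (d * b₁) ⊆ Bad d ∪ Bad b₁ := by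
  rintro p ⟨hmon, hirr, x, hx1, r, hx2⟩
  by_cases hdx : d ∣ x
  · obtain ⟨y, rfl⟩ := hdx
    right
    refine ⟨hmon, hirr, y, ?_, ?_⟩
    · rintro ⟨t, rfl⟩
      exact hx1 ⟨t, by rw [mul_assoc]⟩
    · refine ⟨r, ?_⟩
      apply mul_left_cancel₀ hd
      rw [← mul_assoc, ← mul_assoc, ← hx2, mul_assoc]
  · left
    exact ⟨hmon, hirr, x, hdx, ⟨b₁ * r, by rw [hx2, mul_assoc]⟩⟩

theorem bad_min {b c b₁ : Polynomial D}
    (hmem : ∃ s, c * b₁ = b * s) (hmin : ∀ w, (∃ s, c * w = b * s) → b₁ ∣ w) :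
    Bad b₁ ⊆ Bad b := by
  rintro p ⟨hmon, hirr, x, hx1, t, hx2⟩
  obtain ⟨s, hs⟩ := hmem
  refine ⟨hmon, hirr, c * x, ?_, ⟨s * t, ?_⟩⟩
  · rintro ⟨u, hu⟩
    exact hx1 (hmin x ⟨u, hu⟩)
  · rw [mul_assoc, hx2, ← mul_assoc, hs, mul_assoc]


theorem swap_aux (u c m r : Polynomial D) (h : c * m = m * c) :
    u * c * (m * r) = u * m * (c * r) := by
  rw [mul_assoc u c, ← mul_assoc c m, h, mul_assoc m c, ← mul_assoc u m]

theorem swap_aux2 (u c m : Polynomial D) (h : c * m = m * c) :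
    u * c * m = u * m * c := by
  rw [mul_assoc, h, ← mul_assoc]

theorem bad_finite {b : Polynomial D} (hb : b ≠ 0) : (Bad b).Finite := by
  classical
  by_contra hinf
  obtain ⟨t, hts, hcard⟩ :=
    Set.Infinite.exists_subset_card_eq hinf (b.natDegree + 1)
  have hw : ∀ p ∈ t, ∃ x : Polynomial D, ¬ b ∣ x ∧ b ∣ x * μ p ∧ x.degree < b.degree := by
    intro p hp
    obtain ⟨-, -, x, hx1, hx2⟩ := hts hp
    obtain ⟨q, r, hqr, hr⟩ := euclid x b hb
    refine ⟨r, ?_, ?_, hr⟩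
    · rintro ⟨u, hu⟩
      exact hx1 ⟨q + u, by rw [hqr, hu, mul_add]⟩
    · have h2 : r * μ p = x * μ p - b * (q * μ p) := by
        rw [hqr, add_mul, ← mul_assoc]; abel
      rw [h2]
      exact dvd_sub hx2 ⟨q * μ p, rfl⟩
  choose! x hx1 hx2 hx3 using hw
  set n := b.natDegree with hn
  let v : ↥t → (Fin n → Dᵐᵒᵖ) := fun p i => MulOpposite.op ((x ↑p).coeff ↑i)
  have hnli : ¬ LinearIndependent Dᵐᵒᵖ v := by
    intro h
    have hle := h.fintype_card_le_finrank
    rw [Module.finrank_fin_fun, Fintype.card_coe, hcard] at hle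
    omega
  obtain ⟨g, hsum, j, hj⟩ := Fintype.not_linearIndependent_iff.mp hnli
  let w : ↥t → Polynomial D := fun p => x ↑p * C (g p).unop
  have hcoeffw : ∀ (p : ↥t) (i : ℕ), (w p).coeff i = (x ↑p).coeff i * (g p).unop :=
    fun p i => coeff_mul_C _ _ _
  have hwsum : ∑ p, w p = 0 := by
    apply Polynomial.ext; intro i
    rw [finset_sum_coeff, coeff_zero]
    by_cases hi : i < n
    · have h0 := congrFun hsum ⟨i, hi⟩
      rw [Finset.sum_apply, Pi.zero_apply] at h0
      have hterm : ∀ p : ↥t, (g p • v p) ⟨i, hi⟩ = MulOpposite.op ((w p).coeff i) := by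
        intro p
        rw [Pi.smul_apply, smul_eq_mul, hcoeffw]
        conv_lhs => rw [← MulOpposite.op_unop (g p)]
        rw [← MulOpposite.op_mul]
      have h1 : ∑ p : ↥t, MulOpposite.op ((w p).coeff i) = (0 : Dᵐᵒᵖ) := by
        simp only [← hterm]
        exact h0
      rw [← Finset.op_sum] at h1
      exact MulOpposite.op_eq_zero_iff _ |>.mp h1
    · push_neg at hi
      apply Finset.sum_eq_zero
      intro p hp
      rw [hcoeffw]
      have hz : (x ↑p).coeff i = 0 := by
        apply coeff_eq_zero_of_degree_lt
        calc (x ↑p).degree < b.degree := hx3 ↑p p.2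
        _ = (n : WithBot ℕ) := degree_eq_natDegree hb
        _ ≤ (i : WithBot ℕ) := by exact_mod_cast hi
      rw [hz, zero_mul]
  have hjt : (↑j : Polynomial (Subring.center D)) ∈ t := j.2
  set P : Polynomial (Subring.center D) := ↑j with hP
  set Q : Polynomial (Subring.center D) := ∏ p ∈ t.erase P, p with hQ
  have hwj : w j = -∑ p ∈ Finset.univ.erase j, w p :=
    eq_neg_of_add_eq_zero_left
      (by rw [Finset.add_sum_erase _ w (Finset.mem_univ j)]; exact hwsum)
  have hdvd_term : ∀ p ∈ Finset.univ.erase j, b ∣ w p * μ Q := by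
    intro p hp
    have hpj : (↑p : Polynomial _) ≠ P := fun h => (Finset.mem_erase.mp hp).1 (Subtype.ext h)
    have hpmem : (↑p : Polynomial _) ∈ t.erase P := Finset.mem_erase.mpr ⟨hpj, p.2⟩
    have hQsplit : Q = ↑p * ∏ q ∈ (t.erase P).erase ↑p, q :=
      (Finset.mul_prod_erase _ _ hpmem).symm
    rw [hQsplit, μ_mul]
    have heq : w p * (μ ↑p * μ (∏ q ∈ (t.erase P).erase ↑p, q))
        = (x ↑p * μ ↑p) * (C (g p).unop * μ (∏ q ∈ (t.erase P).erase ↑p, q)) :=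
      swap_aux _ _ _ _ ((μ_commute (D := D) (p : Polynomial (Subring.center D)) (C (g p).unop)).eq.symm)
    rw [heq]
    exact (hx2 ↑p p.2).mul_right _
  have hbQ : b ∣ w j * μ Q := by
    rw [hwj, neg_mul, dvd_neg, Finset.sum_mul]
    exact Finset.dvd_sum hdvd_term
  have hbP : b ∣ w j * μ P := by
    have heq : w j * μ P = x ↑j * μ P * C (g j).unop :=
      swap_aux2 _ _ _ ((μ_commute P (C (g j).unop)).eq.symm)
    rw [heq]
    exact (hx2 ↑j hjt).mul_right _
  have hPmon : P.Monic := (hts hjt).1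
  have hPirr : Irreducible P := (hts hjt).2.1
  have hndvd : ¬ P ∣ Q := by
    intro hdvd
    obtain ⟨p', hp'mem, hp'dvd⟩ := hPirr.prime.exists_mem_finset_dvd hdvd
    have hp'irr : Irreducible p' := (hts (Finset.mem_of_mem_erase hp'mem)).2.1
    have := eq_of_monic_of_associated hPmon (hts (Finset.mem_of_mem_erase hp'mem)).1
      (hPirr.associated_of_dvd hp'irr hp'dvd)
    exact (Finset.mem_erase.mp hp'mem).1 this.symm
  obtain ⟨α, β, hαβ⟩ := (hPirr.coprime_iff_not_dvd).mpr hndvd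
  have hbwj : b ∣ w j := by
    have h1 : w j = w j * μ (α * P) + w j * μ (β * Q) := by
      rw [← mul_add, ← μ_add, hαβ, μ_one, mul_one]
    rw [h1]
    apply dvd_add
    · rw [mul_comm α P, μ_mul, ← mul_assoc]
      exact hbP.mul_right _
    · rw [mul_comm β Q, μ_mul, ← mul_assoc]
      exact hbQ.mul_right _
  have hdj : (g j).unop ≠ 0 := fun h =>
    hj (by rw [← MulOpposite.op_unop (g j), h, MulOpposite.op_zero])
  have hfinal : b ∣ x ↑j := by
    obtain ⟨u, hu⟩ := hbwj
    refine ⟨u * C (g j).unop⁻¹, ?_⟩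
    have hxj : x ↑j = w j * C (g j).unop⁻¹ := by
      show x ↑j = x ↑j * C (g j).unop * C (g j).unop⁻¹
      rw [mul_assoc, ← C_mul, mul_inv_cancel₀ hdj, C_1, mul_one]
    rw [hxj, hu, mul_assoc]
  exact hx1 ↑j hjt hfinal


theorem exists_good_irred (K : Type*) [Field K] (S : Set (Polynomial K)) (hS : S.Finite)
    (hmon : ∀ p ∈ S, p.Monic) :
    ∃ p : Polynomial K, p.Monic ∧ Irreducible p ∧ p ∉ S := by
  classical
  set q : Polynomial K := ∏ p ∈ hS.toFinset, p with hq
  have hqmon : q.Monic :=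
    monic_prod_of_monic _ _ (fun p hp => hmon p (hS.mem_toFinset.mp hp))
  set h : Polynomial K := q * X + 1 with hh
  have hqX : (q * X).Monic := hqmon.mul monic_X
  have hdeg : (0 : WithBot ℕ) < (q * X).degree := by
    rw [← natDegree_pos_iff_degree_pos, natDegree_mul hqmon.ne_zero X_ne_zero, natDegree_X]
    omega
  have hdeg1 : degree (1 : Polynomial K) < (q * X).degree := by
    rw [degree_one]; exact hdeg
  have hmonh : h.Monic := hqX.add_of_left hdeg1
  have hhdeg : 0 < h.degree := by
    rw [hh, degree_add_eq_left_of_degree_lt hdeg1]; exact hdeg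
  have hnu : ¬ IsUnit h := not_isUnit_of_degree_pos h hhdeg
  obtain ⟨i, hi, hidvd⟩ := WfDvdMonoid.exists_irreducible_factor hnu hmonh.ne_zero
  have hi0 : i ≠ 0 := hi.ne_zero
  have hlcu : IsUnit (C i.leadingCoeff⁻¹) :=
    isUnit_C.mpr (isUnit_iff_ne_zero.mpr (inv_ne_zero (leadingCoeff_ne_zero.mpr hi0)))
  have hassoc : Associated i (i * C i.leadingCoeff⁻¹) := associated_mul_unit_right _ _ hlcu
  have hirr : Irreducible (i * C i.leadingCoeff⁻¹) := hassoc.irreducible hi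
  refine ⟨i * C i.leadingCoeff⁻¹, monic_mul_leadingCoeff_inv hi0, hirr, ?_⟩
  intro hmem
  have hdvdq : (i * C i.leadingCoeff⁻¹) ∣ q :=
    Finset.dvd_prod_of_mem _ (hS.mem_toFinset.mpr hmem)
  have hdvdh : (i * C i.leadingCoeff⁻¹) ∣ h := hassoc.symm.dvd.trans hidvd
  have hone : (i * C i.leadingCoeff⁻¹) ∣ (1 : Polynomial K) := by
    have := dvd_sub hdvdh (hdvdq.mul_right X)
    rw [hh, add_sub_cancel_left] at this
    exact this
  exact hirr.not_isUnit (isUnit_of_dvd_one hone)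

section Ore

variable {E : Type*} [DivisionRing E] (f : Polynomial D →+* E)

theorem fne (hinj : Function.Injective f) {a : Polynomial D} (ha : a ≠ 0) : f a ≠ 0 :=
  fun h0 => ha (hinj (h0.trans (map_zero f).symm))

theorem ore (hinj : Function.Injective f)
    (hfrac : ∀ x : E, ∃ a b : Polynomial D, b ≠ 0 ∧ x = f a * (f b)⁻¹)
    (b c : Polynomial D) (hb : b ≠ 0) :
    ∃ b₁ c₁ : Polynomial D, b₁ ≠ 0 ∧ c * b₁ = b * c₁ := by
  obtain ⟨c₁, b₁, hb₁, h⟩ := hfrac ((f b)⁻¹ * f c)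
  have hfb : f b ≠ 0 := fne f hinj hb
  have hfb₁ : f b₁ ≠ 0 := fne f hinj hb₁
  refine ⟨b₁, c₁, hb₁, hinj ?_⟩
  rw [map_mul, map_mul]
  have h2 := congrArg (fun z => f b * z * f b₁) h
  beta_reduce at h2
  rw [← mul_assoc (f b), mul_inv_cancel₀ hfb, one_mul] at h2
  rw [mul_assoc (f b), mul_assoc (f c₁), inv_mul_cancel₀ hfb₁, mul_one] at h2
  exact h2

theorem frac_cancel {E : Type*} [DivisionRing E] {u v m : E} (hv : v ≠ 0) :
    u * v * (m * v)⁻¹ = u * m⁻¹ := by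
  rw [mul_inv_rev, mul_assoc, ← mul_assoc v, mul_inv_cancel₀ hv, one_mul]

end Ore

end
end Stmt2Aux

open Stmt2Aux Polynomial in
/-- If `D` is a division ring with center `k`, and `(E, f)` is a ring of
fractions of the polynomial ring `D[z]`, then `E` is not finitely generated as a
`k`-algebra. -/
theorem stmt_2 (D : Type*) [DivisionRing D]
    -- a ring of fractions `(E, f)` of `D[z]`:
    (E : Type*) [DivisionRing E] (f : Polynomial D →+* E)
    (hinj : Function.Injective f)
    (hfrac : ∀ x : E, ∃ a b : Polynomial D, b ≠ 0 ∧ x = f a * (f b)⁻¹) :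
    -- conclusion: `E` is not affine over the center `k` of `D`
    ¬ ∃ F : Set E, F.Finite ∧
      Subring.closure
        ((Set.range fun c : Subring.center D => f (Polynomial.C (c : D))) ∪ F) = ⊤ := by
  classical
  rintro ⟨F, hF, hclose⟩
  have hfrac2 := hfrac
  choose num den hden hrep using hfrac2
  set S : Set (Polynomial (Subring.center D)) := ⋃ u ∈ F, Bad (den u) with hS
  have hSfin : S.Finite := hF.biUnion (fun u _ => bad_finite (hden u))
  have hSmon : ∀ p ∈ S, p.Monic := by
    intro p hp
    simp only [hS, Set.mem_iUnion] at hp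
    obtain ⟨u, -, hmon, -⟩ := hp
    exact hmon
  have hfne : ∀ {a : Polynomial D}, a ≠ 0 → f a ≠ 0 := fun ha => fne f hinj ha
  -- the subring of fractions with controlled denominators
  let T : Subring E :=
  { carrier := {x | ∃ a b : Polynomial D, b ≠ 0 ∧ Bad b ⊆ S ∧ x = f a * (f b)⁻¹}
    zero_mem' := ⟨0, 1, one_ne_zero, by rw [bad_one]; exact Set.empty_subset _, by rw [map_zero, zero_mul]⟩
    one_mem' := ⟨1, 1, one_ne_zero, by rw [bad_one]; exact Set.empty_subset _,
      by rw [map_one, inv_one, mul_one]⟩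
    neg_mem' := by
      rintro x ⟨a, b, hb, hBb, rfl⟩
      exact ⟨-a, b, hb, hBb, by rw [map_neg, neg_mul]⟩
    add_mem' := by
      rintro x y ⟨a, b, hb, hBb, rfl⟩ ⟨c, d, hd, hBd, rfl⟩
      obtain ⟨b₀, d₀, hb₀, hdb₀⟩ := ore f hinj hfrac b d hb
      obtain ⟨b₁, hb₁, ⟨d₁, hd₁⟩, hmin⟩ := exists_min_dvd b d ⟨b₀, hb₀, d₀, hdb₀⟩
      have hd₁0 : d₁ ≠ 0 := by
        rintro rfl
        rw [mul_zero] at hd₁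
        exact mul_ne_zero hd hb₁ hd₁
      refine ⟨a * d₁ + c * b₁, d * b₁, mul_ne_zero hd hb₁,
        (bad_mul hd).trans (Set.union_subset hBd ((bad_min ⟨d₁, hd₁⟩ hmin).trans hBb)), ?_⟩
      have hmm : f (d * b₁) = f b * f d₁ := by rw [← map_mul, hd₁]
      rw [map_add, add_mul]
      congr 1
      · rw [map_mul, hmm, frac_cancel (hfne hd₁0)]
      · rw [map_mul, map_mul, frac_cancel (hfne hb₁)]
    mul_mem' := by
      rintro x y ⟨a, b, hb, hBb, rfl⟩ ⟨c, d, hd, hBd, rfl⟩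
      by_cases hc : c = 0
      · refine ⟨0, 1, one_ne_zero, by rw [bad_one]; exact Set.empty_subset _, ?_⟩
        simp [hc]
      obtain ⟨b₀, c₀, hb₀, hcb₀⟩ := ore f hinj hfrac b c hb
      obtain ⟨b₁, hb₁, ⟨c₁, hc₁⟩, hmin⟩ := exists_min_dvd b c ⟨b₀, hb₀, c₀, hcb₀⟩
      refine ⟨a * c₁, d * b₁, mul_ne_zero hd hb₁,
        (bad_mul hd).trans (Set.union_subset hBd ((bad_min ⟨c₁, hc₁⟩ hmin).trans hBb)), ?_⟩
      have hfb := hfne hb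
      have hfd := hfne hd
      have hfb₁ := hfne hb₁
      have hkey : (f b)⁻¹ * f c = f c₁ * (f b₁)⁻¹ := by
        have h1 : f c * f b₁ = f b * f c₁ := by rw [← map_mul, ← map_mul, hc₁]
        rw [eq_mul_inv_iff_mul_eq₀ hfb₁]
        rw [mul_assoc ((f b)⁻¹), h1, ← mul_assoc, inv_mul_cancel₀ hfb, one_mul]
      symm
      calc f (a * c₁) * (f (d * b₁))⁻¹
          = f a * f c₁ * ((f b₁)⁻¹ * (f d)⁻¹) := by rw [map_mul, map_mul, mul_inv_rev]
        _ = f a * (f c₁ * (f b₁)⁻¹) * (f d)⁻¹ := by simp only [mul_assoc]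
        _ = f a * ((f b)⁻¹ * f c) * (f d)⁻¹ := by rw [hkey]
        _ = f a * (f b)⁻¹ * (f c * (f d)⁻¹) := by simp only [mul_assoc] }
  -- the closure is contained in T
  have hsub : Subring.closure
      ((Set.range fun c : Subring.center D => f (Polynomial.C (c : D))) ∪ F) ≤ T := by
    rw [Subring.closure_le]
    apply Set.union_subset
    · rintro x ⟨c, rfl⟩
      exact ⟨Polynomial.C (c : D), 1, one_ne_zero, by rw [bad_one]; exact Set.empty_subset _,
        by rw [map_one, inv_one, mul_one]⟩
    · intro u hu
      exact ⟨num u, den u, hden u, fun q hq => Set.mem_biUnion hu hq, hrep u⟩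
  have htop : ∀ x : E, x ∈ T := by
    intro x
    exact hsub (hclose ▸ Subring.mem_top x)
  -- choose a monic irreducible central polynomial avoiding S
  obtain ⟨p, hpmon, hpirr, hpnot⟩ := exists_good_irred _ S hSfin hSmon
  have hμp : μ (D := D) p ≠ 0 := by
    intro h0
    exact hpmon.ne_zero (μ_injective (by rw [h0]; exact (Polynomial.map_zero _).symm))
  have hfμ : f (μ p) ≠ 0 := hfne hμp
  obtain ⟨a, b, hb, hBb, hx⟩ := htop (f (μ p))⁻¹
  have h1 : (f (μ p))⁻¹ * f b = f a := by
    rw [hx, mul_assoc, inv_mul_cancel₀ (hfne hb), mul_one]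
  have hba : b = μ p * a := by
    apply hinj
    rw [map_mul, ← h1, ← mul_assoc, mul_inv_cancel₀ hfμ, one_mul]
  have ha0 : a ≠ 0 := by
    rintro rfl
    rw [mul_zero] at hba
    exact hb hba
  have hdegp : 0 < (μ (D := D) p).natDegree := by
    have h2 : p.natDegree ≠ 0 := by
      intro h0
      exact hpirr.not_isUnit ((eq_one_of_monic_natDegree_zero hpmon h0) ▸ isUnit_one)
    have h3 : (μ (D := D) p).natDegree = p.natDegree := μ_natDegree p
    omega
  have hpBad : p ∈ Bad b := by
    refine ⟨hpmon, hpirr, a, ?_, ?_⟩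
    · rintro ⟨u, hu⟩
      have hu0 : u ≠ 0 := by
        rintro rfl
        rw [mul_zero] at hu
        exact ha0 hu
      have hdegb : b.natDegree = (μ (D := D) p).natDegree + a.natDegree := by
        rw [hba, natDegree_mul hμp ha0]
      have hdega : a.natDegree = b.natDegree + u.natDegree := by
        rw [hu, natDegree_mul hb hu0]
      omega
    · refine ⟨1, ?_⟩
      rw [mul_one, hba]
      exact ((μ_commute p a).eq).symm
  exact hpnot (hBb hpBad)
end

section
/- Let p be a prime, K an algebraic closure of the field 𝔽_p with p elements, and τ : K → K the Frobenius automorphism a ↦ a^p. Let T be a ring containing K as a subring together with an invertible element y ∈ T such that y·a = a^p·y for all a ∈ K and such that the powers yⁿ for n ∈ ℤ form a basis of T as a left K-vector space (a skew-Laurent ring K[y^{±1}; τ]); T is a left and right noetherian domain. Let (E, f) be a ring of fractions of T. Then E is not a finitely generated ring: there is no finite subset F of E such that the smallest subring of E containing F equals E. -/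
set_option linter.unusedSectionVars false

section Frob
variable (p : ℕ) [Fact p.Prime] (K : Type*) [Field K] [Algebra (ZMod p) K] [IsAlgClosure (ZMod p) K]

noncomputable def frobZ (m : ℤ) : K ≃+* K :=
  haveI : CharP K p := charP_of_injective_algebraMap (algebraMap (ZMod p) K).injective p
  haveI : IsAlgClosed K := IsAlgClosure.isAlgClosed (ZMod p)
  (frobeniusEquiv K p) ^ m

lemma frobZ_zero (a : K) : frobZ p K 0 a = a := by rw [frobZ]; rfl

lemma frobZ_succ (m : ℤ) (a : K) : frobZ p K (m + 1) a = frobZ p K m (a ^ p) := by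
  haveI : CharP K p := charP_of_injective_algebraMap (algebraMap (ZMod p) K).injective p
  haveI : IsAlgClosed K := IsAlgClosure.isAlgClosed (ZMod p)
  rw [frobZ, frobZ, zpow_add_one]
  change (frobeniusEquiv K p ^ m) ((frobeniusEquiv K p) a) = _
  rw [frobeniusEquiv_apply]; rfl

lemma frobZ_pred (m : ℤ) (a : K) : frobZ p K (m - 1) (a ^ p) = frobZ p K m a := by
  haveI : CharP K p := charP_of_injective_algebraMap (algebraMap (ZMod p) K).injective p
  haveI : IsAlgClosed K := IsAlgClosure.isAlgClosed (ZMod p)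
  rw [frobZ, frobZ, zpow_sub_one]
  change (frobeniusEquiv K p ^ m) ((frobeniusEquiv K p)⁻¹ (a ^ p)) = _
  congr 1
  have h : a ^ p = (frobeniusEquiv K p) a := (frobeniusEquiv_apply K p a).symm
  rw [h]
  exact (frobeniusEquiv K p).symm_apply_apply a

lemma pow_p_injective : Function.Injective (fun a : K => a ^ p) := by
  haveI : CharP K p := charP_of_injective_algebraMap (algebraMap (ZMod p) K).injective p
  exact frobenius_inj K p

noncomputable def mulAux (c d : ℤ →₀ K) : ℤ →₀ K :=
  c.sum fun m a => d.sum fun n b => Finsupp.single (m + n) (a * frobZ p K m b)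

end Frob

section Skew
variable {p : ℕ} [Fact p.Prime] {K : Type*} [Field K] [Algebra (ZMod p) K] [IsAlgClosure (ZMod p) K]
variable {T : Type*} [Ring T]

noncomputable def Bhom (ι : K →+* T) (y : Tˣ) : (ℤ →₀ K) →+ T where
  toFun := fun c => c.sum fun n a => ι a * ((y ^ n : Tˣ) : T)
  map_zero' := by simp
  map_add' := fun c d => by
    classical
    apply Finsupp.sum_add_index
    · intro a _; simp
    · intro a _ b₁ b₂; rw [map_add, add_mul]

variable (ι : K →+* T) (y : Tˣ)

lemma Bhom_single (j : ℤ) (z : K) : Bhom ι y (Finsupp.single j z) = ι z * ((y ^ j : Tˣ) : T) := by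
  rw [Bhom]
  change (Finsupp.single j z).sum (fun n a => ι a * ((y ^ n : Tˣ) : T)) = _
  rw [Finsupp.sum_single_index (by rw [map_zero, zero_mul])]

lemma conjZ (hrel : ∀ a : K, (y : T) * ι a = ι (a ^ p) * (y : T)) (m : ℤ) (a : K) :
    ((y ^ m : Tˣ) : T) * ι a = ι (frobZ p K m a) * ((y ^ m : Tˣ) : T) := by
  have hinvrel : ∀ b : K, ((y⁻¹ : Tˣ) : T) * ι (b ^ p) = ι b * ((y⁻¹ : Tˣ) : T) := by
    intro b
    have h1 : ι (b ^ p) * (y : T) = (y : T) * ι b := (hrel b).symm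
    calc ((y⁻¹ : Tˣ) : T) * ι (b ^ p)
        = ((y⁻¹ : Tˣ) : T) * (ι (b ^ p) * (y : T)) * ((y⁻¹ : Tˣ) : T) := by
          rw [mul_assoc, mul_assoc, Units.mul_inv, mul_one]
      _ = (((y⁻¹ : Tˣ) : T) * (y : T)) * ι b * ((y⁻¹ : Tˣ) : T) := by
          rw [h1]; noncomm_ring
      _ = ι b * ((y⁻¹ : Tˣ) : T) := by rw [Units.inv_mul, one_mul]
  induction m using Int.induction_on generalizing a with
  | zero => simp [frobZ_zero]
  | succ n ih =>
      have hy : (y ^ ((n : ℤ) + 1) : Tˣ) = (y ^ (n : ℤ) : Tˣ) * y := by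
        rw [zpow_add_one]
      rw [hy, Units.val_mul, mul_assoc, hrel a, ← mul_assoc, ih (a ^ p), frobZ_succ,
        mul_assoc]
  | pred n ih =>
      have hy : (y ^ (-(n : ℤ) - 1) : Tˣ) = (y ^ (-(n : ℤ)) : Tˣ) * y⁻¹ := by
        rw [zpow_sub_one]
      obtain ⟨b, hb⟩ : ∃ b : K, b ^ p = a := by
        haveI : IsAlgClosed K := IsAlgClosure.isAlgClosed (ZMod p)
        obtain ⟨b, hb⟩ := IsAlgClosed.exists_pow_nat_eq a (n := p) (Fact.out : p.Prime).pos
        exact ⟨b, hb⟩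
      have key : ((y⁻¹ : Tˣ) : T) * ι a = ι b * ((y⁻¹ : Tˣ) : T) := by
        rw [← hb]; exact hinvrel b
      rw [hy, Units.val_mul, mul_assoc, key, ← mul_assoc, ih b, ← hb, frobZ_pred,
        mul_assoc]

lemma Bhom_mul (hrel : ∀ a : K, (y : T) * ι a = ι (a ^ p) * (y : T)) (c d : ℤ →₀ K) :
    Bhom ι y c * Bhom ι y d = Bhom ι y (mulAux p K c d) := by
  classical
  have lhs : Bhom ι y c * Bhom ι y d
      = c.sum fun m a => d.sum fun n b => ι (a * frobZ p K m b) * ((y ^ (m + n) : Tˣ) : T) := by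
    rw [Bhom]
    change (c.sum fun n a => ι a * ((y ^ n : Tˣ) : T)) * (d.sum fun n a => ι a * ((y ^ n : Tˣ) : T)) = _
    rw [Finsupp.sum_mul]
    apply Finsupp.sum_congr
    intro m _
    rw [Finsupp.mul_sum]
    apply Finsupp.sum_congr
    intro n _
    calc (ι (c m) * ((y ^ m : Tˣ) : T)) * (ι (d n) * ((y ^ n : Tˣ) : T))
        = ι (c m) * (((y ^ m : Tˣ) : T) * ι (d n)) * ((y ^ n : Tˣ) : T) := by
          rw [mul_assoc, mul_assoc, mul_assoc]
      _ = ι (c m) * (ι (frobZ p K m (d n)) * ((y ^ m : Tˣ) : T)) * ((y ^ n : Tˣ) : T) := by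
          rw [conjZ ι y hrel]
      _ = ι (c m * frobZ p K m (d n)) * ((y ^ (m + n) : Tˣ) : T) := by
          rw [map_mul, zpow_add, Units.val_mul]
          noncomm_ring
  rw [lhs, mulAux]
  rw [map_finsuppSum (Bhom ι y)]
  apply Finsupp.sum_congr
  intro m _
  rw [map_finsuppSum (Bhom ι y)]
  apply Finsupp.sum_congr
  intro n _
  rw [Bhom_single]

lemma mulAux_apply_mem (k : Subring K) (hσ : ∀ (m : ℤ) (x : K), x ∈ k → frobZ p K m x ∈ k)
    {c d : ℤ →₀ K} (hc : ∀ n, c n ∈ k) (hd : ∀ n, d n ∈ k) (j : ℤ) :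
    mulAux p K c d j ∈ k := by
  classical
  rw [mulAux, Finsupp.sum_apply, Finsupp.sum]
  apply Subring.sum_mem
  intro m _
  rw [Finsupp.sum_apply, Finsupp.sum]
  apply Subring.sum_mem
  intro n _
  rw [Finsupp.single_apply]
  split
  · exact k.mul_mem (hc m) (hσ m _ (hd n))
  · exact k.zero_mem

lemma mulAux_apply_eq_zero {c d : ℤ →₀ K} {a₁ b₁ a₂ b₂ : ℤ}
    (hc : ∀ j, c j ≠ 0 → a₁ ≤ j ∧ j ≤ b₁) (hd : ∀ j, d j ≠ 0 → a₂ ≤ j ∧ j ≤ b₂)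
    {j : ℤ} (hj : j < a₁ + a₂ ∨ b₁ + b₂ < j) : mulAux p K c d j = 0 := by
  classical
  rw [mulAux, Finsupp.sum_apply, Finsupp.sum]
  apply Finset.sum_eq_zero
  intro m hm
  rw [Finsupp.sum_apply, Finsupp.sum]
  apply Finset.sum_eq_zero
  intro n hn
  have hm' := hc m (Finsupp.mem_support_iff.mp hm)
  have hn' := hd n (Finsupp.mem_support_iff.mp hn)
  rw [Finsupp.single_apply, if_neg (by omega)]

lemma mulAux_single_zero (α : K) (d : ℤ →₀ K) (j : ℤ) :
    mulAux p K (Finsupp.single 0 α) d j = α * d j := by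
  classical
  rw [mulAux, Finsupp.sum_single_index (by simp)]
  have h1 : (d.sum fun n b => Finsupp.single ((0:ℤ) + n) (α * frobZ p K 0 b)) j
      = d.sum fun n b => if n = j then α * b else 0 := by
    rw [Finsupp.sum_apply]
    apply Finsupp.sum_congr
    intro n _
    rw [frobZ_zero, zero_add, Finsupp.single_apply]
  rw [h1, Finsupp.sum_ite_eq']
  split
  · rfl
  · rw [Finsupp.notMem_support_iff.mp (by assumption), mul_zero]

noncomputable def hatFun (M : ℕ) (c : Fin M → K) : ℤ →₀ K :=
  ∑ i : Fin M, Finsupp.single ((i : ℕ) : ℤ) (c i)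

lemma hatFun_apply_coe {M : ℕ} (c : Fin M → K) (i : Fin M) :
    hatFun M c ((i : ℕ) : ℤ) = c i := by
  classical
  rw [hatFun, Finsupp.finset_sum_apply]
  rw [Finset.sum_eq_single i]
  · rw [Finsupp.single_apply, if_pos rfl]
  · intro j _ hji
    rw [Finsupp.single_apply, if_neg (by simpa [Fin.val_eq_val] using hji)]
  · intro h; exact absurd (Finset.mem_univ i) h

lemma hatFun_apply_mem {M : ℕ} (c : Fin M → K) (k : Subring K)
    (hc : ∀ i, c i ∈ k) (j : ℤ) : hatFun M c j ∈ k := by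
  classical
  rw [hatFun, Finsupp.finset_sum_apply]
  apply Subring.sum_mem
  intro i _
  rw [Finsupp.single_apply]
  split
  · exact hc i
  · exact k.zero_mem

lemma hatFun_bound {M : ℕ} (c : Fin M → K) (j : ℤ) (hj : hatFun M c j ≠ 0) :
    0 ≤ j ∧ j ≤ (M : ℤ) - 1 := by
  classical
  by_contra h
  apply hj
  rw [hatFun, Finsupp.finset_sum_apply]
  apply Finset.sum_eq_zero
  intro i _
  have : (i : ℕ) < M := i.isLt
  rw [Finsupp.single_apply, if_neg (by omega)]

lemma hatFun_inj {M : ℕ} {c c' : Fin M → K} (h : hatFun M c = hatFun M c') : c = c' := by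
  funext i
  rw [← hatFun_apply_coe c i, ← hatFun_apply_coe c' i, h]

end Skew

/-- Let `K` be an algebraic closure of `𝔽_p`, `τ : a ↦ a^p` the Frobenius,
and `T = K[y^{±1}; τ]` a skew-Laurent ring.  If `(E, f)` is a ring of fractions of `T`,
then `E` is not a finitely generated ring. -/
theorem stmt_3 (p : ℕ) (hp : p.Prime) [Fact p.Prime]
    (K : Type*) [Field K] [Algebra (ZMod p) K] [IsAlgClosure (ZMod p) K]
    -- `T = K[y^{±1}; τ]` where `τ` is the Frobenius `a ↦ a^p`:
    (T : Type*) [Ring T] (ι : K →+* T) (hι : Function.Injective ι) (y : Tˣ)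
    (hrel : ∀ a : K, (y : T) * ι a = ι (a ^ p) * (y : T))
    (hbasis : Function.Bijective fun c : ℤ →₀ K =>
      c.sum fun n a => ι a * ((y ^ n : Tˣ) : T))
    -- a ring of fractions `(E, f)` of `T`:
    (E : Type*) [DivisionRing E] (f : T →+* E)
    (hinj : Function.Injective f)
    (hfrac : ∀ x : E, ∃ a b : T, b ≠ 0 ∧ x = f a * (f b)⁻¹) :
    -- conclusion: `E` is not a finitely generated ring
    ¬ ∃ F : Set E, F.Finite ∧ Subring.closure F = ⊤ := by
  classical
  rintro ⟨F, hFfin, hFtop⟩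
  have hbij : Function.Bijective (Bhom ι y) := hbasis
  set e : (ℤ →₀ K) ≃ T := Equiv.ofBijective _ hbij with he
  set coords : T → (ℤ →₀ K) := ⇑e.symm with hcoords
  have hBe : ∀ c, coords (Bhom ι y c) = c := fun c => e.symm_apply_apply c
  have heB : ∀ t, Bhom ι y (coords t) = t := fun t => e.apply_symm_apply t
  have hcoords_inj : Function.Injective coords := e.symm.injective
  have coords_sub : ∀ s t : T, coords (s - t) = coords s - coords t := by
    intro s t
    apply hbij.injective
    rw [heB, map_sub, heB, heB]
  have coords_zero : coords (0 : T) = 0 := by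
    apply hbij.injective; rw [heB, map_zero]
  have coords_one : coords (1 : T) = Finsupp.single 0 1 := by
    apply hbij.injective
    rw [heB, Bhom_single, map_one, zpow_zero, Units.val_one, mul_one]
  have coords_neg : ∀ t : T, coords (-t) = -coords t := by
    intro t; apply hbij.injective; rw [heB, map_neg, heB]
  have coords_add : ∀ s t : T, coords (s + t) = coords s + coords t := by
    intro s t; apply hbij.injective; rw [heB, map_add, heB, heB]
  have coords_mul : ∀ s t : T, coords (s * t) = mulAux p K (coords s) (coords t) := by
    intro s t
    apply hbij.injective
    rw [heB, ← Bhom_mul ι y hrel, heB, heB]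
  -- `T` is a domain
  have hfz : ∀ {t : T}, t ≠ 0 → f t ≠ 0 := by
    intro t ht hft
    exact ht (hinj (by rw [hft, map_zero]))
  have hone : (1 : T) ≠ 0 := by
    intro h
    exact one_ne_zero (α := E) (by rw [← map_one f, h, map_zero])
  have hdom : ∀ a b : T, a ≠ 0 → b ≠ 0 → a * b ≠ 0 := by
    intro a b ha hb hab
    have : f a * f b = 0 := by rw [← map_mul, hab, map_zero]
    rcases mul_eq_zero.mp this with h | h
    exacts [hfz ha h, hfz hb h]
  -- choose numerators and denominators
  choose av bv hbv hxv using hfrac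
  -- the finite coefficient subring `k`
  set Fs : Finset E := hFfin.toFinset with hFs
  set C : Finset K := Fs.biUnion (fun x => (coords (av x)).frange ∪ (coords (bv x)).frange)
    with hC
  set k : Subring K := Subring.closure (C : Set K) with hk
  have hCk : ∀ z ∈ C, z ∈ k := fun z hz => Subring.subset_closure hz
  have hkfin : (k : Set K).Finite := by
    have halg : Algebra.IsAlgebraic (ZMod p) K := IsAlgClosure.isAlgebraic
    have hfg := fg_adjoin_of_finite (R := ZMod p) (C : Set K).toFinite
      (fun x _ => (Algebra.IsAlgebraic.isAlgebraic (R := ZMod p) x).isIntegral)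
    have hmf : Module.Finite (ZMod p)
        (Subalgebra.toSubmodule (Algebra.adjoin (ZMod p) (C : Set K))) :=
      Module.Finite.iff_fg.mpr hfg
    have h2 : Finite (Subalgebra.toSubmodule (Algebra.adjoin (ZMod p) (C : Set K))) :=
      Module.finite_of_finite (ZMod p)
    have hsub : (k : Set K) ⊆ (Algebra.adjoin (ZMod p) (C : Set K) : Set K) := by
      have : k ≤ (Algebra.adjoin (ZMod p) (C : Set K)).toSubring :=
        Subring.closure_le.mpr (fun z hz => Algebra.subset_adjoin hz)
      exact this
    exact (Set.finite_coe_iff.mp h2).subset hsub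
  haveI hkfinite : Finite ↥k := hkfin.to_subtype
  -- `k` is closed under all powers of Frobenius
  have hproot : ∀ x ∈ k, ∃ b ∈ k, b ^ p = x := by
    intro x hx
    have hinjk : Function.Injective (fun z : ↥k => (⟨(z : K) ^ p, k.pow_mem z.2 p⟩ : ↥k)) := by
      intro z w hzw
      exact Subtype.ext (pow_p_injective p K (congrArg Subtype.val hzw))
    obtain ⟨b, hb⟩ := Finite.injective_iff_surjective.mp hinjk ⟨x, hx⟩
    exact ⟨(b : K), b.2, congrArg Subtype.val hb⟩
  have hσk : ∀ (m : ℤ) (x : K), x ∈ k → frobZ p K m x ∈ k := by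
    intro m
    induction m using Int.induction_on with
    | zero => intro x hx; rwa [frobZ_zero]
    | succ n ih =>
        intro x hx
        rw [frobZ_succ]
        exact ih _ (k.pow_mem hx p)
    | pred n ih =>
        intro x hx
        obtain ⟨b, hbk, hbp⟩ := hproot x hx
        have : (-(n : ℤ) - 1) = (-(n : ℤ)) - 1 := rfl
        rw [← hbp, frobZ_pred]
        exact ih _ hbk
  -- `k` is closed under inverses
  have hkinv : ∀ x ∈ k, x ≠ 0 → ∃ z ∈ k, x * z = 1 := by
    intro x hx hxne
    have hinjk : Function.Injective (fun z : ↥k => (⟨x * (z : K), k.mul_mem hx z.2⟩ : ↥k)) := by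
      intro z w hzw
      exact Subtype.ext (mul_left_cancel₀ hxne (congrArg Subtype.val hzw))
    obtain ⟨z, hz⟩ := Finite.injective_iff_surjective.mp hinjk ⟨1, k.one_mem⟩
    exact ⟨(z : K), z.2, congrArg Subtype.val hz⟩
  -- the predicate "all coordinates in k"
  set Pk : T → Prop := fun t => ∀ n, coords t n ∈ k with hPk
  have hPk_mul : ∀ s t : T, Pk s → Pk t → Pk (s * t) := by
    intro s t hs ht n
    rw [coords_mul]
    exact mulAux_apply_mem k hσk hs ht n
  have hPk_add : ∀ s t : T, Pk s → Pk t → Pk (s + t) := by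
    intro s t hs ht n
    rw [coords_add, Finsupp.add_apply]
    exact k.add_mem (hs n) (ht n)
  have hPk_neg : ∀ t : T, Pk t → Pk (-t) := by
    intro t ht n
    rw [coords_neg, Finsupp.neg_apply]
    exact k.neg_mem (ht n)
  have hPk_zero : Pk 0 := by
    intro n; rw [coords_zero]; exact k.zero_mem
  have hPk_one : Pk 1 := by
    intro n
    rw [coords_one, Finsupp.single_apply]
    split
    exacts [k.one_mem, k.zero_mem]
  have hPk_F : ∀ x ∈ F, Pk (av x) ∧ Pk (bv x) := by
    intro x hx
    have hxFs : x ∈ Fs := hFfin.mem_toFinset.mpr hx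
    constructor <;> intro n
    · by_cases h : coords (av x) n = 0
      · rw [h]; exact k.zero_mem
      · refine hCk _ (Finset.mem_biUnion.mpr ⟨x, hxFs, Finset.mem_union_left _ ?_⟩)
        exact Finsupp.mem_frange.mpr ⟨h, n, rfl⟩
    · by_cases h : coords (bv x) n = 0
      · rw [h]; exact k.zero_mem
      · refine hCk _ (Finset.mem_biUnion.mpr ⟨x, hxFs, Finset.mem_union_right _ ?_⟩)
        exact Finsupp.mem_frange.mpr ⟨h, n, rfl⟩
  -- THE ORE CONDITION
  have ore : ∀ u v : T, Pk u → Pk v → v ≠ 0 →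
      ∃ s t : T, Pk s ∧ Pk t ∧ t ≠ 0 ∧ u * t = v * s := by
    intro u v hu hv hvne
    set N : ℕ := ((coords u).support ∪ (coords v).support).sup Int.natAbs with hN
    have hUb : ∀ j : ℤ, coords u j ≠ 0 → -(N : ℤ) ≤ j ∧ j ≤ (N : ℤ) := by
      intro j hj
      have h1 : j.natAbs ≤ N := Finset.le_sup (f := Int.natAbs)
        (Finset.mem_union_left _ (Finsupp.mem_support_iff.mpr hj))
      omega
    have hVb : ∀ j : ℤ, coords v j ≠ 0 → -(N : ℤ) ≤ j ∧ j ≤ (N : ℤ) := by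
      intro j hj
      have h1 : j.natAbs ≤ N := Finset.le_sup (f := Int.natAbs)
        (Finset.mem_union_right _ (Finsupp.mem_support_iff.mpr hj))
      omega
    set M : ℕ := 2 * N + 1 with hM
    haveI : Fintype ↥k := hkfin.fintype
    set hat : (Fin M → ↥k) → (ℤ →₀ K) := fun c => hatFun M (fun i => ((c i : K))) with hhat
    have hat_mem : ∀ (c : Fin M → ↥k) (j : ℤ), hat c j ∈ k :=
      fun c j => hatFun_apply_mem _ k (fun i => (c i).2) j
    have hat_bd : ∀ (c : Fin M → ↥k) (j : ℤ), hat c j ≠ 0 → 0 ≤ j ∧ j ≤ (M : ℤ) - 1 :=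
      fun c j h => hatFun_bound _ j h
    have hΦmem : ∀ (c d : Fin M → ↥k) (j : ℤ),
        coords (u * Bhom ι y (hat c) - v * Bhom ι y (hat d)) j ∈ k := by
      intro c d j
      rw [coords_sub, Finsupp.sub_apply, coords_mul, coords_mul, hBe, hBe]
      exact k.sub_mem (mulAux_apply_mem k hσk hu (hat_mem c) j)
        (mulAux_apply_mem k hσk hv (hat_mem d) j)
    set Φ : ((Fin M → ↥k) × (Fin M → ↥k)) → (↥(Finset.Icc (-(N : ℤ)) (3 * N)) → ↥k) :=
      fun cd j =>
        ⟨coords (u * Bhom ι y (hat cd.1) - v * Bhom ι y (hat cd.2)) (j : ℤ), hΦmem _ _ _⟩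
      with hΦ
    have hcard : Fintype.card (↥(Finset.Icc (-(N : ℤ)) (3 * N)) → ↥k)
        < Fintype.card ((Fin M → ↥k) × (Fin M → ↥k)) := by
      haveI : Nontrivial ↥k :=
        ⟨⟨0, 1, fun h01 => zero_ne_one (α := K) (congrArg Subtype.val h01)⟩⟩
      have hq : 1 < Fintype.card ↥k := Fintype.one_lt_card
      rw [Fintype.card_fun, Fintype.card_prod, Fintype.card_fun,
        Fintype.card_coe, Int.card_Icc, Fintype.card_fin]
      have h1 : (3 * (N : ℤ) + 1 - -(N : ℤ)).toNat = 4 * N + 1 := by omega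
      rw [h1, ← pow_add]
      exact Nat.pow_lt_pow_right hq (by omega)
    obtain ⟨cd, cd', hne, heq⟩ := Fintype.exists_ne_map_eq_of_card_lt Φ hcard
    obtain ⟨c, d⟩ := cd
    obtain ⟨c', d'⟩ := cd'
    have hw : u * Bhom ι y (hat c) - v * Bhom ι y (hat d)
        = u * Bhom ι y (hat c') - v * Bhom ι y (hat d') := by
      apply hcoords_inj
      ext j
      by_cases hjmem : j ∈ Finset.Icc (-(N : ℤ)) (3 * N)
      · have h2 := congrFun heq ⟨j, hjmem⟩
        exact Subtype.ext_iff.mp h2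
      · have hj' : j < -(N : ℤ) ∨ 3 * (N : ℤ) < j := by
          rw [Finset.mem_Icc] at hjmem
          omega
        have key : ∀ cc dd : Fin M → ↥k,
            coords (u * Bhom ι y (hat cc) - v * Bhom ι y (hat dd)) j = 0 := by
          intro cc dd
          rw [coords_sub, Finsupp.sub_apply, coords_mul, coords_mul, hBe, hBe]
          rw [mulAux_apply_eq_zero hUb (hat_bd cc) (by omega),
            mulAux_apply_eq_zero hVb (hat_bd dd) (by omega), sub_zero]
        rw [key c d, key c' d']
    set s : T := Bhom ι y (hat d) - Bhom ι y (hat d') with hs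
    set t : T := Bhom ι y (hat c) - Bhom ι y (hat c') with ht
    have hmain : u * t = v * s := by
      rw [ht, hs, mul_sub, mul_sub, sub_eq_sub_iff_add_eq_add]
      rw [sub_eq_sub_iff_add_eq_add] at hw
      rw [hw, add_comm]
    have hPkt : Pk t := by
      intro n
      rw [ht, coords_sub, Finsupp.sub_apply, hBe, hBe]
      exact k.sub_mem (hat_mem c n) (hat_mem c' n)
    have hPks : Pk s := by
      intro n
      rw [hs, coords_sub, Finsupp.sub_apply, hBe, hBe]
      exact k.sub_mem (hat_mem d n) (hat_mem d' n)
    have htne : t ≠ 0 := by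
      intro h0
      have hcc : c = c' := by
        have h2 : Bhom ι y (hat c) = Bhom ι y (hat c') := by
          rw [ht, sub_eq_zero] at h0
          exact h0
        have h3 := hatFun_inj (hbij.injective h2)
        funext i
        exact Subtype.ext (congrFun h3 i)
      have hdd : d ≠ d' := by
        intro hdd
        exact hne (by rw [hcc, hdd])
      have hs0 : s = 0 := by
        by_contra hsne
        exact hdom v s hvne hsne (by rw [← hmain, h0, mul_zero])
      have h2 : Bhom ι y (hat d) = Bhom ι y (hat d') := by
        rw [hs, sub_eq_zero] at hs0
        exact hs0
      exact hdd (funext fun i => Subtype.ext (congrFun (hatFun_inj (hbij.injective h2)) i))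
    exact ⟨s, t, hPks, hPkt, htne, hmain⟩
  -- the set of fractions over k
  set S : E → Prop := fun x => ∃ u v : T, Pk u ∧ Pk v ∧ v ≠ 0 ∧ x = f u * (f v)⁻¹ with hS
  have hSall : ∀ x : E, S x := by
    have hmem : ∀ x : E, x ∈ Subring.closure F → S x := by
      intro x hx
      refine Subring.closure_induction ?_ ?_ ?_ ?_ ?_ ?_ hx
      · intro z hz
        exact ⟨av z, bv z, (hPk_F z hz).1, (hPk_F z hz).2, hbv z, hxv z⟩
      · exact ⟨0, 1, hPk_zero, hPk_one, hone, by rw [map_zero, zero_mul]⟩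
      · exact ⟨1, 1, hPk_one, hPk_one, hone, by rw [map_one, inv_one, mul_one]⟩
      · -- addition
        rintro x' y' _ _ ⟨a, b, hpa, hpb, hbne, hxeq⟩ ⟨c, d, hpc, hpd, hdne, hyeq⟩
        obtain ⟨s, t, hps, hpt, htne, hbt⟩ := ore b d hpb hpd hdne
        have hwne : b * t ≠ 0 := hdom b t hbne htne
        have hsne : s ≠ 0 := by
          intro h0
          exact hwne (by rw [hbt, h0, mul_zero])
        have hbinv : (f b)⁻¹ = f t * (f (b * t))⁻¹ := by
          rw [map_mul, mul_inv_rev, ← mul_assoc, mul_inv_cancel₀ (hfz htne), one_mul]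
        have hdinv : (f d)⁻¹ = f s * (f (b * t))⁻¹ := by
          rw [hbt, map_mul, mul_inv_rev, ← mul_assoc, mul_inv_cancel₀ (hfz hsne), one_mul]
        refine ⟨a * t + c * s, b * t, hPk_add _ _ (hPk_mul _ _ hpa hpt) (hPk_mul _ _ hpc hps),
          hPk_mul _ _ hpb hpt, hwne, ?_⟩
        rw [hxeq, hyeq]
        calc f a * (f b)⁻¹ + f c * (f d)⁻¹
            = f a * (f t * (f (b * t))⁻¹) + f c * (f s * (f (b * t))⁻¹) := by
              rw [hbinv, hdinv]
          _ = (f a * f t) * (f (b * t))⁻¹ + (f c * f s) * (f (b * t))⁻¹ := by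
              rw [mul_assoc, mul_assoc]
          _ = (f (a * t) + f (c * s)) * (f (b * t))⁻¹ := by
              rw [map_mul f a t, map_mul f c s, add_mul]
          _ = f (a * t + c * s) * (f (b * t))⁻¹ := by rw [map_add]
      · -- negation
        rintro x' _ ⟨a, b, hpa, hpb, hbne, hxeq⟩
        exact ⟨-a, b, hPk_neg _ hpa, hpb, hbne, by rw [hxeq, map_neg, neg_mul]⟩
      · -- multiplication
        rintro x' y' _ _ ⟨a, b, hpa, hpb, hbne, hxeq⟩ ⟨c, d, hpc, hpd, hdne, hyeq⟩
        obtain ⟨s, t, hps, hpt, htne, hct⟩ := ore c b hpc hpb hbne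
        have key : (f b)⁻¹ * f c = f s * (f t)⁻¹ := by
          have h1 : f c * f t = f b * f s := by rw [← map_mul, hct, map_mul]
          have h3 : f c = f b * (f s * (f t)⁻¹) := by
            rw [← mul_assoc, ← h1, mul_assoc, mul_inv_cancel₀ (hfz htne), mul_one]
          rw [h3, ← mul_assoc, inv_mul_cancel₀ (hfz hbne), one_mul]
        refine ⟨a * s, d * t, hPk_mul _ _ hpa hps, hPk_mul _ _ hpd hpt,
          hdom d t hdne htne, ?_⟩
        rw [hxeq, hyeq, map_mul (f := f) a s, map_mul (f := f) d t, mul_inv_rev]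
        calc f a * (f b)⁻¹ * (f c * (f d)⁻¹)
            = f a * ((f b)⁻¹ * f c) * (f d)⁻¹ := by noncomm_ring
          _ = f a * (f s * (f t)⁻¹) * (f d)⁻¹ := by rw [key]
          _ = f a * f s * ((f t)⁻¹ * (f d)⁻¹) := by noncomm_ring
    intro x
    exact hmem x (by rw [hFtop]; exact Subring.mem_top x)
  -- final contradiction
  obtain ⟨α, hαk⟩ : ∃ α : K, α ∉ k := by
    haveI : IsAlgClosed K := IsAlgClosure.isAlgClosed (ZMod p)
    obtain ⟨α, hα⟩ := (hkfin.infinite_compl).nonempty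
    exact ⟨α, hα⟩
  obtain ⟨u, v, hu, hv, hvne, hx⟩ := hSall (f (ι α))
  have h2 : ι α * v = u := by
    apply hinj
    rw [map_mul, hx, mul_assoc, inv_mul_cancel₀ (hfz hvne), mul_one]
  obtain ⟨j, hj⟩ : ∃ j, coords v j ≠ 0 := by
    by_contra h
    push_neg at h
    apply hvne
    have hcv : coords v = 0 := Finsupp.ext h
    rw [← heB v, hcv, map_zero]
  have hιαv : coords (ι α * v) j = α * coords v j := by
    have hια : ι α = Bhom ι y (Finsupp.single 0 α) := by
      rw [Bhom_single, zpow_zero, Units.val_one, mul_one]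
    rw [hια, ← heB v, Bhom_mul ι y hrel, hBe, hBe, mulAux_single_zero]
  have h3 : α * coords v j ∈ k := by
    rw [← hιαv, h2]
    exact hu j
  obtain ⟨z, hzk, hz1⟩ := hkinv _ (hv j) hj
  apply hαk
  have := k.mul_mem h3 hzk
  rwa [mul_assoc, hz1, mul_one] at this
end

section
/- Let D be a division ring and K its center. Assume D is finitely generated as a K-algebra and is matrix-algebraic over K, meaning that for every n ≥ 1 every element of the matrix ring Mₙ(D) is algebraic over K. Let D[z] denote the ordinary polynomial ring over D (with z a central indeterminate), and let (E, f) be a ring of fractions of D[z]. Then E is finitely generated as an algebra over its center: there is a finite subset F of E such that the smallest subring of E containing the center Z(E) and F equals E. Moreover Z(E) = { f(a)·f(b)⁻¹ : a, b ∈ K[z], b ≠ 0 }, where K[z] denotes the polynomials with coefficients in K. -/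
open Polynomial
theorem divRight {D : Type*} [DivisionRing D] (b : D[X]) (hb : b ≠ 0) (p : D[X]) :
    ∃ s r : D[X], p = s * b + r ∧ r.degree < b.degree := by
  generalize hk : p.natDegree = k
  induction k using Nat.strong_induction_on generalizing p with
  | _ k ih =>
    by_cases hlt : p.degree < b.degree
    · exact ⟨0, p, by simp, hlt⟩
    · push_neg at hlt
      have hp : p ≠ 0 := by
        intro h; rw [h, degree_zero] at hlt
        exact (not_le.2 (bot_lt_iff_ne_bot.2 (degree_ne_bot.mpr hb))) hlt
      have hnd : b.natDegree ≤ p.natDegree := natDegree_le_natDegree hlt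
      set t : D[X] := monomial (p.natDegree - b.natDegree) (p.leadingCoeff * b.leadingCoeff⁻¹) with ht
      have hlc : t.leadingCoeff * b.leadingCoeff ≠ 0 := by
        rw [ht, leadingCoeff_monomial, mul_assoc,
          inv_mul_cancel₀ (leadingCoeff_ne_zero.mpr hb), mul_one]
        exact leadingCoeff_ne_zero.mpr hp
      have htne : p.leadingCoeff * b.leadingCoeff⁻¹ ≠ 0 := fun h => hlc (by rw [ht, leadingCoeff_monomial, h, zero_mul])
      have hdeg : (t * b).degree = p.degree := by
        rw [degree_mul' hlc, ht, degree_monomial _ htne, degree_eq_natDegree hb,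
          degree_eq_natDegree hp]
        rw [← Nat.cast_add, Nat.sub_add_cancel hnd]
      have hlc2 : (t * b).leadingCoeff = p.leadingCoeff := by
        rw [leadingCoeff_mul' hlc, ht, leadingCoeff_monomial, mul_assoc,
          inv_mul_cancel₀ (leadingCoeff_ne_zero.mpr hb), mul_one]
      have hsub : (p - t * b).degree < p.degree := degree_sub_lt hdeg.symm hp hlc2.symm
      by_cases hz : p - t * b = 0
      · exact ⟨t, 0, by rw [add_zero]; exact (sub_eq_zero.mp hz), by
          rw [degree_zero]; exact bot_lt_iff_ne_bot.2 (degree_ne_bot.mpr hb)⟩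
      · obtain ⟨s, r, heq, hr⟩ := ih (p - t * b).natDegree
          (by rw [← hk]; exact natDegree_lt_natDegree hz hsub) _ rfl
        exact ⟨s + t, r, by rw [add_mul, sub_eq_iff_eq_add.mp heq]; abel, hr⟩

theorem crux {D : Type*} [DivisionRing D]
    (hmatalg : ∀ m : ℕ, 1 ≤ m → ∀ x : Matrix (Fin m) (Fin m) D,
      ∃ c : ℕ →₀ Subring.center D, c ≠ 0 ∧ (c.sum fun i a => (a : D) • x ^ i) = 0)
    (b : D[X]) (hb : b ≠ 0) :
    ∃ s c : D[X], c ≠ 0 ∧ (∀ i, c.coeff i ∈ Subring.center D) ∧ c = s * b := by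
  by_cases hn : b.natDegree = 0
  · obtain ⟨u, hu⟩ : ∃ u : D, b = C u := ⟨b.coeff 0, eq_C_of_natDegree_eq_zero hn⟩
    have hu0 : u ≠ 0 := fun h => hb (by rw [hu, h, C_0])
    refine ⟨C u⁻¹, 1, one_ne_zero, fun i => ?_, ?_⟩
    · rw [Polynomial.coeff_one]
      split_ifs
      · exact Subring.one_mem _
      · exact Subring.zero_mem _
    · rw [hu, ← C_mul, inv_mul_cancel₀ hu0, C_1]
  · set n := b.natDegree with hn'
    have hn1 : 1 ≤ n := Nat.one_le_iff_ne_zero.mpr hn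
    obtain ⟨z0, hz0⟩ : ∃ z : Fin n, (z : ℕ) = 0 := ⟨⟨0, hn1⟩, rfl⟩
    set pv : (Fin n → D) → D[X] := fun v => ∑ i : Fin n, monomial i.1 (v i) with hpv
    have pv_Cmul : ∀ (a : D) (v : Fin n → D), C a * pv v = pv (fun j => a * v j) := by
      intro a v
      rw [hpv]; simp only [Finset.mul_sum, C_mul_monomial]
    have pv_sum : ∀ {ι : Type} (s : Finset ι) (g : ι → Fin n → D),
        pv (fun j => ∑ i ∈ s, g i j) = ∑ i ∈ s, pv (g i) := by
      intro ι s g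
      rw [hpv]; simp only [map_sum]
      rw [Finset.sum_comm]
    have rem_eq : ∀ r : D[X], r.degree < b.degree → r = pv (fun j => r.coeff j.1) := by
      intro r hr
      have hnd : r.natDegree < n := by
        by_cases h0 : r = 0
        · simpa [h0] using Nat.lt_of_lt_of_le Nat.zero_lt_one hn1
        · exact (natDegree_lt_iff_degree_lt h0).mpr (by rwa [degree_eq_natDegree hb] at hr)
      conv_lhs => rw [r.as_sum_range' n hnd]
      rw [hpv]; simp only
      exact (Fin.sum_univ_eq_sum_range (fun i => monomial i (r.coeff i)) n).symm
    choose si ri hdiv hri using fun i : Fin n => divRight b hb (X ^ (i.1 + 1))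
    set Xmat : Matrix (Fin n) (Fin n) D := fun i j => (ri i).coeff j.1 with hXmat
    have key : ∀ v : Fin n → D, ∃ s,
        pv v * X = s * b + pv (fun j => ∑ i : Fin n, v i * Xmat i j) := by
      intro v
      refine ⟨∑ i : Fin n, C (v i) * si i, ?_⟩
      have step : ∀ i : Fin n,
          monomial i.1 (v i) * X = (C (v i) * si i) * b + C (v i) * pv (fun j => Xmat i j) := by
        intro i
        have : pv (fun j => Xmat i j) = ri i := (rem_eq (ri i) (hri i)).symm
        rw [this, ← C_mul_X_pow_eq_monomial, mul_assoc, ← pow_succ, hdiv i, mul_add, mul_assoc]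
      calc pv v * X = ∑ i : Fin n, monomial i.1 (v i) * X := by rw [hpv]; exact Finset.sum_mul ..
        _ = ∑ i : Fin n, ((C (v i) * si i) * b + C (v i) * pv (fun j => Xmat i j)) :=
            Finset.sum_congr rfl fun i _ => step i
        _ = (∑ i : Fin n, C (v i) * si i) * b + ∑ i : Fin n, C (v i) * pv (fun j => Xmat i j) := by
            rw [Finset.sum_add_distrib, Finset.sum_mul]
        _ = (∑ i : Fin n, C (v i) * si i) * b + pv (fun j => ∑ i : Fin n, v i * Xmat i j) := by
            congr 1
            simp only [pv_Cmul]
            exact (pv_sum Finset.univ fun i j => v i * Xmat i j).symm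
    -- powers
    have pow_claim : ∀ k : ℕ, ∃ s, (X : D[X]) ^ k = s * b + pv (fun j => (Xmat ^ k) z0 j) := by
      intro k
      induction k with
      | zero =>
        refine ⟨0, ?_⟩
        rw [pow_zero, pow_zero, zero_mul, zero_add, hpv]
        simp only [Matrix.one_apply]
        rw [Finset.sum_eq_single z0]
        · simp [hz0]
        · intro j _ hj; simp [Ne.symm hj]
        · intro h; exact absurd (Finset.mem_univ _) h
      | succ k ih =>
        obtain ⟨s, hs⟩ := ih
        obtain ⟨s', hs'⟩ := key (fun j => (Xmat ^ k) z0 j)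
        refine ⟨s * X + s', ?_⟩
        have hXb : (s * b) * X = (s * X) * b := by
          rw [mul_assoc, ← X_mul, ← mul_assoc]
        have : (fun j => ∑ i : Fin n, (Xmat ^ k) z0 i * Xmat i j)
            = fun j => (Xmat ^ (k + 1)) z0 j := by
          funext j; rw [pow_succ, Matrix.mul_apply]
        rw [pow_succ, hs, add_mul, hXb, hs', this, add_mul, add_assoc]
    -- apply hmatalg
    obtain ⟨c, hc0, hcsum⟩ := hmatalg n hn1 Xmat
    set cpoly : D[X] := c.sum fun i a => monomial i (a : D) with hcpoly
    have coeff_cpoly : ∀ j, cpoly.coeff j = (c j : D) := by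
      intro j
      rw [hcpoly, Finsupp.sum, finset_sum_coeff]
      simp only [coeff_monomial]
      rw [Finset.sum_ite_eq' c.support j (fun i => ((c i : D)))]
      split_ifs with h
      · rfl
      · rw [Finsupp.notMem_support_iff.mp h]; rfl
    choose sp hsp using pow_claim
    refine ⟨∑ i ∈ c.support, C ((c i : D)) * sp i, cpoly, ?_, ?_, ?_⟩
    · intro h
      apply hc0
      ext i
      have := coeff_cpoly i
      rw [h, coeff_zero] at this
      simpa using this.symm
    · intro i; rw [coeff_cpoly]; exact SetLike.coe_mem _
    · have expand : cpoly = ∑ i ∈ c.support, C ((c i : D)) * X ^ i := by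
        rw [hcpoly, Finsupp.sum]
        exact Finset.sum_congr rfl fun i _ => (C_mul_X_pow_eq_monomial).symm
      have zerov : (fun j => ∑ i ∈ c.support, (c i : D) * (Xmat ^ i) z0 j)
          = fun j : Fin n => (0 : D) := by
        funext j
        have h2 := congrFun (congrFun hcsum z0) j
        rw [Finsupp.sum] at h2
        simpa [Finset.sum_apply, Matrix.sum_apply, Matrix.smul_apply, smul_eq_mul] using h2
      calc cpoly = ∑ i ∈ c.support, C ((c i : D)) * X ^ i := expand
        _ = ∑ i ∈ c.support, (C ((c i : D)) * sp i * b
              + C ((c i : D)) * pv (fun j => (Xmat ^ i) z0 j)) := by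
            refine Finset.sum_congr rfl fun i _ => ?_
            rw [hsp i, mul_add, mul_assoc]
        _ = (∑ i ∈ c.support, C ((c i : D)) * sp i) * b
              + ∑ i ∈ c.support, C ((c i : D)) * pv (fun j => (Xmat ^ i) z0 j) := by
            rw [Finset.sum_add_distrib, Finset.sum_mul]
        _ = (∑ i ∈ c.support, C ((c i : D)) * sp i) * b := by
            simp only [pv_Cmul]
            rw [← pv_sum c.support (fun i j => (c i : D) * (Xmat ^ i) z0 j), zerov]
            have : pv (fun _ : Fin n => (0:D)) = 0 := by
              rw [hpv]; simp
            rw [this, add_zero]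


theorem centralCoeff_comm {D : Type*} [Ring D] {p : D[X]}
    (hp : ∀ i, p.coeff i ∈ Subring.center D) (q : D[X]) : p * q = q * p := by
  induction q using Polynomial.induction_on' with
  | add q r hq hr => rw [mul_add, add_mul, hq, hr]
  | monomial k a =>
    have hC : p * C a = C a * p := by
      ext i
      rw [coeff_mul_C, coeff_C_mul]
      exact ((Subring.mem_center_iff.mp (hp i)) a).symm
    rw [← C_mul_X_pow_eq_monomial, ← mul_assoc, hC, mul_assoc, ← X_pow_mul, ← mul_assoc]




/-- Let `D` be a division ring with center `K`.  If `D` is affine and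
matrix-algebraic over `K`, then any ring of fractions `(E, f)` of `D[z]` is affine over
its center, and the center of `E` is `{ f(a)·f(b)⁻¹ : a, b ∈ K[z], b ≠ 0 }`. -/
theorem stmt_4 (D : Type*) [DivisionRing D]
    -- `D` is affine (finitely generated as an algebra) over its center `K`:
    (haffine : ∃ G : Set D, G.Finite ∧
      Subring.closure ((Subring.center D : Set D) ∪ G) = ⊤)
    -- `D` is matrix-algebraic over `K`: every matrix over `D` is a root of a nonzero
    -- polynomial with coefficients in `K`:
    (hmatalg : ∀ m : ℕ, 1 ≤ m → ∀ x : Matrix (Fin m) (Fin m) D,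
      ∃ c : ℕ →₀ Subring.center D, c ≠ 0 ∧ (c.sum fun i a => (a : D) • x ^ i) = 0)
    -- a ring of fractions `(E, f)` of `D[z]`:
    (E : Type*) [DivisionRing E] (f : Polynomial D →+* E)
    (hinj : Function.Injective f)
    (hfrac : ∀ x : E, ∃ a b : Polynomial D, b ≠ 0 ∧ x = f a * (f b)⁻¹) :
    -- conclusions:
    (∃ F : Set E, F.Finite ∧
      Subring.closure ((Subring.center E : Set E) ∪ F) = ⊤) ∧
    (Subring.center E : Set E) = { x : E | ∃ a b : Polynomial D,
      (∀ i, a.coeff i ∈ Subring.center D) ∧ (∀ i, b.coeff i ∈ Subring.center D) ∧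
      b ≠ 0 ∧ x = f a * (f b)⁻¹ } := by
  have hf0 : ∀ p : D[X], p ≠ 0 → f p ≠ 0 := fun p hp h =>
    hp (hinj (by rw [h, map_zero]))
  -- image of a polynomial with central coefficients is central
  have fcentral : ∀ p : D[X], (∀ i, p.coeff i ∈ Subring.center D) →
      f p ∈ Subring.center E := by
    intro p hp
    rw [Subring.mem_center_iff]
    intro x
    obtain ⟨a, b, hb, rfl⟩ := hfrac x
    have h1 : ∀ q, Commute (f p) (f q) := fun q => by
      unfold Commute SemiconjBy
      rw [← map_mul, ← map_mul, centralCoeff_comm hp q]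
    exact ((h1 a).mul_right ((h1 b).inv_right₀)).symm
  have central_preimage : ∀ p : D[X], f p ∈ Subring.center E →
      ∀ i, p.coeff i ∈ Subring.center D := by
    intro p hp i
    rw [Subring.mem_center_iff]
    intro d
    have h1 : f (C d * p) = f (p * C d) := by
      rw [map_mul, map_mul, Subring.mem_center_iff.mp hp (f (C d))]
    have h2 : C d * p = p * C d := hinj h1
    have := congrArg (fun q => Polynomial.coeff q i) h2
    simpa [coeff_C_mul, coeff_mul_C] using this
  have inv_central : ∀ x : E, x ∈ Subring.center E → x⁻¹ ∈ Subring.center E := by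
    intro x hx
    rw [Subring.mem_center_iff]
    intro g
    exact Commute.inv_right₀ (Subring.mem_center_iff.mp hx g)
  -- inverse of f b in terms of central polynomial
  have hbinv : ∀ b : D[X], b ≠ 0 → ∃ s cc : D[X], cc ≠ 0 ∧
      (∀ i, cc.coeff i ∈ Subring.center D) ∧ (f b)⁻¹ = (f cc)⁻¹ * f s := by
    intro b hb
    obtain ⟨s, cc, hcc0, hccc, hcceq⟩ := crux hmatalg b hb
    refine ⟨s, cc, hcc0, hccc, ?_⟩
    have hs0 : s ≠ 0 := fun h => hcc0 (by rw [hcceq, h, zero_mul])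
    have : f cc = f s * f b := by rw [hcceq, map_mul]
    rw [this, mul_inv_rev, mul_assoc, inv_mul_cancel₀ (hf0 s hs0), mul_one]
  constructor
  · -- affine over center
    obtain ⟨G, hGfin, hGtop⟩ := haffine
    refine ⟨(fun d => f (C d)) '' G, hGfin.image _, ?_⟩
    set S := Subring.closure ((Subring.center E : Set E) ∪ (fun d => f (C d)) '' G) with hS
    rw [eq_top_iff]
    rintro x -
    have hcenS : ∀ y : E, y ∈ Subring.center E → y ∈ S :=
      fun y hy => Subring.subset_closure (Or.inl hy)
    have hC : ∀ d : D, f (C d) ∈ S := by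
      have hle : Subring.closure ((Subring.center D : Set D) ∪ G) ≤
          S.comap (f.comp (C : D →+* D[X])) := by
        rw [Subring.closure_le]
        rintro d (hd | hd)
        · refine Subring.mem_comap.mpr (hcenS _ (fcentral (C d) fun i => ?_))
          rw [coeff_C]
          split_ifs
          · exact hd
          · exact Subring.zero_mem _
        · exact Subring.mem_comap.mpr (Subring.subset_closure (Or.inr ⟨d, hd, rfl⟩))
      intro d
      have := hle (hGtop ▸ Subring.mem_top d)
      exact Subring.mem_comap.mp this
    have hXS : f X ∈ S := by
      refine hcenS _ (fcentral X fun i => ?_)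
      rw [coeff_X]
      split_ifs
      · exact Subring.one_mem _
      · exact Subring.zero_mem _
    have hfp : ∀ p : D[X], f p ∈ S := by
      intro p
      induction p using Polynomial.induction_on' with
      | add p q hp hq => rw [map_add]; exact S.add_mem hp hq
      | monomial k a =>
        rw [← C_mul_X_pow_eq_monomial, map_mul, map_pow]
        exact S.mul_mem (hC a) (S.pow_mem hXS k)
    obtain ⟨a, b, hb, rfl⟩ := hfrac x
    obtain ⟨s, cc, hcc0, hccc, hinveq⟩ := hbinv b hb
    rw [hinveq]
    exact S.mul_mem (hfp a) (S.mul_mem (hcenS _ (inv_central _ (fcentral cc hccc))) (hfp s))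
  · -- the center
    ext x
    simp only [SetLike.mem_coe, Set.mem_setOf_eq]
    constructor
    · intro hx
      obtain ⟨a, b, hb, rfl⟩ := hfrac x
      obtain ⟨s, cc, hcc0, hccc, hinveq⟩ := hbinv b hb
      have hfcc : f cc ∈ Subring.center E := fcentral cc hccc
      have hccne : f cc ≠ 0 := hf0 cc hcc0
      have hxcc : (f a * (f b)⁻¹) * f cc = f (a * s) := by
        have hcomm : f s * f cc = f cc * f s := Subring.mem_center_iff.mp hfcc (f s)
        rw [hinveq, map_mul, mul_assoc, mul_assoc]
        congr 1
        rw [hcomm, ← mul_assoc, inv_mul_cancel₀ hccne, one_mul]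
      have hcent : f (a * s) ∈ Subring.center E := by
        rw [← hxcc]
        exact Subring.mul_mem _ hx hfcc
      refine ⟨a * s, cc, central_preimage _ hcent, hccc, hcc0, ?_⟩
      rw [← hxcc, mul_assoc, mul_inv_cancel₀ hccne, mul_one]
    · rintro ⟨a, b, ha, hbc, hb, rfl⟩
      exact Subring.mul_mem _ (fcentral a ha)
        (inv_central _ (fcentral b hbc))
end

section
/- Let D be a division ring, τ a ring automorphism of D, δ a τ-derivation of D, and S = D[y; τ, δ] a skew polynomial ring. For a, b ∈ D, the quotient right S-modules S/(y−a)S and S/(y−b)S (where (y−c)S denotes the right ideal of S generated by y−c) are isomorphic as right S-modules if and only if there exists a nonzero v ∈ D such that a·v − τ(v)·b = δ(v). -/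
/-- Let `S = D[y; τ, δ]` be a skew polynomial ring over a division ring `D`.
For `a, b ∈ D`, the right `S`-modules `S/(y−a)S` and `S/(y−b)S` are isomorphic if and only
if there is a nonzero `v ∈ D` with `a·v − τ(v)·b = δ(v)`. -/
theorem stmt_5 (D : Type*) [DivisionRing D] (τ : D ≃+* D) (δ : D → D)
    (hδadd : ∀ c d : D, δ (c + d) = δ c + δ d)
    (hδmul : ∀ c d : D, δ (c * d) = τ c * δ d + δ c * d)
    -- `S = D[y; τ, δ]`:
    (S : Type*) [Ring S] (ι : D →+* S) (y : S)
    (hrel : ∀ d : D, y * ι d = ι (τ d) * y + ι (δ d))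
    (hbasis : Function.Bijective fun c : ℕ →₀ D => c.sum fun n d => ι d * y ^ n)
    (a b : D) :
    Nonempty ((S ⧸ Submodule.span Sᵐᵒᵖ {y - ι a}) ≃ₗ[Sᵐᵒᵖ]
              (S ⧸ Submodule.span Sᵐᵒᵖ {y - ι b})) ↔
    ∃ v : D, v ≠ 0 ∧ a * v - τ v * b = δ v := by
  classical
  -- Basic facts about δ
  have hδ0 : δ 0 = 0 := by
    have h := hδadd 0 0
    rw [add_zero] at h
    exact (left_eq_add.mp h)
  have hδ1 : δ 1 = 0 := by
    have h := hδmul 1 1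
    rw [mul_one, map_one, one_mul, mul_one] at h
    exact left_eq_add.mp h
  -- The basis map as an additive monoid hom
  set F : (ℕ →₀ D) →+ S :=
    Finsupp.liftAddHom (fun n : ℕ => (AddMonoidHom.mulRight (y ^ n)).comp ι.toAddMonoidHom)
    with hFdef
  have hF : ∀ g : ℕ →₀ D, F g = g.sum fun n d => ι d * y ^ n := by
    intro g; rw [hFdef, Finsupp.liftAddHom_apply]; rfl
  have hFfun : (fun c : ℕ →₀ D => c.sum fun n d => ι d * y ^ n) = ⇑F :=
    funext fun g => (hF g).symm
  rw [hFfun] at hbasis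
  have hFinj : Function.Injective F := hbasis.1
  have hFsurj : Function.Surjective F := hbasis.2
  have hsingle : ∀ (n : ℕ) (d : D), F (Finsupp.single n d) = ι d * y ^ n := by
    intro n d
    rw [hF, Finsupp.sum_single_index]
    simp
  -- Multiplication by (y - ι c) on the left, in coordinates
  have hmul : ∀ (c : D) (g : ℕ →₀ D),
      (y - ι c) * F g
        = F (g.sum fun k d =>
            Finsupp.single (k + 1) (τ d) + Finsupp.single k (δ d - c * d)) := by
    intro c g
    rw [map_finsuppSum, hF g, Finsupp.sum, Finsupp.sum, Finset.mul_sum]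
    refine Finset.sum_congr rfl fun k _ => ?_
    rw [map_add, hsingle, hsingle, sub_mul, ← mul_assoc, hrel, map_sub, map_mul]
    rw [add_mul, pow_succ']
    noncomm_ring
  -- Membership in the right ideal
  have hmem : ∀ (c : D) (s : S),
      s ∈ Submodule.span Sᵐᵒᵖ {y - ι c} ↔ ∃ t : S, s = (y - ι c) * t := by
    intro c s
    rw [Submodule.mem_span_singleton]
    constructor
    · rintro ⟨r, rfl⟩
      exact ⟨r.unop, by rw [MulOpposite.smul_eq_mul_unop]⟩
    · rintro ⟨t, rfl⟩
      exact ⟨MulOpposite.op t, by rw [MulOpposite.smul_eq_mul_unop, MulOpposite.unop_op]⟩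
  -- Top coefficient of (y - ι c) * t
  have htop : ∀ (e : ℕ → D → D) (g : ℕ →₀ D) (n : ℕ), (∀ k ∈ g.support, k ≤ n) →
      (g.sum fun k d => Finsupp.single (k + 1) (τ d) + Finsupp.single k (e k d)) (n + 1)
        = τ (g n) := by
    intro e g n hn
    rw [Finsupp.sum_apply, Finsupp.sum, Finset.sum_eq_single n]
    · simp [Finsupp.single_apply]
    · intro k hk hkn
      have hkle : k ≤ n := hn k hk
      have hklt : k < n := lt_of_le_of_ne hkle hkn
      rw [Finsupp.add_apply, Finsupp.single_apply, Finsupp.single_apply,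
        if_neg (by omega), if_neg (by omega), add_zero]
    · intro hns
      have h0 : g n = 0 := Finsupp.notMem_support_iff.mp hns
      simp [h0, Finsupp.single_apply]
  -- Constants in the right ideal (y - ι c)S are zero
  have hconst : ∀ (c : D) (t : S) (w : D), (y - ι c) * t = ι w → t = 0 ∧ w = 0 := by
    intro c t w h
    obtain ⟨g, rfl⟩ := hFsurj t
    rw [hmul c g] at h
    have hw : ι w = F (Finsupp.single 0 w) := by rw [hsingle]; simp
    rw [hw] at h
    have heq := hFinj h
    by_cases hg : g = 0
    · subst hg
      rw [Finsupp.sum_zero_index] at heq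
      have hw0 : w = 0 := by
        have := congrArg (fun f : ℕ →₀ D => f 0) heq.symm
        simpa using this
      exact ⟨by simp, hw0⟩
    · exfalso
      have hne : g.support.Nonempty := Finsupp.support_nonempty_iff.mpr hg
      set n := g.support.max' hne with hn
      have h1 := htop (fun k d => δ d - c * d) g n (fun k hk => Finset.le_max' _ k hk)
      rw [heq] at h1
      have h2 : (Finsupp.single 0 w : ℕ →₀ D) (n + 1) = 0 := by
        rw [Finsupp.single_apply, if_neg (by omega)]
      rw [h2] at h1
      have h3 : g n = 0 := τ.injective (by rw [← h1, map_zero])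
      exact (Finsupp.mem_support_iff.mp (g.support.max'_mem hne)) h3
  -- Reduction: every element is congruent to a constant mod (y - ι c)S
  have hred : ∀ (c : D) (s : S), ∃ (w : D) (t : S), s = ι w + (y - ι c) * t := by
    intro c s
    have key : ∀ (m : ℕ) (d : D), ∃ (w : D) (t : S), ι d * y ^ m = ι w + (y - ι c) * t := by
      intro m
      induction m with
      | zero => exact fun d => ⟨d, 0, by simp⟩
      | succ m ihm =>
        intro d
        obtain ⟨w, t, ht⟩ := ihm (-(δ (τ.symm d) - c * τ.symm d))
        refine ⟨w, ι (τ.symm d) * y ^ m + t, ?_⟩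
        have he : (y - ι c) * ι (τ.symm d)
            = ι d * y + ι (δ (τ.symm d) - c * τ.symm d) := by
          rw [sub_mul, hrel, τ.apply_symm_apply, map_sub, map_mul]
          noncomm_ring
        have hneg : ι (-(δ (τ.symm d) - c * τ.symm d))
            = -ι (δ (τ.symm d) - c * τ.symm d) := map_neg ι _
        rw [hneg] at ht
        have h5 : (y - ι c) * (ι (τ.symm d) * y ^ m + t)
            = ((y - ι c) * ι (τ.symm d)) * y ^ m + (y - ι c) * t := by noncomm_ring
        have h6 : (y - ι c) * t = -ι (δ (τ.symm d) - c * τ.symm d) * y ^ m - ι w := by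
          rw [ht]; abel
        rw [h5, he, h6, pow_succ']
        noncomm_ring
    obtain ⟨g, rfl⟩ := hFsurj s
    induction g using Finsupp.induction with
    | zero => exact ⟨0, 0, by simp⟩
    | single_add n d g _ _ ih =>
      obtain ⟨w1, t1, ht1⟩ := ih
      obtain ⟨w2, t2, ht2⟩ := key n d
      refine ⟨w2 + w1, t2 + t1, ?_⟩
      rw [map_add, hsingle, ht1, ht2, map_add, mul_add]
      abel
  -- The relation in D gives a relation in S
  have key : ∀ p q u : D, p * u - τ u * q = δ u →
      (y - ι p) * ι u = ι (τ u) * (y - ι q) := by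
    intro p q u h
    rw [sub_mul, hrel, mul_sub, ← map_mul, ← map_mul]
    have h2 : δ u - p * u = -(τ u * q) := by rw [← h]; abel
    have h3 : ι (δ u) - ι (p * u) = -ι (τ u * q) := by
      rw [← map_sub, ← map_neg]; exact congrArg ι h2
    rw [add_sub_assoc, h3, ← sub_eq_add_neg]
  -- Inversion of the conjugacy relation
  have hinvrel : ∀ u : D, u ≠ 0 → ∀ p q : D, p * u - τ u * q = δ u →
      q * u⁻¹ - τ u⁻¹ * p = δ u⁻¹ := by
    intro u hu p q h
    have hτu : τ u ≠ 0 := fun h0 => hu (τ.injective (by rw [h0, map_zero]))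
    have hδinv : τ u * δ u⁻¹ + δ u * u⁻¹ = 0 := by
      have h1 := hδmul u u⁻¹
      rw [mul_inv_cancel₀ hu, hδ1] at h1
      exact h1.symm
    have e1 : τ u * δ u⁻¹ = τ u * q * u⁻¹ - p := by
      have e0 : τ u * δ u⁻¹ = -(δ u * u⁻¹) := eq_neg_of_add_eq_zero_left hδinv
      rw [e0, ← h, sub_mul, mul_inv_cancel_right₀ hu, neg_sub]
    have e2 : δ u⁻¹ = q * u⁻¹ - (τ u)⁻¹ * p := by
      have e3 := congrArg (fun x => (τ u)⁻¹ * x) e1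
      simp only [mul_sub, ← mul_assoc, inv_mul_cancel₀ hτu, one_mul] at e3
      rw [← inv_mul_cancel_left₀ hτu (δ u⁻¹), e1, mul_sub]
      simp only [← mul_assoc, inv_mul_cancel₀ hτu, one_mul]
    rw [map_inv₀, e2]
  constructor
  · -- isomorphism → relation
    rintro ⟨E⟩
    obtain ⟨u, hu⟩ := Submodule.Quotient.mk_surjective _
      (E (Submodule.Quotient.mk (1 : S)))
    obtain ⟨w, t, hwt⟩ := hred b u
    have hEw : E (Submodule.Quotient.mk (1 : S)) = Submodule.Quotient.mk (ι w) := by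
      rw [← hu, hwt]
      apply (Submodule.Quotient.eq _).mpr
      have : ι w + (y - ι b) * t - ι w = (y - ι b) * t := by abel
      rw [this]
      exact (hmem b _).mpr ⟨t, rfl⟩
    have hw0 : w ≠ 0 := by
      intro h0
      subst h0
      rw [map_zero] at hEw
      have h1 : Submodule.Quotient.mk (1 : S)
          = (0 : S ⧸ Submodule.span Sᵐᵒᵖ {y - ι a}) := by
        apply E.injective
        rw [hEw, map_zero, Submodule.Quotient.mk_zero]
      rw [Submodule.Quotient.mk_eq_zero] at h1
      obtain ⟨t1, ht1⟩ := (hmem a 1).mp h1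
      have h2 : (y - ι a) * t1 = ι 1 := by rw [map_one]; exact ht1.symm
      exact one_ne_zero (hconst a t1 1 h2).2
    have hmemb : ι w * (y - ι a) ∈ Submodule.span Sᵐᵒᵖ {y - ι b} := by
      have h1 : Submodule.Quotient.mk (y - ι a)
          = (0 : S ⧸ Submodule.span Sᵐᵒᵖ {y - ι a}) := by
        rw [Submodule.Quotient.mk_eq_zero]
        exact Submodule.subset_span rfl
      have h2 : MulOpposite.op (y - ι a) • E (Submodule.Quotient.mk (1 : S)) = 0 := by
        rw [← map_smul, ← Submodule.Quotient.mk_smul, MulOpposite.smul_eq_mul_unop,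
          MulOpposite.unop_op, one_mul, h1, map_zero]
      rw [hEw, ← Submodule.Quotient.mk_smul, MulOpposite.smul_eq_mul_unop,
        MulOpposite.unop_op, Submodule.Quotient.mk_eq_zero] at h2
      exact h2
    obtain ⟨t2, ht2⟩ := (hmem b _).mp hmemb
    obtain ⟨g, rfl⟩ := hFsurj t2
    rw [hmul b g] at ht2
    have hLHS : ι w * (y - ι a)
        = F (Finsupp.single 1 w + Finsupp.single 0 (-(w * a))) := by
      rw [map_add, hsingle, hsingle, pow_one, pow_zero, mul_one, map_neg, map_mul,
        mul_sub, sub_eq_add_neg]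
    have heq := hFinj (hLHS.symm.trans ht2)
    by_cases hg0 : g = 0
    · exfalso
      rw [hg0, Finsupp.sum_zero_index] at heq
      have := congrArg (fun f : ℕ →₀ D => f 1) heq
      simp [Finsupp.single_apply] at this
      exact hw0 this
    · have hne : g.support.Nonempty := Finsupp.support_nonempty_iff.mpr hg0
      set n := g.support.max' hne with hn
      have htopg := htop (fun k d => δ d - b * d) g n (fun k hk => Finset.le_max' _ k hk)
      rw [← heq] at htopg
      have hn0 : n = 0 := by
        by_contra hn0
        have h1 : (Finsupp.single 1 w + Finsupp.single 0 (-(w * a)) : ℕ →₀ D) (n + 1)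
            = 0 := by
          rw [Finsupp.add_apply, Finsupp.single_apply, Finsupp.single_apply,
            if_neg (by omega), if_neg (by omega), add_zero]
        rw [h1] at htopg
        have h3 : g n = 0 := τ.injective (by rw [← htopg, map_zero])
        exact (Finsupp.mem_support_iff.mp (g.support.max'_mem hne)) h3
      have hsupp : g.support ⊆ {0} := by
        intro k hk
        have := Finset.le_max' g.support k hk
        rw [← hn, hn0] at this
        simpa using Nat.le_zero.mp this
      have hgs : g = Finsupp.single 0 (g 0) := Finsupp.support_subset_singleton.mp hsupp
      set c := g 0 with hc
      have hc0 : c ≠ 0 := by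
        have := Finsupp.mem_support_iff.mp (g.support.max'_mem hne)
        rwa [← hn, hn0] at this
      rw [hgs, Finsupp.sum_single_index (by simp [hδ0])] at heq
      have e1 : w = τ c := by
        have := congrArg (fun f : ℕ →₀ D => f 1) heq
        simpa [Finsupp.single_apply] using this
      have e0 : -(w * a) = δ c - b * c := by
        have := congrArg (fun f : ℕ →₀ D => f 0) heq
        simpa [Finsupp.single_apply] using this
      have hrelc : b * c - τ c * a = δ c := by
        have h4 : δ c = -(w * a) + b * c := sub_eq_iff_eq_add.mp e0.symm
        rw [h4, e1]; abel
      exact ⟨c⁻¹, inv_ne_zero hc0, hinvrel c hc0 b a hrelc⟩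
  · -- relation → isomorphism
    rintro ⟨v, hv0, hv⟩
    have hv' : b * v⁻¹ - τ v⁻¹ * a = δ v⁻¹ := hinvrel v hv0 a b hv
    have k1 : (y - ι a) * ι v = ι (τ v) * (y - ι b) := key a b v hv
    have k2 : (y - ι b) * ι v⁻¹ = ι (τ v⁻¹) * (y - ι a) := key b a v⁻¹ hv'
    -- left multiplication as an Sᵐᵒᵖ-linear map
    let L : S → (S →ₗ[Sᵐᵒᵖ] S) := fun u =>
      { toFun := fun s => u * s
        map_add' := fun s1 s2 => mul_add u s1 s2
        map_smul' := fun r s => by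
          simp only [MulOpposite.smul_eq_mul_unop, RingHom.id_apply, mul_assoc] }
    have hφcond : Submodule.span Sᵐᵒᵖ {y - ι a} ≤
        LinearMap.ker ((Submodule.span Sᵐᵒᵖ {y - ι b}).mkQ ∘ₗ L (ι (τ v⁻¹))) := by
      rw [Submodule.span_le]
      rintro s hs
      rw [Set.mem_singleton_iff] at hs
      subst hs
      simp only [SetLike.mem_coe, LinearMap.mem_ker, LinearMap.comp_apply]
      have : (L (ι (τ v⁻¹))) (y - ι a) = (y - ι b) * ι v⁻¹ := k2.symm
      rw [this, Submodule.mkQ_apply, Submodule.Quotient.mk_eq_zero]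
      exact (hmem b _).mpr ⟨ι v⁻¹, rfl⟩
    have hψcond : Submodule.span Sᵐᵒᵖ {y - ι b} ≤
        LinearMap.ker ((Submodule.span Sᵐᵒᵖ {y - ι a}).mkQ ∘ₗ L (ι (τ v))) := by
      rw [Submodule.span_le]
      rintro s hs
      rw [Set.mem_singleton_iff] at hs
      subst hs
      simp only [SetLike.mem_coe, LinearMap.mem_ker, LinearMap.comp_apply]
      have : (L (ι (τ v))) (y - ι b) = (y - ι a) * ι v := k1.symm
      rw [this, Submodule.mkQ_apply, Submodule.Quotient.mk_eq_zero]
      exact (hmem a _).mpr ⟨ι v, rfl⟩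
    refine ⟨LinearEquiv.ofLinear
      ((Submodule.span Sᵐᵒᵖ {y - ι a}).liftQ _ hφcond)
      ((Submodule.span Sᵐᵒᵖ {y - ι b}).liftQ _ hψcond) ?_ ?_⟩
    · apply Submodule.linearMap_qext
      refine LinearMap.ext fun s => ?_
      simp only [LinearMap.comp_apply, Submodule.mkQ_apply, Submodule.liftQ_apply,
        LinearMap.id_apply]
      show Submodule.Quotient.mk (ι (τ v⁻¹) * (ι (τ v) * s)) = Submodule.Quotient.mk s
      rw [← mul_assoc, ← map_mul, ← map_mul, inv_mul_cancel₀ hv0, map_one, map_one,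
        one_mul]
    · apply Submodule.linearMap_qext
      refine LinearMap.ext fun s => ?_
      simp only [LinearMap.comp_apply, Submodule.mkQ_apply, Submodule.liftQ_apply,
        LinearMap.id_apply]
      show Submodule.Quotient.mk (ι (τ v) * (ι (τ v⁻¹) * s)) = Submodule.Quotient.mk s
      rw [← mul_assoc, ← map_mul, ← map_mul, mul_inv_cancel₀ hv0, map_one, map_one,
        one_mul]
end

section
/- Let D be a division algebra over a field k (k contained in the center of D), τ a k-algebra automorphism of D, and S = D[y; τ] a skew polynomial ring (the case δ = 0). For nonzero scalars α, β ∈ k, the quotient right S-modules S/(y−α)S and S/(y−β)S (where (y−c)S denotes the right ideal of S generated by y−c) are isomorphic as right S-modules if and only if α·β⁻¹ is an eigenvalue of τ, i.e., there exists a nonzero v ∈ D with τ(v) = α·β⁻¹·v. -/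
/-- Let `D` be a division algebra over a field `k`, `τ` a `k`-algebra
automorphism of `D`, and `S = D[y; τ]`.  For nonzero `α, β ∈ k`, the right `S`-modules
`S/(y−α)S` and `S/(y−β)S` are isomorphic if and only if `α·β⁻¹` is an eigenvalue of `τ`. -/
theorem stmt_6 (k : Type*) [Field k] (D : Type*) [DivisionRing D] [Algebra k D]
    (τ : D ≃ₐ[k] D)
    -- `S = D[y; τ]`:
    (S : Type*) [Ring S] (ι : D →+* S) (y : S)
    (hrel : ∀ d : D, y * ι d = ι (τ d) * y)
    (hbasis : Function.Bijective fun c : ℕ →₀ D => c.sum fun n d => ι d * y ^ n)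
    (α β : k) (hα : α ≠ 0) (hβ : β ≠ 0) :
    Nonempty ((S ⧸ Submodule.span Sᵐᵒᵖ {y - ι (algebraMap k D α)}) ≃ₗ[Sᵐᵒᵖ]
              (S ⧸ Submodule.span Sᵐᵒᵖ {y - ι (algebraMap k D β)})) ↔
    ∃ v : D, v ≠ 0 ∧ τ v = algebraMap k D (α * β⁻¹) * v := by
  classical
  -- iterate lemmas for σ := ⇑τ.symm
  have hit_zero : ∀ n : ℕ, (⇑τ.symm)^[n] (0 : D) = 0 := fun n =>
    Function.iterate_fixed (map_zero τ.symm) n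
  have hit_add : ∀ (n : ℕ) (a b : D),
      (⇑τ.symm)^[n] (a + b) = (⇑τ.symm)^[n] a + (⇑τ.symm)^[n] b := by
    intro n
    induction n with
    | zero => intro a b; rfl
    | succ n ih =>
        intro a b
        rw [Function.iterate_succ_apply, Function.iterate_succ_apply,
          Function.iterate_succ_apply, map_add]
        exact ih _ _
  have hit_mul : ∀ (n : ℕ) (a b : D),
      (⇑τ.symm)^[n] (a * b) = (⇑τ.symm)^[n] a * (⇑τ.symm)^[n] b := by
    intro n
    induction n with
    | zero => intro a b; rfl
    | succ n ih =>
        intro a b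
        rw [Function.iterate_succ_apply, Function.iterate_succ_apply,
          Function.iterate_succ_apply, map_mul]
        exact ih _ _
  have hit_alg : ∀ (n : ℕ) (c : k),
      (⇑τ.symm)^[n] (algebraMap k D c) = algebraMap k D c := fun n c =>
    Function.iterate_fixed (τ.symm.commutes c) n
  have hit_cancel : ∀ (n : ℕ) (d : D), (⇑τ.symm)^[n] ((⇑τ)^[n] d) = d := by
    intro n
    induction n with
    | zero => intro d; rfl
    | succ n ih =>
        intro d
        rw [Function.iterate_succ_apply' (⇑τ), Function.iterate_succ_apply,
          τ.symm_apply_apply]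
        exact ih d
  -- powers of y versus ι
  have hpow : ∀ (n : ℕ) (d : D), y ^ n * ι d = ι ((⇑τ)^[n] d) * y ^ n := by
    intro n
    induction n with
    | zero => intro d; simp
    | succ n ih =>
        intro d
        rw [pow_succ', mul_assoc, ih, ← mul_assoc, hrel, mul_assoc, ← pow_succ',
          Function.iterate_succ_apply']
  -- the basis equivalence
  set e : (ℕ →₀ D) ≃ S := Equiv.ofBijective _ hbasis with he_def
  have he : ∀ c : ℕ →₀ D, e c = c.sum fun n d => ι d * y ^ n := fun _ => rfl
  have hsingle : ∀ (n : ℕ) (d : D), e (Finsupp.single n d) = ι d * y ^ n := by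
    intro n d
    rw [he, Finsupp.sum_single_index]
    rw [map_zero, zero_mul]
  have he_zero : e 0 = 0 := by rw [he, Finsupp.sum_zero_index]
  have hsymm_add : ∀ s t : S, e.symm (s + t) = e.symm s + e.symm t := by
    intro s t
    apply e.injective
    rw [Equiv.apply_symm_apply, he,
      Finsupp.sum_add_index' (fun n => by rw [map_zero, zero_mul])
        (fun n a b => by rw [map_add, add_mul]),
      ← he, ← he, Equiv.apply_symm_apply, Equiv.apply_symm_apply]
  -- the remainder map
  set E : k → S → D :=
    fun γ s => (e.symm s).sum fun n d => algebraMap k D γ ^ n * (⇑τ.symm)^[n] d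
    with hE_def
  have hE : ∀ (γ : k) (s : S),
      E γ s = (e.symm s).sum fun n d => algebraMap k D γ ^ n * (⇑τ.symm)^[n] d :=
    fun _ _ => rfl
  have hE_single : ∀ (γ : k) (n : ℕ) (d : D),
      E γ (ι d * y ^ n) = algebraMap k D γ ^ n * (⇑τ.symm)^[n] d := by
    intro γ n d
    have h1 : e.symm (ι d * y ^ n) = Finsupp.single n d := by
      rw [Equiv.symm_apply_eq, hsingle]
    rw [hE, h1, Finsupp.sum_single_index]
    rw [hit_zero, mul_zero]
  have hE_zero : ∀ γ : k, E γ 0 = 0 := by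
    intro γ
    have h0 := hE_single γ 0 0
    simpa using h0
  have hE_add : ∀ (γ : k) (s t : S), E γ (s + t) = E γ s + E γ t := by
    intro γ s t
    rw [hE, hE, hE, hsymm_add, Finsupp.sum_add_index']
    · intro n; rw [hit_zero, mul_zero]
    · intro n a b; rw [hit_add, mul_add]
  have hE_sub : ∀ (γ : k) (s t : S), E γ (s - t) = E γ s - E γ t := by
    intro γ s t
    have h := hE_add γ (s - t) t
    rw [sub_add_cancel] at h
    rw [h, add_sub_cancel_right]
  have hE_one : ∀ γ : k, E γ 1 = 1 := by
    intro γ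
    have h1 := hE_single γ 0 1
    simpa using h1
  -- induction principle
  have hspan : ∀ P : S → Prop, P 0 → (∀ s t, P s → P t → P (s + t)) →
      (∀ (n : ℕ) (d : D), P (ι d * y ^ n)) → ∀ s, P s := by
    intro P h0 hadd hsing s
    obtain ⟨c, rfl⟩ := e.surjective s
    induction c using Finsupp.induction with
    | zero => rw [he_zero]; exact h0
    | single_add n d c hn hd ih =>
        have hsum : e (Finsupp.single n d + c) = ι d * y ^ n + e c := by
          rw [he, Finsupp.sum_add_index' (fun m => by rw [map_zero, zero_mul])
            (fun m a b => by rw [map_add, add_mul]), Finsupp.sum_single_index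
            (by rw [map_zero, zero_mul]), ← he]
        rw [hsum]
        exact hadd _ _ (hsing n d) ih
  -- E and right multiplication by y
  have hE_mul_y : ∀ (γ : k) (s : S), E γ (s * y) = algebraMap k D γ * τ.symm (E γ s) := by
    intro γ
    refine hspan (fun s => E γ (s * y) = algebraMap k D γ * τ.symm (E γ s)) ?_ ?_ ?_
    · rw [zero_mul, hE_zero, map_zero, mul_zero]
    · intro s t hs ht
      rw [add_mul, hE_add, hs, ht, hE_add, map_add, mul_add]
    · intro n d
      rw [mul_assoc, ← pow_succ, hE_single, hE_single, map_mul, map_pow,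
        τ.symm.commutes, Function.iterate_succ_apply', ← mul_assoc, ← pow_succ']
  -- E and right multiplication by ι d
  have hE_mul_iota : ∀ (γ : k) (d : D) (s : S), E γ (s * ι d) = E γ s * d := by
    intro γ d
    refine hspan (fun s => E γ (s * ι d) = E γ s * d) ?_ ?_ ?_
    · rw [zero_mul, hE_zero, zero_mul]
    · intro s t hs ht
      rw [add_mul, hE_add, hs, ht, hE_add, add_mul]
    · intro n d'
      rw [mul_assoc, hpow, ← mul_assoc, ← map_mul, hE_single, hE_single,
        hit_mul, hit_cancel, mul_assoc]
  -- E kills left multiples of y - ι γ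
  have hE_left : ∀ (γ : k) (t : S), E γ ((y - ι (algebraMap k D γ)) * t) = 0 := by
    intro γ
    refine hspan (fun t => E γ ((y - ι (algebraMap k D γ)) * t) = 0) ?_ ?_ ?_
    · rw [mul_zero, hE_zero]
    · intro s t hs ht
      rw [mul_add, hE_add, hs, ht, add_zero]
    · intro n d
      rw [sub_mul, hE_sub, ← mul_assoc, hrel, mul_assoc, ← pow_succ', hE_single,
        ← mul_assoc, ← map_mul, hE_single, Function.iterate_succ_apply,
        τ.symm_apply_apply, hit_mul, hit_alg, pow_succ, mul_assoc, sub_self]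
  have hker : ∀ (γ : k) (s : S),
      s ∈ Submodule.span Sᵐᵒᵖ {y - ι (algebraMap k D γ)} → E γ s = 0 := by
    intro γ s hs
    rw [Submodule.mem_span_singleton] at hs
    obtain ⟨t, ht⟩ := hs
    rw [← ht, MulOpposite.smul_eq_mul_unop]
    exact hE_left γ t.unop
  -- division with remainder
  have hmem : ∀ (γ : k) (s : S),
      s - ι (E γ s) ∈ Submodule.span Sᵐᵒᵖ {y - ι (algebraMap k D γ)} := by
    intro γ
    refine hspan (fun s => s - ι (E γ s) ∈ Submodule.span Sᵐᵒᵖ {y - ι (algebraMap k D γ)})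
      ?_ ?_ ?_
    · rw [hE_zero, map_zero, sub_zero]
      exact Submodule.zero_mem _
    · intro s t hs ht
      rw [hE_add, map_add, add_sub_add_comm]
      exact Submodule.add_mem _ hs ht
    · intro n d
      rw [hE_single]
      induction n generalizing d with
      | zero => simpa using Submodule.zero_mem _
      | succ n ih =>
          have hw : ι (algebraMap k D γ ^ (n + 1) * (⇑τ.symm)^[n + 1] d) =
              ι (algebraMap k D γ) *
                ι (τ.symm (algebraMap k D γ ^ n * (⇑τ.symm)^[n] d)) := by
            rw [← map_mul]
            congr 1
            rw [map_mul, map_pow, τ.symm.commutes, pow_succ', mul_assoc,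
              Function.iterate_succ_apply']
          have hkey : (y - ι (algebraMap k D γ)) *
              ι (τ.symm (algebraMap k D γ ^ n * (⇑τ.symm)^[n] d)) =
              ι (algebraMap k D γ ^ n * (⇑τ.symm)^[n] d) * y -
              ι (algebraMap k D γ ^ (n + 1) * (⇑τ.symm)^[n + 1] d) := by
            rw [sub_mul, hrel, τ.apply_symm_apply, hw]
          have h1 : ι d * y ^ (n + 1) - ι (algebraMap k D γ ^ (n + 1) * (⇑τ.symm)^[n + 1] d) =
              (ι d * y ^ n - ι (algebraMap k D γ ^ n * (⇑τ.symm)^[n] d)) * y +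
              (y - ι (algebraMap k D γ)) *
                ι (τ.symm (algebraMap k D γ ^ n * (⇑τ.symm)^[n] d)) := by
            rw [hkey, sub_mul, mul_assoc, ← pow_succ]
            abel
          rw [h1]
          refine Submodule.add_mem _ ?_ ?_
          · have h2 := Submodule.smul_mem
              (Submodule.span Sᵐᵒᵖ {y - ι (algebraMap k D γ)}) (MulOpposite.op y) (ih d)
            rwa [MulOpposite.smul_eq_mul_unop, MulOpposite.unop_op] at h2
          · have h3 := Submodule.smul_mem
              (Submodule.span Sᵐᵒᵖ {y - ι (algebraMap k D γ)})
              (MulOpposite.op (ι (τ.symm (algebraMap k D γ ^ n * (⇑τ.symm)^[n] d))))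
              (Submodule.mem_span_singleton_self (y - ι (algebraMap k D γ)))
            rwa [MulOpposite.smul_eq_mul_unop, MulOpposite.unop_op] at h3
  -- quotient mk and right multiplication
  have hsmul_mk : ∀ (I : Submodule Sᵐᵒᵖ S) (t x : S),
      (Submodule.Quotient.mk (x * t) : S ⧸ I) =
        MulOpposite.op t • Submodule.Quotient.mk x := by
    intro I t x
    rw [← Submodule.Quotient.mk_smul, MulOpposite.smul_eq_mul_unop, MulOpposite.unop_op]
  constructor
  · rintro ⟨φ⟩
    obtain ⟨s, hs⟩ := Submodule.Quotient.mk_surjective _ (φ (Submodule.Quotient.mk 1))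
    have hyα : (Submodule.Quotient.mk y :
        S ⧸ Submodule.span Sᵐᵒᵖ {y - ι (algebraMap k D α)}) =
        Submodule.Quotient.mk (ι (algebraMap k D α)) :=
      (Submodule.Quotient.eq _).mpr (Submodule.subset_span rfl)
    have hq : (Submodule.Quotient.mk (s * y) :
        S ⧸ Submodule.span Sᵐᵒᵖ {y - ι (algebraMap k D β)}) =
        Submodule.Quotient.mk (s * ι (algebraMap k D α)) := by
      rw [hsmul_mk, hsmul_mk, hs, ← map_smul, ← map_smul, ← hsmul_mk, ← hsmul_mk,
        one_mul, one_mul, hyα]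
    have h0 : algebraMap k D β * τ.symm (E β s) = E β s * algebraMap k D α := by
      have hd := hker β _ ((Submodule.Quotient.eq _).mp hq)
      rw [hE_sub, sub_eq_zero, hE_mul_y, hE_mul_iota] at hd
      exact hd
    have hβ' : algebraMap k D β ≠ 0 := fun h => hβ (by
      apply (algebraMap k D).injective
      rw [h, map_zero])
    have hlam0 : algebraMap k D (α * β⁻¹) ≠ 0 := fun h => mul_ne_zero hα (inv_ne_zero hβ) (by
      apply (algebraMap k D).injective
      rw [h, map_zero])
    have hu0 : E β s ≠ 0 := by
      intro hu
      have hms := hmem β s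
      rw [hu, map_zero, sub_zero] at hms
      have hφ0 : φ (Submodule.Quotient.mk 1) = 0 := by
        rw [← hs]
        exact (Submodule.Quotient.mk_eq_zero _).mpr hms
      have h1 : (Submodule.Quotient.mk 1 :
          S ⧸ Submodule.span Sᵐᵒᵖ {y - ι (algebraMap k D α)}) = 0 := by
        apply φ.injective
        rw [hφ0, map_zero]
      have h1m : (1 : S) ∈ Submodule.span Sᵐᵒᵖ {y - ι (algebraMap k D α)} :=
        (Submodule.Quotient.mk_eq_zero _).mp h1
      have h2 := hker α 1 h1m
      rw [hE_one] at h2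
      exact one_ne_zero h2
    have h1 : τ.symm (E β s) = algebraMap k D (α * β⁻¹) * E β s := by
      rw [← Algebra.commutes α (E β s)] at h0
      calc τ.symm (E β s) = (algebraMap k D β)⁻¹ * (algebraMap k D β * τ.symm (E β s)) := by
            rw [← mul_assoc, inv_mul_cancel₀ hβ', one_mul]
        _ = (algebraMap k D β)⁻¹ * (algebraMap k D α * E β s) := by rw [h0]
        _ = algebraMap k D (α * β⁻¹) * E β s := by
            rw [← mul_assoc, ← map_inv₀, ← map_mul, mul_comm β⁻¹ α]
    have h2 : E β s = algebraMap k D (α * β⁻¹) * τ (E β s) := by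
      conv_lhs => rw [← τ.apply_symm_apply (E β s)]
      rw [h1, map_mul, τ.commutes]
    have h3 : τ (E β s) = (algebraMap k D (α * β⁻¹))⁻¹ * E β s := by
      conv_rhs => rw [h2]
      rw [← mul_assoc, inv_mul_cancel₀ hlam0, one_mul]
    refine ⟨(E β s)⁻¹, inv_ne_zero hu0, ?_⟩
    rw [map_inv₀, h3, mul_inv_rev, inv_inv]
    exact (Algebra.commutes _ _).symm
  · rintro ⟨v, hv0, hv⟩
    have hlam0 : algebraMap k D (α * β⁻¹) ≠ 0 := fun h => mul_ne_zero hα (inv_ne_zero hβ) (by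
      apply (algebraMap k D).injective
      rw [h, map_zero])
    have hsv : τ.symm v = (algebraMap k D (α * β⁻¹))⁻¹ * v := by
      apply τ.injective
      rw [τ.apply_symm_apply, map_mul, map_inv₀, τ.commutes, hv, ← mul_assoc,
        inv_mul_cancel₀ hlam0, one_mul]
    have hsu : τ.symm v⁻¹ = algebraMap k D (α * β⁻¹) * v⁻¹ := by
      rw [map_inv₀, hsv, mul_inv_rev, inv_inv]
      exact (Algebra.commutes _ _).symm
    have hkey1 : ι v⁻¹ * (y - ι (algebraMap k D α)) =
        (y - ι (algebraMap k D β)) * ι (τ.symm v⁻¹) := by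
      rw [mul_sub, sub_mul, hrel, τ.apply_symm_apply]
      congr 1
      rw [hsu, ← map_mul, ← map_mul]
      congr 1
      rw [← Algebra.commutes α v⁻¹, ← mul_assoc, ← map_mul]
      congr 2
      field_simp
    have hkey2 : ι v * (y - ι (algebraMap k D β)) =
        (y - ι (algebraMap k D α)) * ι (τ.symm v) := by
      rw [mul_sub, sub_mul, hrel, τ.apply_symm_apply]
      congr 1
      rw [hsv, ← map_mul, ← map_mul]
      congr 1
      rw [← Algebra.commutes β v, ← map_inv₀, ← mul_assoc, ← map_mul]
      congr 2
      field_simp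
    let L : D → (S →ₗ[Sᵐᵒᵖ] S) := fun w =>
      { toFun := fun x => ι w * x
        map_add' := fun a b => mul_add _ _ _
        map_smul' := fun r x => by
          simp only [MulOpposite.smul_eq_mul_unop, RingHom.id_apply, mul_assoc] }
    have hL : ∀ (w : D) (x : S), L w x = ι w * x := fun _ _ => rfl
    have hmemβ : Submodule.span Sᵐᵒᵖ {y - ι (algebraMap k D α)} ≤
        LinearMap.ker ((Submodule.span Sᵐᵒᵖ {y - ι (algebraMap k D β)}).mkQ.comp
          (L v⁻¹)) := by
      rw [Submodule.span_le, Set.singleton_subset_iff]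
      simp only [SetLike.mem_coe, LinearMap.mem_ker, LinearMap.comp_apply,
        Submodule.mkQ_apply, Submodule.Quotient.mk_eq_zero, hL]
      rw [hkey1]
      have h3 := Submodule.smul_mem
        (Submodule.span Sᵐᵒᵖ {y - ι (algebraMap k D β)})
        (MulOpposite.op (ι (τ.symm v⁻¹)))
        (Submodule.mem_span_singleton_self (y - ι (algebraMap k D β)))
      rwa [MulOpposite.smul_eq_mul_unop, MulOpposite.unop_op] at h3
    have hmemα : Submodule.span Sᵐᵒᵖ {y - ι (algebraMap k D β)} ≤
        LinearMap.ker ((Submodule.span Sᵐᵒᵖ {y - ι (algebraMap k D α)}).mkQ.comp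
          (L v)) := by
      rw [Submodule.span_le, Set.singleton_subset_iff]
      simp only [SetLike.mem_coe, LinearMap.mem_ker, LinearMap.comp_apply,
        Submodule.mkQ_apply, Submodule.Quotient.mk_eq_zero, hL]
      rw [hkey2]
      have h3 := Submodule.smul_mem
        (Submodule.span Sᵐᵒᵖ {y - ι (algebraMap k D α)})
        (MulOpposite.op (ι (τ.symm v)))
        (Submodule.mem_span_singleton_self (y - ι (algebraMap k D α)))
      rwa [MulOpposite.smul_eq_mul_unop, MulOpposite.unop_op] at h3
    refine ⟨LinearEquiv.ofLinear
      (Submodule.liftQ _ _ hmemβ) (Submodule.liftQ _ _ hmemα) ?_ ?_⟩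
    · apply Submodule.linearMap_qext
      apply LinearMap.ext
      intro x
      simp only [LinearMap.comp_apply, Submodule.mkQ_apply, Submodule.liftQ_apply,
        LinearMap.id_apply, hL]
      rw [← mul_assoc, ← map_mul, inv_mul_cancel₀ hv0, map_one, one_mul]
    · apply Submodule.linearMap_qext
      apply LinearMap.ext
      intro x
      simp only [LinearMap.comp_apply, Submodule.mkQ_apply, Submodule.liftQ_apply,
        LinearMap.id_apply, hL]
      rw [← mul_assoc, ← map_mul, mul_inv_cancel₀ hv0, map_one, one_mul]
end

section
/- Let D be a division algebra over a field k (k contained in the center of D), τ a k-algebra automorphism of D, and S = D[y; τ] a skew polynomial ring. Let E_τ = { α ∈ kˣ : there exists nonzero v ∈ D with τ(v) = α·v }, the set of eigenvalues in kˣ of τ. Then E_τ is a subgroup of the multiplicative group kˣ, and if E_τ has infinite index in kˣ then there exist infinitely many pairwise non-isomorphic simple right S-modules. -/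
universe u

/-- An infinite family (indexed by `ℕ`) of pairwise non-isomorphic simple right
`S`-modules (right `S`-modules are modules over `Sᵐᵒᵖ`). -/
structure SimpleRightModuleFamily (S : Type u) [Ring S] : Type (u + 1) where
  M : ℕ → Type u
  [acg : ∀ i, AddCommGroup (M i)]
  [mod : ∀ i, Module Sᵐᵒᵖ (M i)]
  simple : ∀ i, IsSimpleModule Sᵐᵒᵖ (M i)
  noniso : ∀ i j, i ≠ j → IsEmpty (M i ≃ₗ[Sᵐᵒᵖ] M j)

namespace Stmt7Aux

open MulOpposite

variable {k : Type u} [Field k] {D : Type u} [DivisionRing D] [Algebra k D]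
  (τ : D ≃ₐ[k] D) {S : Type u} [Ring S] (ι : D →+* S) (y : S)

/-- The "coefficients to polynomial" map. -/
noncomputable def Lmap : (ℕ →₀ D) →+ S :=
  Finsupp.liftAddHom fun n => (AddMonoidHom.mulRight (y ^ n)).comp ι.toAddMonoidHom

lemma Lmap_apply (c : ℕ →₀ D) : Lmap ι y c = c.sum fun n d => ι d * y ^ n := rfl

lemma Lmap_single (n : ℕ) (d : D) : Lmap ι y (Finsupp.single n d) = ι d * y ^ n :=
  Finsupp.liftAddHom_apply_single _ _ _

lemma pow_rel (hrel : ∀ d : D, y * ι d = ι (τ d) * y) (n : ℕ) (d : D) :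
    y ^ n * ι d = ι ((τ ^ n) d) * y ^ n := by
  induction n with
  | zero => simp
  | succ n ih =>
    rw [pow_succ', mul_assoc, ih, ← mul_assoc, hrel, mul_assoc, ← pow_succ']
    congr 2
    rw [← AlgEquiv.mul_apply, ← pow_succ']

lemma basis_mul (hrel : ∀ d : D, y * ι d = ι (τ d) * y) (n m : ℕ) (d e : D) :
    (ι d * y ^ n) * (ι e * y ^ m) = ι (d * (τ ^ n) e) * y ^ (n + m) := by
  rw [map_mul, mul_assoc, ← mul_assoc (y ^ n), pow_rel τ ι y hrel, mul_assoc, ← pow_add,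
    mul_assoc]

/-- The additive endomorphism `x ↦ a * τ⁻¹ x` of `D`. -/
def Tend (a : D) : AddMonoid.End D :=
  AddMonoidHom.mk' (fun x => a * τ.symm x) (fun x y => by simp [mul_add])

/-- Right multiplication as an additive endomorphism. -/
def Rend (d : D) : AddMonoid.End D := AddMonoidHom.mulRight d

lemma Rend_apply (d x : D) : Rend (D := D) d x = x * d := rfl

lemma Tend_apply (a x : D) : Tend τ a x = a * τ.symm x := rfl

lemma Tend_pow_mul (a : D) (n : ℕ) (x e : D) :
    (Tend τ a ^ n) x * e = (Tend τ a ^ n) (x * (τ ^ n) e) := by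
  induction n generalizing x e with
  | zero => simp
  | succ n ih =>
    have h1 : ∀ z : D, (Tend τ a ^ (n + 1)) z = Tend τ a ((Tend τ a ^ n) z) := by
      intro z; rw [pow_succ']; rfl
    calc (Tend τ a ^ (n + 1)) x * e
        = a * (τ.symm ((Tend τ a ^ n) x) * e) := by rw [h1, Tend_apply, mul_assoc]
      _ = a * (τ.symm ((Tend τ a ^ n) x) * τ.symm (τ e)) := by
          rw [AlgEquiv.symm_apply_apply]
      _ = a * τ.symm ((Tend τ a ^ n) x * τ e) := by rw [map_mul]
      _ = Tend τ a ((Tend τ a ^ n) (x * (τ ^ n) (τ e))) := by rw [ih]; rfl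
      _ = (Tend τ a ^ (n + 1)) (x * (τ ^ (n + 1)) e) := by
          rw [← h1]
          congr 2

/-- The coefficientwise "evaluation-style" map into additive endomorphisms of `D`. -/
noncomputable def Bmap (a : D) : (ℕ →₀ D) →+ AddMonoid.End D :=
  Finsupp.liftAddHom fun n =>
    { toFun := fun d => Tend τ a ^ n * Rend d
      map_zero' := AddMonoidHom.ext fun x => by
        show (Tend τ a ^ n) (x * 0) = 0
        rw [mul_zero, map_zero]
      map_add' := fun d e => AddMonoidHom.ext fun x => by
        show (Tend τ a ^ n) (x * (d + e)) = (Tend τ a ^ n) (x * d) + (Tend τ a ^ n) (x * e)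
        rw [mul_add, map_add] }

lemma Bmap_single (a : D) (n : ℕ) (d : D) :
    Bmap τ a (Finsupp.single n d) = Tend τ a ^ n * Rend d :=
  Finsupp.liftAddHom_apply_single _ _ _

variable (hb : Function.Bijective ⇑(Lmap ι y))

/-- The basis equivalence. -/
noncomputable def Emap : (ℕ →₀ D) ≃+ S := AddEquiv.ofBijective _ hb

lemma Emap_single (n : ℕ) (d : D) : Emap ι y hb (Finsupp.single n d) = ι d * y ^ n :=
  Lmap_single ι y n d

/-- The right-action map `S →+ AddMonoid.End D` for the module `S/(y-a)S ≅ D`. -/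
noncomputable def rho0 (a : D) : S →+ AddMonoid.End D :=
  (Bmap τ a).comp (Emap ι y hb).symm.toAddMonoidHom

lemma rho0_basis (a : D) (n : ℕ) (d : D) :
    rho0 τ ι y hb a (ι d * y ^ n) = Tend τ a ^ n * Rend d := by
  have h : (Emap ι y hb).symm (ι d * y ^ n) = Finsupp.single n d := by
    rw [← Emap_single ι y hb, AddEquiv.symm_apply_apply]
  show Bmap τ a ((Emap ι y hb).symm (ι d * y ^ n)) = _
  rw [h, Bmap_single]

lemma rho0_iota (a : D) (c x : D) : rho0 τ ι y hb a (ι c) x = x * c := by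
  have h : ι c = ι c * y ^ 0 := by rw [pow_zero, mul_one]
  rw [h, rho0_basis]
  show (Tend τ a ^ 0) (x * c) = x * c
  rw [pow_zero]
  rfl

lemma rho0_y (a : D) (x : D) : rho0 τ ι y hb a y x = a * τ.symm x := by
  have h := rho0_basis τ ι y hb a 1 1
  rw [map_one, one_mul, pow_one, pow_one] at h
  rw [h]
  show Tend τ a (x * 1) = a * τ.symm x
  rw [mul_one]
  rfl

lemma rho0_antimul (hrel : ∀ d : D, y * ι d = ι (τ d) * y) (a : D) (s t : S) :
    rho0 τ ι y hb a (t * s) = rho0 τ ι y hb a s * rho0 τ ι y hb a t := by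
  obtain ⟨c, rfl⟩ := (Emap ι y hb).surjective s
  obtain ⟨c', rfl⟩ := (Emap ι y hb).surjective t
  induction c using Finsupp.induction_linear generalizing c' with
  | zero => simp
  | add f g hf hg => simp [map_add, mul_add, add_mul, hf, hg]
  | single n d =>
    induction c' using Finsupp.induction_linear with
    | zero => simp
    | add f g hf hg => simp [map_add, mul_add, add_mul, hf, hg]
    | single m e =>
      rw [Emap_single, Emap_single, basis_mul τ ι y hrel, rho0_basis, rho0_basis, rho0_basis]
      refine AddMonoidHom.ext fun x => ?_
      show (Tend τ a ^ (m + n)) (x * (e * (τ ^ m) d))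
        = (Tend τ a ^ n) ((Tend τ a ^ m) (x * e) * d)
      rw [Tend_pow_mul, ← mul_assoc]
      have : (Tend τ a ^ n) ((Tend τ a ^ m) (x * e * (τ ^ m) d))
          = (Tend τ a ^ n * Tend τ a ^ m) (x * e * (τ ^ m) d) := rfl
      rw [this, ← pow_add, Nat.add_comm n m, mul_assoc]

/-- The right-module structure map as a ring hom from `Sᵐᵒᵖ`. -/
noncomputable def rho (hrel : ∀ d : D, y * ι d = ι (τ d) * y) (a : D) : Sᵐᵒᵖ →+* AddMonoid.End D where
  toFun s := rho0 τ ι y hb a s.unop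
  map_one' := by
    show rho0 τ ι y hb a 1 = 1
    have h : (1 : S) = ι 1 * y ^ 0 := by rw [map_one, pow_zero, mul_one]
    rw [h, rho0_basis]
    refine AddMonoidHom.ext fun x => ?_
    show (Tend τ a ^ 0) (x * 1) = x
    rw [pow_zero, mul_one]
    rfl
  map_mul' s t := by
    show rho0 τ ι y hb a (t.unop * s.unop) = _
    exact rho0_antimul τ ι y hb hrel a s.unop t.unop
  map_zero' := by
    show rho0 τ ι y hb a 0 = 0
    rw [map_zero]
  map_add' s t := by
    show rho0 τ ι y hb a (s.unop + t.unop) = _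
    rw [map_add]

end Stmt7Aux

open Stmt7Aux MulOpposite in
/-- Let `D` be a division algebra over a field `k`, `τ` a `k`-algebra
automorphism of `D`, and `S = D[y; τ]`.  The set `E_τ` of eigenvalues of `τ` in `kˣ` is a
subgroup of `kˣ`, and if it has infinite index in `kˣ` then there are infinitely many
pairwise non-isomorphic simple right `S`-modules. -/
theorem stmt_7 (k : Type u) [Field k] (D : Type u) [DivisionRing D] [Algebra k D]
    (τ : D ≃ₐ[k] D)
    -- `S = D[y; τ]`:
    (S : Type u) [Ring S] (ι : D →+* S) (y : S)
    (hrel : ∀ d : D, y * ι d = ι (τ d) * y)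
    (hbasis : Function.Bijective fun c : ℕ →₀ D => c.sum fun n d => ι d * y ^ n) :
    (∃ G : Subgroup kˣ, (G : Set kˣ) =
        {α : kˣ | ∃ v : D, v ≠ 0 ∧ τ v = algebraMap k D (α : k) * v}) ∧
    (∀ G : Subgroup kˣ, (G : Set kˣ) =
        {α : kˣ | ∃ v : D, v ≠ 0 ∧ τ v = algebraMap k D (α : k) * v} →
      Infinite (kˣ ⧸ G) → Nonempty (SimpleRightModuleFamily S)) := by
  constructor
  · -- `E_τ` is a subgroup
    refine ⟨{ carrier := {α : kˣ | ∃ v : D, v ≠ 0 ∧ τ v = algebraMap k D (α : k) * v}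
              one_mem' := ⟨1, one_ne_zero, by simp⟩
              mul_mem' := ?_
              inv_mem' := ?_ }, rfl⟩
    · rintro α β ⟨v, hv, hτv⟩ ⟨w, hw, hτw⟩
      refine ⟨v * w, mul_ne_zero hv hw, ?_⟩
      rw [map_mul, hτv, hτw, Units.val_mul, map_mul, mul_assoc, ← mul_assoc v,
        ← Algebra.commutes, ← mul_assoc, ← mul_assoc, mul_assoc]
    · rintro α ⟨v, hv, hτv⟩
      refine ⟨v⁻¹, inv_ne_zero hv, ?_⟩
      rw [map_inv₀, hτv, mul_inv_rev, ← map_inv₀, ← Algebra.commutes,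
        Units.val_inv_eq_inv_val]
  · intro G hG hInf
    have hb : Function.Bijective ⇑(Lmap ι y) := hbasis
    -- pick representatives of infinitely many distinct cosets
    set f : ℕ ↪ kˣ ⧸ G := Infinite.natEmbedding (kˣ ⧸ G) with hf
    set αu : ℕ → kˣ := fun i => (f i).out with hαu
    have hout : ∀ i, QuotientGroup.mk (αu i) = f i := fun i => QuotientGroup.out_eq' (f i)
    set a : ℕ → D := fun i => algebraMap k D ((αu i : kˣ) : k) with ha
    -- the module structures
    letI modI : ∀ _ : ℕ, Module Sᵐᵒᵖ D := fun i => Module.compHom D (rho τ ι y hb hrel (a i))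
    have smul_def : ∀ (i : ℕ) (s : S) (x : D),
        (letI := modI i; (op s • x : D)) = rho0 τ ι y hb (a i) s x := fun _ _ _ => rfl
    refine ⟨{ M := fun _ => D, acg := fun _ => inferInstance, mod := modI,
              simple := fun i => ?_, noniso := fun i j hij => ?_ }⟩
    · -- simplicity
      letI := modI i
      have smul_iota : ∀ (c x : D), op (ι c) • x = x * c := fun c x => by
        rw [smul_def i (ι c) x, rho0_iota]
      haveI : Nontrivial (Submodule Sᵐᵒᵖ D) := by
        refine ⟨⊥, ⊤, fun h => ?_⟩
        have h1 : (1 : D) ∈ (⊤ : Submodule Sᵐᵒᵖ D) := trivial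
        rw [← h, Submodule.mem_bot] at h1
        exact one_ne_zero h1
      rw [isSimpleModule_iff]
      constructor
      intro N
      by_cases hN : N = ⊥
      · exact Or.inl hN
      · right
        obtain ⟨x, hxN, hx0⟩ := N.ne_bot_iff.mp hN
        rw [eq_top_iff]
        intro d _
        have := N.smul_mem (op (ι (x⁻¹ * d))) hxN
        rwa [smul_iota, ← mul_assoc, mul_inv_cancel₀ hx0, one_mul] at this
    · -- non-isomorphism
      constructor
      intro g
      letI := modI i
      letI := modI j
      have hsm : ∀ (s : S) (x : D),
          g (rho0 τ ι y hb (a i) s x) = rho0 τ ι y hb (a j) s (g x) := fun s x =>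
        g.map_smul (op s) x
      set c : D := g 1 with hc
      have hc0 : c ≠ 0 := by
        intro h
        have : g 1 = g 0 := by rw [← hc, h, map_zero]
        exact one_ne_zero (g.injective this)
      have hgd : ∀ d : D, g d = c * d := fun d => by
        have := hsm (ι d) 1
        rwa [rho0_iota, rho0_iota, one_mul] at this
      have hy : c * a i = a j * τ.symm c := by
        have := hsm y 1
        rw [rho0_y, rho0_y, map_one, mul_one, ← hc, hgd (a i)] at this
        exact this
      -- apply τ
      have hτ : τ c * a i = a j * c := by
        have := congrArg τ hy
        rwa [map_mul, map_mul, ha, AlgEquiv.commutes, AlgEquiv.commutes,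
          AlgEquiv.apply_symm_apply] at this
      -- hence τ c = algebraMap (αu j * (αu i)⁻¹) * c
      set γ : kˣ := αu j * (αu i)⁻¹ with hγ
      have hai : algebraMap k D ((αu i : kˣ) : k) ≠ 0 := by
        simp only [ne_eq, map_eq_zero]
        exact Units.ne_zero (αu i)
      have hγval : algebraMap k D ((γ : kˣ) : k) * algebraMap k D ((αu i : kˣ) : k)
          = algebraMap k D ((αu j : kˣ) : k) := by
        rw [← map_mul]
        congr 1
        rw [hγ, Units.val_mul, Units.val_inv_eq_inv_val]
        field_simp
      have hτ' : τ c * algebraMap k D ((αu i : kˣ) : k)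
          = algebraMap k D ((αu j : kˣ) : k) * c := hτ
      have key : τ c * algebraMap k D ((αu i : kˣ) : k)
          = algebraMap k D ((γ : kˣ) : k) * c * algebraMap k D ((αu i : kˣ) : k) := by
        rw [hτ', mul_assoc, ← Algebra.commutes ((αu i : kˣ) : k) c, ← mul_assoc, hγval]
      have hτc : τ c = algebraMap k D ((γ : kˣ) : k) * c := mul_right_cancel₀ hai key
      -- so γ ∈ G
      have hγG : γ ∈ G := by
        have : γ ∈ (G : Set kˣ) := by
          rw [hG]
          exact ⟨c, hc0, hτc⟩
        exact this
      -- contradiction with distinct cosets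
      have : (QuotientGroup.mk (αu i) : kˣ ⧸ G) = QuotientGroup.mk (αu j) := by
        rw [QuotientGroup.eq]
        rwa [hγ, mul_comm] at hγG
      rw [hout, hout] at this
      exact hij (f.injective this)
end

section
/- Let D be a division algebra over a field k (k contained in the center of D), δ a k-linear derivation of D, and S = D[y; δ] a skew polynomial ring (the case τ = identity). Let E_δ = { α ∈ k : there exists nonzero v ∈ D with δ(v) = α·v }, the set of eigenvalues in k of δ. Then E_δ is a subgroup of the additive group (k, +), and if E_δ has infinite index in (k, +) then there exist infinitely many pairwise non-isomorphic simple right S-modules. -/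
universe u

open MulOpposite Function

section Aux

variable {k : Type u} [Field k] {D : Type u} [DivisionRing D] [Algebra k D]

/-- Right multiplication as an additive endomorphism. -/
def mr (d : D) : AddMonoid.End D := AddMonoidHom.mulRight d

@[simp] lemma mr_apply (d v : D) : mr d v = v * d := rfl

lemma mr_mul (a b : D) : mr (a * b) = mr b * mr a :=
  AddMonoidHom.ext fun v => (mul_assoc v a b).symm

lemma mr_add (a b : D) : mr (a + b) = mr a + mr b :=
  AddMonoidHom.ext fun v => mul_add v a b

@[simp] lemma mr_one : mr (1 : D) = 1 := AddMonoidHom.ext fun v => mul_one v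

/-- The action of `y`: `v ↦ α v - δ v`. -/
def skewT (δ : D →ₗ[k] D) (α : k) : AddMonoid.End D :=
  (AddMonoidHom.mulLeft (algebraMap k D α) : D →+ D) - δ.toAddMonoidHom

@[simp] lemma skewT_apply (δ : D →ₗ[k] D) (α : k) (v : D) :
    skewT δ α v = algebraMap k D α * v - δ v := rfl

variable {S : Type u} [Ring S]

/-- The additive map `(ℕ →₀ D) →+ S`, `c ↦ Σ ι (c n) * y ^ n`. -/
noncomputable def sumHom (ι : D →+* S) (y : S) : (ℕ →₀ D) →+ S :=
  Finsupp.liftAddHom fun n => (AddMonoidHom.mulRight (y ^ n)).comp ι.toAddMonoidHom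

lemma sumHom_apply (ι : D →+* S) (y : S) (c : ℕ →₀ D) :
    sumHom ι y c = c.sum fun n d => ι d * y ^ n := by
  rw [sumHom, Finsupp.liftAddHom_apply]; rfl

@[simp] lemma sumHom_single (ι : D →+* S) (y : S) (n : ℕ) (d : D) :
    sumHom ι y (Finsupp.single n d) = ι d * y ^ n := by
  rw [sumHom, Finsupp.liftAddHom_apply_single]; rfl

variable (ι : D →+* S) (y : S)
variable (hb : Function.Bijective fun c : ℕ →₀ D => c.sum fun n d => ι d * y ^ n)

include hb in
lemma sumHom_bij : Function.Bijective (sumHom ι y) := by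
  have h : ⇑(sumHom ι y) = fun c : ℕ →₀ D => c.sum fun n d => ι d * y ^ n :=
    funext (sumHom_apply ι y)
  rw [h]; exact hb

/-- The additive equivalence `S ≃+ (ℕ →₀ D)` giving coefficients. -/
noncomputable def coeffs : S ≃+ (ℕ →₀ D) :=
  (AddEquiv.ofBijective (sumHom ι y) (sumHom_bij ι y hb)).symm

lemma sumHom_coeffs (s : S) : sumHom ι y (coeffs ι y hb s) = s :=
  (AddEquiv.ofBijective (sumHom ι y) (sumHom_bij ι y hb)).apply_symm_apply s

lemma coeffs_sumHom (c : ℕ →₀ D) : coeffs ι y hb (sumHom ι y c) = c :=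
  (AddEquiv.ofBijective (sumHom ι y) (sumHom_bij ι y hb)).symm_apply_apply c

lemma coeffs_basis (n : ℕ) (d : D) :
    coeffs ι y hb (ι d * y ^ n) = Finsupp.single n d := by
  rw [← sumHom_single ι y, coeffs_sumHom]

include hb in
/-- Induction on elements of `S` through the basis. -/
lemma basis_induction {P : S → Prop} (h0 : P 0)
    (hadd : ∀ a b, P a → P b → P (a + b))
    (hb1 : ∀ (d : D) (n : ℕ), P (ι d * y ^ n)) : ∀ s, P s := by
  intro s
  rw [← sumHom_coeffs ι y hb s]
  generalize coeffs ι y hb s = c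
  induction c using Finsupp.induction with
  | zero => simpa using h0
  | single_add n d f _ _ ih =>
      rw [map_add, sumHom_single]
      exact hadd _ _ (hb1 d n) ih

/-- The additive map `S →+ AddMonoid.End D` underlying the right action. -/
noncomputable def rho (δ : D →ₗ[k] D) (α : k) : S →+ AddMonoid.End D :=
  (Finsupp.liftAddHom fun n =>
    { toFun := fun d => skewT δ α ^ n * mr d
      map_zero' := AddMonoidHom.ext fun v => by
        show (skewT δ α ^ n) (v * 0) = 0
        simp
      map_add' := fun a b => AddMonoidHom.ext fun v => by
        show (skewT δ α ^ n) (v * (a + b))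
            = (skewT δ α ^ n) (v * a) + (skewT δ α ^ n) (v * b)
        rw [mul_add, map_add] }).comp
    (coeffs ι y hb).toAddMonoidHom

lemma rho_basis (δ : D →ₗ[k] D) (α : k) (d : D) (n : ℕ) :
    rho ι y hb δ α (ι d * y ^ n) = skewT δ α ^ n * mr d := by
  show (Finsupp.liftAddHom fun n =>
      ({ toFun := fun d => skewT δ α ^ n * mr d
         map_zero' := AddMonoidHom.ext fun v => by
           show (skewT δ α ^ n) (v * 0) = 0
           simp
         map_add' := fun a b => AddMonoidHom.ext fun v => by
           show (skewT δ α ^ n) (v * (a + b))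
               = (skewT δ α ^ n) (v * a) + (skewT δ α ^ n) (v * b)
           rw [mul_add, map_add] } : D →+ AddMonoid.End D))
      (coeffs ι y hb (ι d * y ^ n)) = skewT δ α ^ n * mr d
  rw [coeffs_basis, Finsupp.liftAddHom_apply_single]
  rfl

lemma rho_iota (δ : D →ₗ[k] D) (α : k) (d : D) : rho ι y hb δ α (ι d) = mr d := by
  have h := rho_basis ι y hb δ α d 0
  simpa using h

lemma rho_y (δ : D →ₗ[k] D) (α : k) : rho ι y hb δ α y = skewT δ α := by
  have h1 := rho_basis ι y hb δ α 1 1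
  simpa using h1

lemma rho_one (δ : D →ₗ[k] D) (α : k) : rho ι y hb δ α 1 = 1 := by
  have h := rho_basis ι y hb δ α 1 0
  simpa using h

lemma rho_iota_mul (δ : D →ₗ[k] D) (α : k) (d : D) (t : S) :
    rho ι y hb δ α (ι d * t) = rho ι y hb δ α t * mr d := by
  induction t using basis_induction ι y hb with
  | h0 => simp
  | hadd a b ha hbb => rw [mul_add, map_add, map_add, add_mul, ha, hbb]
  | hb1 e m =>
      rw [← mul_assoc, ← map_mul, rho_basis, rho_basis, mr_mul, mul_assoc]

lemma rho_y_mul (δ : D →ₗ[k] D)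
    (hδmul : ∀ c d : D, δ (c * d) = c * δ d + δ c * d)
    (hrel : ∀ d : D, y * ι d = ι d * y + ι (δ d)) (α : k) (t : S) :
    rho ι y hb δ α (y * t) = rho ι y hb δ α t * skewT δ α := by
  induction t using basis_induction ι y hb with
  | h0 => simp
  | hadd a b ha hbb => rw [mul_add, map_add, map_add, add_mul, ha, hbb]
  | hb1 e m =>
      rw [← mul_assoc, hrel e, add_mul, mul_assoc, ← pow_succ', map_add,
        rho_basis, rho_basis, rho_basis]
      refine AddMonoidHom.ext fun v => ?_
      show (skewT δ α ^ (m + 1)) (v * e) + (skewT δ α ^ m) (v * δ e)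
          = (skewT δ α ^ m) (mr e (skewT δ α v))
      rw [pow_succ]
      show (skewT δ α ^ m) ((skewT δ α) (v * e)) + (skewT δ α ^ m) (v * δ e)
          = (skewT δ α ^ m) ((skewT δ α v) * e)
      rw [← map_add]
      congr 1
      rw [skewT_apply, skewT_apply, hδmul, sub_mul, mul_assoc]
      abel

lemma rho_y_pow_mul (δ : D →ₗ[k] D)
    (hδmul : ∀ c d : D, δ (c * d) = c * δ d + δ c * d)
    (hrel : ∀ d : D, y * ι d = ι d * y + ι (δ d)) (α : k) (n : ℕ) (t : S) :
    rho ι y hb δ α (y ^ n * t) = rho ι y hb δ α t * skewT δ α ^ n := by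
  induction n generalizing t with
  | zero => simp
  | succ m ih =>
      rw [pow_succ', mul_assoc, rho_y_mul ι y hb δ hδmul hrel, ih, pow_succ,
        ← mul_assoc]

lemma rho_mul (δ : D →ₗ[k] D)
    (hδmul : ∀ c d : D, δ (c * d) = c * δ d + δ c * d)
    (hrel : ∀ d : D, y * ι d = ι d * y + ι (δ d)) (α : k) (s t : S) :
    rho ι y hb δ α (s * t) = rho ι y hb δ α t * rho ι y hb δ α s := by
  induction s using basis_induction ι y hb with
  | h0 => simp
  | hadd a b ha hbb => rw [add_mul, map_add, map_add, mul_add, ha, hbb]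
  | hb1 d n =>
      rw [mul_assoc, rho_iota_mul, rho_y_pow_mul ι y hb δ hδmul hrel, rho_basis,
        mul_assoc]

/-- The ring homomorphism `Sᵐᵒᵖ →+* AddMonoid.End D` giving the right module structure. -/
noncomputable def rhoRing (δ : D →ₗ[k] D)
    (hδmul : ∀ c d : D, δ (c * d) = c * δ d + δ c * d)
    (hrel : ∀ d : D, y * ι d = ι d * y + ι (δ d)) (α : k) :
    Sᵐᵒᵖ →+* AddMonoid.End D where
  toFun s := rho ι y hb δ α s.unop
  map_one' := rho_one ι y hb δ α
  map_mul' a b := by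
    show rho ι y hb δ α (b.unop * a.unop) = _
    rw [rho_mul ι y hb δ hδmul hrel]
  map_zero' := by simp
  map_add' a b := by simp

lemma rhoRing_iota (δ : D →ₗ[k] D)
    (hδmul : ∀ c d : D, δ (c * d) = c * δ d + δ c * d)
    (hrel : ∀ d : D, y * ι d = ι d * y + ι (δ d)) (α : k) (d v : D) :
    rhoRing ι y hb δ hδmul hrel α (op (ι d)) v = v * d := by
  show rho ι y hb δ α (ι d) v = v * d
  rw [rho_iota, mr_apply]

lemma rhoRing_y (δ : D →ₗ[k] D)
    (hδmul : ∀ c d : D, δ (c * d) = c * δ d + δ c * d)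
    (hrel : ∀ d : D, y * ι d = ι d * y + ι (δ d)) (α : k) (v : D) :
    rhoRing ι y hb δ hδmul hrel α (op y) v = algebraMap k D α * v - δ v := by
  show rho ι y hb δ α y v = _
  rw [rho_y, skewT_apply]

end Aux

/-- Type synonym carrying the right module structure from `ρ`. -/
def SkewCarrier {D : Type u} [DivisionRing D] {S : Type u} [Ring S]
    (ρ : Sᵐᵒᵖ →+* AddMonoid.End D) : Type u := D

section Carrier

variable {D : Type u} [DivisionRing D] {S : Type u} [Ring S]
variable (ρ : Sᵐᵒᵖ →+* AddMonoid.End D)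

instance : AddCommGroup (SkewCarrier ρ) := inferInstanceAs (AddCommGroup D)

noncomputable instance : Module Sᵐᵒᵖ (SkewCarrier ρ) := Module.compHom D ρ

/-- Identity map to the underlying division ring. -/
def SkewCarrier.toD : SkewCarrier ρ → D := id

/-- Identity map from the underlying division ring. -/
def SkewCarrier.ofD : D → SkewCarrier ρ := id

lemma SkewCarrier.smul_def (s : Sᵐᵒᵖ) (v : SkewCarrier ρ) :
    s • v = ρ s (SkewCarrier.toD ρ v) := rfl

instance : Nontrivial (SkewCarrier ρ) := inferInstanceAs (Nontrivial D)

/-- If `ι d` acts by right multiplication, the module is simple. -/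
lemma skewCarrier_simple (ι : D →+* S)
    (hι : ∀ d v : D, ρ (op (ι d)) v = v * d) :
    IsSimpleModule Sᵐᵒᵖ (SkewCarrier ρ) := by
  refine @IsSimpleModule.mk _ _ _ _ _ ?_
  constructor
  intro N
  rcases eq_or_ne N ⊥ with h | h
  · exact Or.inl h
  · right
    obtain ⟨v, hvN, hv0⟩ := Submodule.exists_mem_ne_zero_of_ne_bot h
    rw [eq_top_iff]
    intro w _
    have hv0' : SkewCarrier.toD ρ v ≠ 0 := hv0
    have hw : w = (op (ι ((SkewCarrier.toD ρ v)⁻¹ * SkewCarrier.toD ρ w))) • v := by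
      rw [SkewCarrier.smul_def, hι]
      show SkewCarrier.toD ρ w
          = SkewCarrier.toD ρ v * ((SkewCarrier.toD ρ v)⁻¹ * SkewCarrier.toD ρ w)
      rw [← mul_assoc, mul_inv_cancel₀ hv0', one_mul]
    rw [hw]
    exact N.smul_mem _ hvN

end Carrier

section NonIso

variable {k : Type u} [Field k] {D : Type u} [DivisionRing D] [Algebra k D]
variable {S : Type u} [Ring S]

@[simp] lemma toD_ofD (ρ : Sᵐᵒᵖ →+* AddMonoid.End D) (d : D) :
    SkewCarrier.toD ρ (SkewCarrier.ofD ρ d) = d := rfl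

lemma eigen_of_equiv (δ : D →ₗ[k] D) (hδ1 : δ (1 : D) = 0) (ι : D →+* S) (y : S)
    (α β : k) (ρ1 ρ2 : Sᵐᵒᵖ →+* AddMonoid.End D)
    (h1ι : ∀ d v : D, ρ1 (op (ι d)) v = v * d)
    (h2ι : ∀ d v : D, ρ2 (op (ι d)) v = v * d)
    (h1y : ∀ v : D, ρ1 (op y) v = algebraMap k D α * v - δ v)
    (h2y : ∀ v : D, ρ2 (op y) v = algebraMap k D β * v - δ v)
    (e : SkewCarrier ρ1 ≃ₗ[Sᵐᵒᵖ] SkewCarrier ρ2) :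
    ∃ w : D, w ≠ 0 ∧ δ w = algebraMap k D (β - α) * w := by
  set w : D := SkewCarrier.toD ρ2 (e (SkewCarrier.ofD ρ1 1)) with hw
  have hsm1 : ∀ v : D,
      SkewCarrier.ofD ρ1 v = (op (ι v)) • SkewCarrier.ofD ρ1 (1 : D) := by
    intro v
    rw [SkewCarrier.smul_def, toD_ofD, h1ι, one_mul]
    rfl
  have ew : ∀ v : D, SkewCarrier.toD ρ2 (e (SkewCarrier.ofD ρ1 v)) = w * v := by
    intro v
    rw [hsm1 v, map_smul, SkewCarrier.smul_def, h2ι, hw]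
    rfl
  have hw0 : w ≠ 0 := by
    intro h0
    have h1 : e (SkewCarrier.ofD ρ1 1) = 0 := h0
    have h2 : SkewCarrier.ofD ρ1 (1 : D) = 0 :=
      e.injective (h1.trans (map_zero e).symm)
    exact one_ne_zero (α := D) h2
  -- the `y`-action compatibility at `1`
  have hL : (op y) • SkewCarrier.ofD ρ1 (1 : D)
      = SkewCarrier.ofD ρ1 (algebraMap k D α) := by
    rw [SkewCarrier.smul_def, toD_ofD, h1y, hδ1, sub_zero, mul_one]
    rfl
  have key : w * algebraMap k D α = algebraMap k D β * w - δ w := by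
    have h2 : SkewCarrier.toD ρ2 (e ((op y) • SkewCarrier.ofD ρ1 1))
        = algebraMap k D β * w - δ w := by
      rw [map_smul, SkewCarrier.smul_def, h2y, hw]
      rfl
    rw [hL, ew] at h2
    exact h2
  refine ⟨w, hw0, ?_⟩
  have hδw : δ w = algebraMap k D β * w - w * algebraMap k D α := by
    rw [key]; abel
  rw [hδw, ← Algebra.commutes α w, ← sub_mul, ← map_sub]

end NonIso

/-- Let `D` be a division algebra over a field `k`, `δ` a `k`-linear
derivation of `D`, and `S = D[y; δ]`.  The set `E_δ` of eigenvalues of `δ` in `k` is an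
additive subgroup of `(k, +)`, and if it has infinite index in `(k, +)` then there are
infinitely many pairwise non-isomorphic simple right `S`-modules. -/
theorem stmt_8 (k : Type u) [Field k] (D : Type u) [DivisionRing D] [Algebra k D]
    (δ : D →ₗ[k] D) (hδmul : ∀ c d : D, δ (c * d) = c * δ d + δ c * d)
    -- `S = D[y; δ]`:
    (S : Type u) [Ring S] (ι : D →+* S) (y : S)
    (hrel : ∀ d : D, y * ι d = ι d * y + ι (δ d))
    (hbasis : Function.Bijective fun c : ℕ →₀ D => c.sum fun n d => ι d * y ^ n) :
    (∃ G : AddSubgroup k, (G : Set k) =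
        {α : k | ∃ v : D, v ≠ 0 ∧ δ v = algebraMap k D α * v}) ∧
    (∀ G : AddSubgroup k, (G : Set k) =
        {α : k | ∃ v : D, v ≠ 0 ∧ δ v = algebraMap k D α * v} →
      Infinite (k ⧸ G) → Nonempty (SimpleRightModuleFamily S)) := by
  have hδ1 : δ (1 : D) = 0 := by
    have h := hδmul 1 1
    rw [one_mul, mul_one, one_mul] at h
    exact (right_eq_add.mp h)
  constructor
  · -- the eigenvalue set is an additive subgroup
    refine ⟨{ carrier := {α : k | ∃ v : D, v ≠ 0 ∧ δ v = algebraMap k D α * v}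
              zero_mem' := ⟨1, one_ne_zero, by rw [hδ1, map_zero, zero_mul]⟩
              add_mem' := ?_
              neg_mem' := ?_ }, rfl⟩
    · rintro a b ⟨v, hv, hav⟩ ⟨w, hw, hbw⟩
      refine ⟨v * w, mul_ne_zero hv hw, ?_⟩
      rw [hδmul v w, hav, hbw, map_add, add_mul]
      have h1 : v * (algebraMap k D b * w) = algebraMap k D b * (v * w) := by
        rw [← mul_assoc, ← Algebra.commutes b v, mul_assoc]
      rw [h1, mul_assoc, add_comm]
    · rintro a ⟨v, hv, hav⟩
      refine ⟨v⁻¹, inv_ne_zero hv, ?_⟩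
      have h0 : δ (v * v⁻¹) = 0 := by rw [mul_inv_cancel₀ hv, hδ1]
      rw [hδmul, hav, mul_assoc, mul_inv_cancel₀ hv, mul_one] at h0
      have h1 : v * δ v⁻¹ = -(algebraMap k D a) := eq_neg_of_add_eq_zero_left h0
      have h2 : δ v⁻¹ = v⁻¹ * -(algebraMap k D a) := by
        rw [← h1, ← mul_assoc, inv_mul_cancel₀ hv, one_mul]
      rw [h2, map_neg, mul_neg, ← Algebra.commutes a v⁻¹, neg_mul]
  · -- infinitely many simple right modules
    intro G hG hInf
    haveI := hInf
    set f : ℕ ↪ k ⧸ G := Infinite.natEmbedding _ with hf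
    set a : ℕ → k := fun i => (f i).out with hA
    have ha : ∀ i, ((a i : k) : k ⧸ G) = f i := fun i => QuotientAddGroup.out_eq' (f i)
    refine ⟨⟨fun i => SkewCarrier (rhoRing ι y hbasis δ hδmul hrel (a i)),
      fun i => skewCarrier_simple _ ι (rhoRing_iota ι y hbasis δ hδmul hrel (a i)),
      fun i j hij => ⟨fun e => ?_⟩⟩⟩
    obtain ⟨w, hw0, hwδ⟩ := eigen_of_equiv δ hδ1 ι y (a i) (a j)
      (rhoRing ι y hbasis δ hδmul hrel (a i)) (rhoRing ι y hbasis δ hδmul hrel (a j))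
      (rhoRing_iota ι y hbasis δ hδmul hrel (a i))
      (rhoRing_iota ι y hbasis δ hδmul hrel (a j))
      (rhoRing_y ι y hbasis δ hδmul hrel (a i))
      (rhoRing_y ι y hbasis δ hδmul hrel (a j)) e
    have hmem : a j - a i ∈ G := by
      have : a j - a i ∈ {α : k | ∃ v : D, v ≠ 0 ∧ δ v = algebraMap k D α * v} :=
        ⟨w, hw0, hwδ⟩
      rw [← hG] at this
      exact this
    have : ((a j : k) : k ⧸ G) = ((a i : k) : k ⧸ G) :=
      (QuotientAddGroup.eq_iff_sub_mem).mpr hmem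
    rw [ha, ha] at this
    exact hij (f.injective this).symm
end

section
/- Let k be a field of characteristic p > 0, n ≥ 1, and A an n-th Weyl algebra over k. Let (E, f) be a ring of fractions of A (A is a left and right noetherian domain). Then E is finite-dimensional as a module over its center Z(E) (which is a field), but E is not finitely generated as a k-algebra: there is no finite subset F of E such that the smallest subring of E containing f(c·1) for all c ∈ k together with F equals E. -/
private lemma listOfFn_prod_mul {M : Type*} [Monoid M] :
    ∀ {n : ℕ} (u v : Fin n → M), (∀ i j, Commute (u i) (v j)) →
      (List.ofFn fun i => u i * v i).prod = (List.ofFn u).prod * (List.ofFn v).prod := by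
  intro n
  induction n with
  | zero => intro u v _; simp
  | succ n ih =>
    intro u v h
    have h1 : Commute (v 0) (List.ofFn fun i : Fin n => u i.succ).prod := by
      apply Commute.list_prod_right
      intro z hz
      obtain ⟨i, rfl⟩ := List.mem_ofFn.mp hz
      exact (h i.succ 0).symm
    rw [List.ofFn_succ, List.ofFn_succ (f := u), List.ofFn_succ (f := v),
      List.prod_cons, List.prod_cons, List.prod_cons,
      ih (fun i => u i.succ) (fun i => v i.succ) (fun i j => h i.succ j.succ)]
    calc (u 0 * v 0) * ((List.ofFn fun i : Fin n => u i.succ).prod *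
            (List.ofFn fun i : Fin n => v i.succ).prod)
        = u 0 * ((v 0 * (List.ofFn fun i : Fin n => u i.succ).prod) *
            (List.ofFn fun i : Fin n => v i.succ).prod) := by rw [mul_assoc, mul_assoc]
      _ = u 0 * (((List.ofFn fun i : Fin n => u i.succ).prod * v 0) *
            (List.ofFn fun i : Fin n => v i.succ).prod) := by rw [h1.eq]
      _ = _ := by rw [mul_assoc, mul_assoc]

private lemma listOfFn_prod_single {M : Type*} [Monoid M] :
    ∀ {n : ℕ} (g : Fin n → M) (i0 : Fin n), (∀ i, i ≠ i0 → g i = 1) →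
      (List.ofFn g).prod = g i0 := by
  intro n
  induction n with
  | zero => exact fun g i0 _ => i0.elim0
  | succ n ih =>
    intro g i0 h
    rw [List.ofFn_succ, List.prod_cons]
    cases i0 using Fin.cases with
    | zero =>
      have : (List.ofFn fun i : Fin n => g i.succ).prod = 1 := by
        apply List.prod_eq_one
        intro z hz
        obtain ⟨i, rfl⟩ := List.mem_ofFn.mp hz
        exact h i.succ (Fin.succ_ne_zero i)
      rw [this, mul_one]
    | succ j =>
      have h0 : g 0 = 1 := h 0 (Fin.succ_ne_zero j).symm
      rw [h0, one_mul]
      exact ih (fun i => g i.succ) j (fun i hi => h i.succ (by simpa using hi))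

private lemma comm_pow_aux {A : Type*} [Ring A] (u v e : A)
    (hrel : v * u = u * v + e) (hue : u * e = e * u) :
    ∀ m : ℕ, v * u ^ (m + 1) = u ^ (m + 1) * v + (m + 1) • (u ^ m * e) := by
  intro m
  induction m with
  | zero => simpa using hrel
  | succ m ih =>
    have h0 : v * u ^ (m + 1 + 1) = (v * u ^ (m + 1)) * u := by
      rw [pow_succ, mul_assoc]
    rw [h0, ih, add_mul, mul_assoc, hrel, smul_mul_assoc, mul_assoc, ← hue,
      ← mul_assoc (u ^ m), ← pow_succ, mul_add, ← mul_assoc, ← pow_succ,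
      succ_nsmul ((u ^ (m + 1)) * e) (m + 1)]
    abel



/-- Let `A` be an `n`-th Weyl algebra over a field `k` of characteristic
`p > 0` and `(E, f)` a ring of fractions of `A`.  Then `E` is a finitely generated
module over its center, but `E` is not affine over `k`. -/
theorem stmt_15 (k : Type*) [Field k] (p : ℕ) (hp : 0 < p) [CharP k p]
    (n : ℕ) (hn : 1 ≤ n)
    -- `A` is an `n`-th Weyl algebra over `k`:
    (A : Type*) [Ring A] [Algebra k A]
    (x y : Fin n → A)
    (hxx : ∀ i j, x i * x j = x j * x i)
    (hyy : ∀ i j, y i * y j = y j * y i)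
    (hyx : ∀ i j, y i * x j - x j * y i = if i = j then 1 else 0)
    (hbasis : Function.Bijective fun c : ((Fin n → ℕ) × (Fin n → ℕ)) →₀ k =>
      c.sum fun ab t =>
        t • ((List.ofFn fun i => x i ^ ab.1 i).prod * (List.ofFn fun i => y i ^ ab.2 i).prod))
    -- a ring of fractions `(E, f)` of `A`:
    (E : Type*) [DivisionRing E] (f : A →+* E)
    (hinj : Function.Injective f)
    (hfrac : ∀ e : E, ∃ a b : A, b ≠ 0 ∧ e = f a * (f b)⁻¹) :
    -- conclusions: `E` is a finitely generated module over its center `Z(E)`,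
    (∃ s : Finset E, ∀ e : E, ∃ c : E → E,
      (∀ i ∈ s, c i ∈ Subring.center E) ∧ e = ∑ i ∈ s, c i * i) ∧
    -- but `E` is not affine over `k`:
    ¬ ∃ F : Set E, F.Finite ∧
      Subring.closure ((Set.range fun c : k => f (algebraMap k A c)) ∪ F) = ⊤ := by
  classical
  have hf0 : ∀ {b : A}, b ≠ 0 → f b ≠ 0 := by
    intro b hb h
    exact hb (hinj (h.trans (map_zero f).symm))
  have hcent : ∀ z : E, (∀ a : A, Commute z (f a)) → z ∈ Subring.center E := by
    intro z hz
    rw [Subring.mem_center_iff]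
    intro g
    obtain ⟨a, b, hb, rfl⟩ := hfrac g
    exact ((hz a).mul_right (hz b).inv_right₀).symm.eq
  have hcommA : ∀ z : A, (∀ i, Commute z (x i)) → (∀ i, Commute z (y i)) →
      ∀ a : A, Commute z a := by
    intro z hzx hzy a
    obtain ⟨c, rfl⟩ := hbasis.2 a
    apply Commute.sum_right
    intro ab _
    simp only [Algebra.smul_def]
    refine Commute.mul_right ?_ (Commute.mul_right ?_ ?_)
    · exact (Algebra.commutes _ z).symm
    · apply Commute.list_prod_right
      intro w hw
      obtain ⟨i, rfl⟩ := List.mem_ofFn.mp hw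
      exact (hzx i).pow_right _
    · apply Commute.list_prod_right
      intro w hw
      obtain ⟨i, rfl⟩ := List.mem_ofFn.mp hw
      exact (hzy i).pow_right _
  have hpA : (p : A) = 0 := by
    rw [show ((p : A)) = algebraMap k A ((p : ℕ) : k) by rw [map_natCast],
      CharP.cast_eq_zero k p, map_zero]
  have hxpA : ∀ i (a : A), Commute (x i ^ p) a := by
    intro i
    apply hcommA
    · intro j
      exact Commute.pow_left (hxx i j) p
    · intro j
      have hrel : y j * x i = x i * y j + (if j = i then (1 : A) else 0) := by
        have h := hyx j i
        rw [sub_eq_iff_eq_add] at h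
        rw [h]
        exact add_comm _ _
      have hue : x i * (if j = i then (1 : A) else 0)
          = (if j = i then (1 : A) else 0) * x i := by
        split <;> simp
      have h2 := comm_pow_aux (x i) (y j) _ hrel hue (p - 1)
      rw [Nat.sub_add_cancel hp] at h2
      have h3 : p • (x i ^ (p - 1) * (if j = i then (1 : A) else 0)) = 0 := by
        rw [nsmul_eq_mul, hpA, zero_mul]
      rw [h3, add_zero] at h2
      exact Commute.symm h2
  have hypA : ∀ i (a : A), Commute (y i ^ p) a := by
    intro i
    apply hcommA
    · intro j
      have hrel : x j * y i = y i * x j + (-(if i = j then (1 : A) else 0)) := by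
        have h := hyx i j
        rw [sub_eq_iff_eq_add] at h
        rw [h]
        abel
      have hue : y i * (-(if i = j then (1 : A) else 0))
          = (-(if i = j then (1 : A) else 0)) * y i := by
        split <;> simp
      have h2 := comm_pow_aux (y i) (x j) _ hrel hue (p - 1)
      rw [Nat.sub_add_cancel hp] at h2
      have h3 : p • (y i ^ (p - 1) * (-(if i = j then (1 : A) else 0))) = 0 := by
        rw [nsmul_eq_mul, hpA, zero_mul]
      rw [h3, add_zero] at h2
      exact Commute.symm h2
    · intro j
      exact Commute.pow_left (hyy i j) p
  have hxpE : ∀ i, f (x i ^ p) ∈ Subring.center E :=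
    fun i => hcent _ (fun a => (hxpA i a).map f)
  have hypE : ∀ i, f (y i ^ p) ∈ Subring.center E :=
    fun i => hcent _ (fun a => (hypA i a).map f)
  have hkE : ∀ c : k, f (algebraMap k A c) ∈ Subring.center E :=
    fun c => hcent _ (fun a =>
      Commute.map (show Commute (algebraMap k A c) a from Algebra.commutes c a) f)
  set Z := Subring.center E with hZdef
  let mon : (Fin n → ℕ) → (Fin n → ℕ) → A := fun a b =>
    (List.ofFn fun i => x i ^ a i).prod * (List.ofFn fun i => y i ^ b i).prod
  let M : Finset E := Finset.image
    (fun ab : (Fin n → Fin p) × (Fin n → Fin p) =>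
      f (mon (fun i => (ab.1 i : ℕ)) (fun i => (ab.2 i : ℕ)))) Finset.univ
  let V : Submodule Z E := Submodule.span Z (M : Set E)
  have hsmulV : ∀ (z : E), z ∈ Z → ∀ v ∈ V, z * v ∈ V := by
    intro z hz v hv
    exact V.smul_mem ⟨z, hz⟩ hv
  have hfc : ∀ (g : Fin n → A), (∀ i, f (g i) ∈ Z) → f (List.ofFn g).prod ∈ Z := by
    intro g hg
    rw [map_list_prod, List.map_ofFn]
    refine list_prod_mem ?_
    intro w hw
    obtain ⟨i, rfl⟩ := List.mem_ofFn.mp hw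
    exact hg i
  have hmonV : ∀ a b : Fin n → ℕ, f (mon a b) ∈ V := by
    intro a b
    have hXsplit : (List.ofFn fun i => x i ^ a i).prod =
        (List.ofFn fun i => x i ^ (p * (a i / p))).prod *
          (List.ofFn fun i => x i ^ (a i % p)).prod := by
      have hfun : (fun i => x i ^ a i) =
          fun i => x i ^ (p * (a i / p)) * x i ^ (a i % p) := by
        funext i
        rw [← pow_add, Nat.div_add_mod]
      rw [hfun]
      exact listOfFn_prod_mul _ _
        (fun i j => Commute.pow_pow (show Commute (x i) (x j) from hxx i j) _ _)
    have hYsplit : (List.ofFn fun i => y i ^ b i).prod =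
        (List.ofFn fun i => y i ^ (p * (b i / p))).prod *
          (List.ofFn fun i => y i ^ (b i % p)).prod := by
      have hfun : (fun i => y i ^ b i) =
          fun i => y i ^ (p * (b i / p)) * y i ^ (b i % p) := by
        funext i
        rw [← pow_add, Nat.div_add_mod]
      rw [hfun]
      exact listOfFn_prod_mul _ _
        (fun i j => Commute.pow_pow (show Commute (y i) (y j) from hyy i j) _ _)
    have hzx : f (List.ofFn fun i => x i ^ (p * (a i / p))).prod ∈ Z := by
      apply hfc
      intro i
      rw [pow_mul, map_pow]
      exact pow_mem (hxpE i) _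
    have hzy : f (List.ofFn fun i => y i ^ (p * (b i / p))).prod ∈ Z := by
      apply hfc
      intro i
      rw [pow_mul, map_pow]
      exact pow_mem (hypE i) _
    have hmem : f (mon (fun i => a i % p) (fun i => b i % p)) ∈ V := by
      apply Submodule.subset_span
      exact Finset.mem_image.mpr ⟨(fun i => ⟨a i % p, Nat.mod_lt _ hp⟩,
        fun i => ⟨b i % p, Nat.mod_lt _ hp⟩), Finset.mem_univ _, rfl⟩
    have key : f (mon a b) =
        f (List.ofFn fun i => x i ^ (p * (a i / p))).prod *
          (f (List.ofFn fun i => y i ^ (p * (b i / p))).prod *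
            f (mon (fun i => a i % p) (fun i => b i % p))) := by
      show f (_ * _) = _
      rw [hXsplit, hYsplit]
      set X1 := (List.ofFn fun i => x i ^ (p * (a i / p))).prod
      set X2 := (List.ofFn fun i => x i ^ (a i % p)).prod
      set Y1 := (List.ofFn fun i => y i ^ (p * (b i / p))).prod
      set Y2 := (List.ofFn fun i => y i ^ (b i % p)).prod
      show f ((X1 * X2) * (Y1 * Y2)) = f X1 * (f Y1 * f (X2 * Y2))
      rw [map_mul, map_mul, map_mul, map_mul]
      have hc : f X2 * f Y1 = f Y1 * f X2 := Subring.mem_center_iff.mp hzy (f X2)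
      calc f X1 * f X2 * (f Y1 * f Y2)
          = f X1 * ((f X2 * f Y1) * f Y2) := by rw [mul_assoc, mul_assoc]
        _ = f X1 * ((f Y1 * f X2) * f Y2) := by rw [hc]
        _ = f X1 * (f Y1 * (f X2 * f Y2)) := by rw [mul_assoc]
    rw [key]
    exact hsmulV _ hzx _ (hsmulV _ hzy _ hmem)
  have hfAV : ∀ a : A, f a ∈ V := by
    intro a
    obtain ⟨c, rfl⟩ := hbasis.2 a
    rw [map_finsuppSum]
    apply Submodule.sum_mem
    intro ab _
    have h : f ((c ab) • (mon ab.1 ab.2)) ∈ V := by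
      rw [Algebra.smul_def, map_mul]
      exact hsmulV _ (hkE _) _ (hmonV _ _)
    exact h
  have h1V : (1 : E) ∈ V := by
    have h := hfAV 1
    rwa [map_one] at h
  have hfmulV : ∀ (a : A) (v : E), v ∈ V → f a * v ∈ V := by
    intro a v hv
    induction hv using Submodule.span_induction with
    | mem e he =>
      obtain ⟨ab, _, rfl⟩ := Finset.mem_image.mp he
      rw [← map_mul]
      exact hfAV _
    | zero => rw [mul_zero]; exact V.zero_mem
    | add u w _ _ ihu ihw => rw [mul_add]; exact V.add_mem ihu ihw
    | smul z u _ ih =>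
      have h : f a * (z • u) = z • (f a * u) := by
        show f a * ((z : E) * u) = (z : E) * (f a * u)
        rw [← mul_assoc, Subring.mem_center_iff.mp z.2 (f a), mul_assoc]
      rw [h]
      exact V.smul_mem z ih
  have hinvV : ∀ b : A, b ≠ 0 → (f b)⁻¹ ∈ V := by
    intro b hb
    haveI : FiniteDimensional Z V := FiniteDimensional.span_finset Z M
    let L : V →ₗ[Z] V :=
      { toFun := fun v => ⟨f b * v, hfmulV b v v.2⟩
        map_add' := by
          intro u v
          apply Subtype.ext
          show f b * ((u : E) + (v : E)) = f b * u + f b * v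
          rw [mul_add]
        map_smul' := by
          intro z v
          apply Subtype.ext
          show f b * ((z : E) * v) = (z : E) * (f b * v)
          rw [← mul_assoc, Subring.mem_center_iff.mp z.2 (f b), mul_assoc] }
    have hLinj : Function.Injective L := by
      intro u v h
      apply Subtype.ext
      have h' : f b * u = f b * v := congrArg Subtype.val h
      exact mul_left_cancel₀ (hf0 hb) h'
    obtain ⟨v, hv⟩ := (LinearMap.injective_iff_surjective.mp hLinj) ⟨1, h1V⟩
    have h1 : f b * v = 1 := congrArg Subtype.val hv
    have h2 : (v : E) = (f b)⁻¹ := (inv_eq_of_mul_eq_one_right h1).symm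
    exact h2 ▸ v.2
  have hVtop : ∀ e : E, e ∈ V := by
    intro e
    obtain ⟨a, b, hb, rfl⟩ := hfrac e
    exact hfmulV a _ (hinvV b hb)
  constructor
  · refine ⟨M, fun e => ?_⟩
    obtain ⟨g, -, hg⟩ := Submodule.mem_span_finset.mp (hVtop e)
    refine ⟨fun i => (g i : E), fun i _ => (g i).2, ?_⟩
    rw [← hg]
    exact Finset.sum_congr rfl (fun i _ => rfl)
  · rintro ⟨F, hFfin, hFtop⟩
    let i0 : Fin n := ⟨0, hn⟩
    letI algkZ : Algebra k Z :=
      ((f.comp (algebraMap k A)).codRestrict Z (fun c => hkE c)).toAlgebra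
    letI algkE : Algebra k E := RingHom.toAlgebra'
      (f.comp (algebraMap k A))
      (fun c e => (Subring.mem_center_iff.mp (hkE c) e).symm)
    haveI : IsScalarTower k Z E := IsScalarTower.of_algebraMap_eq (fun c => rfl)
    have hAC : (⊤ : Subalgebra k E).FG := by
      have hadj : Algebra.adjoin k F = ⊤ := by
        have hsub : ((Subring.closure
            ((Set.range fun c : k => f (algebraMap k A c)) ∪ F)) : Set E)
            ⊆ ((Algebra.adjoin k F).toSubring : Set E) := by
          apply Subring.closure_le.mpr
          rintro w (⟨c, rfl⟩ | hw)
          · exact (Algebra.adjoin k F).algebraMap_mem c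
          · exact Algebra.subset_adjoin hw
        rw [eq_top_iff]
        intro w _
        refine hsub ?_
        rw [hFtop]
        exact Subring.mem_top w
      exact Subalgebra.fg_def.mpr ⟨F, hFfin, hadj⟩
    have hBC : (⊤ : Submodule Z E).FG := by
      refine ⟨M, ?_⟩
      rw [eq_top_iff]
      intro e _
      exact hVtop e
    obtain ⟨B₀, hB₀fg, hB₀E⟩ := exists_subalgebra_of_fg k Z E hAC hBC
    haveI : IsNoetherianRing B₀ := isNoetherianRing_of_fg hB₀fg
    haveI : Module.Finite B₀ E := ⟨hB₀E⟩
    have hZB₀ : (⊤ : Submodule B₀ Z).FG :=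
      fg_of_injective (IsScalarTower.toAlgHom B₀ Z E).toLinearMap Subtype.val_injective
    have hZk : (⊤ : Subalgebra k Z).FG :=
      Algebra.fg_trans' (B₀.fg_top.2 hB₀fg) (Subalgebra.fg_of_submodule_fg hZB₀)
    haveI : Algebra.FiniteType k Z := ⟨hZk⟩
    haveI : Module.Finite k Z := finite_of_finite_type_of_isJacobsonRing k Z
    haveI : Algebra.IsIntegral k Z := Algebra.IsIntegral.of_finite k Z
    set t : Z := ⟨f (x i0 ^ p), hxpE i0⟩ with htdef
    obtain ⟨P, hPmonic, hPeval⟩ := Algebra.IsIntegral.isIntegral (R := k) t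
    have hE0 : Polynomial.eval₂ (algebraMap k E) (f (x i0 ^ p)) P = 0 := by
      have h1 := congrArg (algebraMap Z E) hPeval
      rw [Polynomial.hom_eval₂, map_zero] at h1
      rwa [← IsScalarTower.algebraMap_eq k Z E] at h1
    have hA0 : Polynomial.eval₂ (algebraMap k A) (x i0 ^ p) P = 0 := by
      apply hinj
      rw [map_zero, Polynomial.hom_eval₂]
      exact hE0
    let expo : ℕ → (Fin n → ℕ) := fun j i' => if i' = i0 then p * j else 0
    have hexpo_same : ∀ j, expo j i0 = p * j := fun j => if_pos rfl
    have hexpo_ne : ∀ j i', i' ≠ i0 → expo j i' = 0 := fun j i' h => if_neg h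
    have hembinj : Function.Injective
        (fun j : ℕ => (expo j, (0 : Fin n → ℕ))) := by
      intro j j' h
      have h1 : expo j = expo j' := congrArg Prod.fst h
      have h2 : p * j = p * j' := by
        have h3 := congrFun h1 i0
        rwa [hexpo_same, hexpo_same] at h3
      exact Nat.eq_of_mul_eq_mul_left hp h2
    let emb : ℕ ↪ ((Fin n → ℕ) × (Fin n → ℕ)) := ⟨_, hembinj⟩
    have hxterm : ∀ j : ℕ,
        (List.ofFn fun i => x i ^ expo j i).prod = x i0 ^ (p * j) := by
      intro j
      have h := listOfFn_prod_single (fun i => x i ^ expo j i) i0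
        (fun i hi => by show x i ^ expo j i = 1; rw [hexpo_ne j i hi, pow_zero])
      rw [h]
      show x i0 ^ expo j i0 = x i0 ^ (p * j)
      rw [hexpo_same]
    have hyterm : (List.ofFn fun i => y i ^ (0 : Fin n → ℕ) i).prod = 1 := by
      apply List.prod_eq_one
      intro w hw
      obtain ⟨i, rfl⟩ := List.mem_ofFn.mp hw
      exact pow_zero _
    have hc0 : P.toFinsupp.coeff.embDomain emb = 0 := by
      apply hbasis.1
      show (P.toFinsupp.coeff.embDomain emb).sum _ = Finsupp.sum 0 _
      rw [Finsupp.sum_zero_index, Finsupp.sum_embDomain]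
      calc P.toFinsupp.coeff.sum (fun j c =>
              c • ((List.ofFn fun i => x i ^ (emb j).1 i).prod *
                (List.ofFn fun i => y i ^ (emb j).2 i).prod))
          = P.toFinsupp.coeff.sum fun j c => c • x i0 ^ (p * j) := by
            apply Finsupp.sum_congr
            intro j _
            show _ • ((List.ofFn fun i => x i ^ expo j i).prod *
              (List.ofFn fun i => y i ^ (0 : Fin n → ℕ) i).prod) = _
            rw [hxterm j, hyterm, mul_one]
        _ = Polynomial.eval₂ (algebraMap k A) (x i0 ^ p) P := by
            rw [Polynomial.eval₂_eq_sum]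
            show P.toFinsupp.coeff.sum (fun j c => c • x i0 ^ (p * j))
              = P.toFinsupp.coeff.sum fun e a => algebraMap k A a * (x i0 ^ p) ^ e
            apply Finsupp.sum_congr
            intro j _
            rw [← pow_mul, ← Algebra.smul_def]
        _ = 0 := hA0
    have hP0 : P = 0 :=
      Polynomial.toFinsupp_eq_zero.mp (AddMonoidAlgebra.coeff_eq_zero.mp (Finsupp.embDomain_eq_zero.mp hc0))
    exact hPmonic.ne_zero hP0
end

section
/- Let k be a field, n ≥ 1, and q = (q_{ij}) an n×n multiplicatively antisymmetric matrix over kˣ (q_{ii} = 1 and q_{ji} = q_{ij}⁻¹ for all i, j). Let T be a quantum torus over k with parameters q, and let (E, f) be a ring of fractions of T (T is a left and right noetherian domain). Then the center of E equals { f(a)·f(b)⁻¹ : a, b ∈ Z(T), b ≠ 0 }, where Z(T) is the center of T. -/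
private lemma qt_aux_zpow {G : Type*} [Group G] {a b c : G}
    (hc : ∀ y, c * y = y * c) (h : a * b * a⁻¹ = c * b) (m : ℤ) :
    a * b ^ m * a⁻¹ = c ^ m * b ^ m := by
  have h1 : (MulAut.conj a) (b ^ m) = ((MulAut.conj a) b) ^ m := map_zpow _ _ _
  have h2 : (MulAut.conj a) b = c * b := h
  have h3 : Commute c b := hc b
  calc a * b ^ m * a⁻¹ = (MulAut.conj a) (b ^ m) := rfl
    _ = ((MulAut.conj a) b) ^ m := h1
    _ = (c * b) ^ m := by rw [h2]
    _ = c ^ m * b ^ m := h3.mul_zpow m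

private lemma qt_aux_list {M : Type*} [Monoid M] :
    ∀ l : List (M × M), (∀ p ∈ l, ∀ y, p.1 * y = y * p.1) →
      (l.map fun p => p.1 * p.2).prod = (l.map Prod.fst).prod * (l.map Prod.snd).prod := by
  intro l
  induction l with
  | nil => simp
  | cons p l ih =>
    intro h
    simp only [List.map_cons, List.prod_cons]
    rw [ih (fun p hp => h p (List.mem_cons_of_mem _ hp))]
    have hA : Commute ((l.map Prod.fst).prod) p.2 :=
      Commute.list_prod_left _ _ (by
        intro z hz
        obtain ⟨p', hp', rfl⟩ := List.mem_map.mp hz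
        exact h p' (List.mem_cons_of_mem _ hp') p.2)
    calc p.1 * p.2 * ((l.map Prod.fst).prod * (l.map Prod.snd).prod)
        = p.1 * ((p.2 * (l.map Prod.fst).prod) * (l.map Prod.snd).prod) := by
          simp [mul_assoc]
      _ = p.1 * (((l.map Prod.fst).prod * p.2) * (l.map Prod.snd).prod) := by
          rw [hA.eq]
      _ = p.1 * (l.map Prod.fst).prod * (p.2 * (l.map Prod.snd).prod) := by
          simp [mul_assoc]

private lemma qt_aux_ofFn {M : Type*} [Monoid M] {n : ℕ} (F G : Fin n → M)
    (hF : ∀ j y, F j * y = y * F j) :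
    (List.ofFn fun j => F j * G j).prod = (List.ofFn F).prod * (List.ofFn G).prod := by
  have h := qt_aux_list (List.ofFn fun j => (F j, G j)) (by
    intro p hp y
    obtain ⟨j, rfl⟩ := List.mem_ofFn.mp hp
    exact hF j y)
  simpa only [List.map_ofFn, Function.comp_def] using h

private lemma qt_conj_list {G : Type*} [Group G] (a : G) (l : List G) :
    a * l.prod * a⁻¹ = (l.map fun y => a * y * a⁻¹).prod := by
  induction l with
  | nil => simp
  | cons b l ih =>
    simp only [List.prod_cons, List.map_cons]
    rw [← ih]
    group

/-- Let `T` be a quantum torus over a field `k` with multiplicatively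
antisymmetric parameter matrix `q`, and `(E, f)` a ring of fractions of `T`.  Then the
center of `E` equals `{ f(a)·f(b)⁻¹ : a, b ∈ Z(T), b ≠ 0 }`. -/
theorem stmt_17 (k : Type*) [Field k] (n : ℕ) (hn : 1 ≤ n)
    (q : Fin n → Fin n → kˣ)
    (hq1 : ∀ i, q i i = 1) (hq2 : ∀ i j, q j i = (q i j)⁻¹)
    -- `T` is a quantum torus over `k` with parameters `q`:
    (T : Type*) [Ring T] [Algebra k T]
    (x : Fin n → Tˣ)
    (hcomm : ∀ i j, (x i : T) * (x j : T) = algebraMap k T (q i j : k) * ((x j : T) * (x i : T)))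
    (hbasis : Function.Bijective fun c : (Fin n → ℤ) →₀ k =>
      c.sum fun γ t => t • (List.ofFn fun i => ((x i ^ γ i : Tˣ) : T)).prod)
    -- a ring of fractions `(E, f)` of `T`:
    (E : Type*) [DivisionRing E] (f : T →+* E)
    (hinj : Function.Injective f)
    (hfrac : ∀ e : E, ∃ a b : T, b ≠ 0 ∧ e = f a * (f b)⁻¹) :
    -- conclusion:
    (Subring.center E : Set E) =
      { e : E | ∃ a b : T, a ∈ Subring.center T ∧ b ∈ Subring.center T ∧ b ≠ 0 ∧
        e = f a * (f b)⁻¹ } := by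
  classical
  set u : (Fin n → ℤ) → Tˣ := fun γ => (List.ofFn fun i => x i ^ γ i).prod with hu
  have hM : ∀ γ, ((u γ : T)) = (List.ofFn fun i => ((x i ^ γ i : Tˣ) : T)).prod := by
    intro γ
    calc ((u γ : T)) = (Units.coeHom T) (List.ofFn fun i => x i ^ γ i).prod := rfl
      _ = ((List.ofFn fun i => x i ^ γ i).map (Units.coeHom T)).prod := map_list_prod _ _
      _ = (List.ofFn fun i => ((x i ^ γ i : Tˣ) : T)).prod := by rw [List.map_ofFn]; rfl
  set L := Finsupp.linearCombination k (fun γ : Fin n → ℤ => ((u γ : T))) with hL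
  have hLapp : ∀ c : (Fin n → ℤ) →₀ k, L c = c.sum fun γ t => t • ((u γ : T)) := fun c =>
    Finsupp.linearCombination_apply k c
  have hbij : Function.Bijective L := by
    have he : ⇑L = fun c : (Fin n → ℤ) →₀ k =>
        c.sum fun γ t => t • (List.ofFn fun i => ((x i ^ γ i : Tˣ) : T)).prod := by
      funext c
      rw [hLapp]
      simp only [hM]
    rw [he]; exact hbasis
  set Q : kˣ →* Tˣ := Units.map (algebraMap k T : k →* T) with hQ
  have hQval : ∀ s : kˣ, ((Q s : T)) = algebraMap k T (s : k) := fun s => rfl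
  have hQcen : ∀ (s : kˣ) (y : Tˣ), Q s * y = y * Q s := by
    intro s y
    ext
    simp only [Units.val_mul, hQval]
    exact (Algebra.commutes (s : k) (y : T))
  set χ : Fin n → (Fin n → ℤ) → kˣ := fun i γ => ∏ j, (q i j) ^ (γ j) with hχ
  have hstep1 : ∀ i j (m : ℤ), x i * (x j) ^ m * (x i)⁻¹ = Q ((q i j) ^ m) * (x j) ^ m := by
    intro i j m
    have hbase : x i * x j * (x i)⁻¹ = Q (q i j) * x j := by
      have h1 : x i * x j = Q (q i j) * (x j * x i) := by
        ext; simp only [Units.val_mul, hQval]; exact hcomm i j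
      rw [h1, mul_assoc, mul_assoc, mul_inv_cancel, mul_one]
    have := qt_aux_zpow (hQcen (q i j)) hbase m
    rwa [← map_zpow Q] at this
  have hstep2 : ∀ i γ, x i * u γ * (x i)⁻¹ = Q (χ i γ) * u γ := by
    intro i γ
    have e1 : u γ = (List.ofFn fun j => x j ^ γ j).prod := rfl
    have e2 : (fun j => x i * (x j ^ γ j) * (x i)⁻¹) =
        fun j => Q ((q i j) ^ (γ j)) * (x j ^ γ j) := funext fun j => hstep1 i j (γ j)
    calc x i * u γ * (x i)⁻¹
        = ((List.ofFn fun j => x j ^ γ j).map fun y => x i * y * (x i)⁻¹).prod := by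
          rw [e1]; exact qt_conj_list _ _
      _ = (List.ofFn fun j => Q ((q i j) ^ (γ j)) * (x j ^ γ j)).prod := by
          rw [List.map_ofFn]
          rw [show ((fun y => x i * y * (x i)⁻¹) ∘ fun j => x j ^ γ j)
            = fun j => x i * (x j ^ γ j) * (x i)⁻¹ from rfl, e2]
      _ = (List.ofFn fun j => Q ((q i j) ^ (γ j))).prod * (List.ofFn fun j => x j ^ γ j).prod :=
          qt_aux_ofFn _ _ (fun j y => hQcen _ y)
      _ = Q (χ i γ) * u γ := by
          rw [show (List.ofFn fun j => Q ((q i j) ^ (γ j)))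
              = (List.ofFn fun j => ((q i j) ^ (γ j))).map Q from List.map_ofFn.symm,
            ← map_list_prod Q, List.prod_ofFn, ← e1, hχ]
  have hXMX : ∀ i γ,
      (x i : T) * (u γ : T) * (((x i)⁻¹ : Tˣ) : T) = ((χ i γ : kˣ) : k) • ((u γ : T)) := by
    intro i γ
    have h := congrArg (Units.val) (hstep2 i γ)
    simp only [Units.val_mul, hQval] at h
    rw [Algebra.smul_def]
    exact h
  ext z
  simp only [SetLike.mem_coe, Set.mem_setOf_eq]
  have hf0 : ∀ {t : T}, t ≠ 0 → f t ≠ 0 := fun {t} ht h => ht (hinj (by rw [h, map_zero]))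
  constructor
  · -- hard direction
    intro hz
    have hzc : ∀ g : E, g * z = z * g := Subring.mem_center_iff.mp hz
    obtain ⟨a₀, b₀, hb₀, hz0⟩ := hfrac z
    set Imem : T → Prop := fun t => ∃ a : T, z * f t = f a with hImem
    have hIleft : ∀ s t, Imem t → Imem (s * t) := by
      rintro s t ⟨a, ha⟩
      refine ⟨s * a, ?_⟩
      calc z * f (s * t) = z * (f s * f t) := by rw [map_mul]
        _ = (f s * z) * f t := by rw [← mul_assoc, ← hzc (f s)]
        _ = f s * (z * f t) := by rw [mul_assoc]
        _ = f s * f a := by rw [ha]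
        _ = f (s * a) := by rw [map_mul]
    have hIright : ∀ t s, Imem t → Imem (t * s) := by
      rintro t s ⟨a, ha⟩
      exact ⟨a * s, by rw [map_mul, ← mul_assoc, ha, ← map_mul]⟩
    have hIsub : ∀ t t', Imem t → Imem t' → Imem (t - t') := by
      rintro t t' ⟨a, ha⟩ ⟨a', ha'⟩
      exact ⟨a - a', by rw [map_sub, map_sub, mul_sub, ha, ha']⟩
    have hIsmul : ∀ (s : k) (t : T), Imem t → Imem (s • t) := by
      intro s t ht
      rw [Algebra.smul_def]
      exact hIleft _ t ht
    have hIb₀ : Imem b₀ := ⟨a₀, by rw [hz0, mul_assoc, inv_mul_cancel₀ (hf0 hb₀), mul_one]⟩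
    set P : ℕ → Prop := fun m =>
      ∃ c : (Fin n → ℤ) →₀ k, Imem (L c) ∧ c ≠ 0 ∧ c.support.card = m with hPdef
    have hPex : ∃ m, P m := by
      obtain ⟨c₀, hc₀⟩ := hbij.2 b₀
      exact ⟨c₀.support.card, c₀, by rw [hc₀]; exact hIb₀,
        by rintro rfl; rw [map_zero] at hc₀; exact hb₀ hc₀.symm, rfl⟩
    obtain ⟨c, hcI, hc0, hcard⟩ := Nat.find_spec hPex
    have hmin : ∀ (d : (Fin n → ℤ) →₀ k), Imem (L d) →
        d.support.card < c.support.card → d = 0 := by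
      intro d hdI hdlt
      by_contra hd0
      exact Nat.find_min hPex (by rw [← hcard]; exact hdlt) ⟨d, hdI, hd0, rfl⟩
    obtain ⟨γ₀, hγ₀⟩ := Finsupp.support_nonempty_iff.mpr hc0
    set v := L c with hv
    have hvI : Imem v := hcI
    have hv0 : v ≠ 0 := fun h => hc0 (hbij.1 (h.trans (map_zero L).symm))
    have hkey : ∀ i, (x i : T) * v * (((x i)⁻¹ : Tˣ) : T) = ((χ i γ₀ : kˣ) : k) • v := by
      intro i
      set c' : (Fin n → ℤ) →₀ k :=
        c.sum fun γ t => Finsupp.single γ (((χ i γ : kˣ) : k) * t) with hc'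
      have hc'app : ∀ δ, c' δ = ((χ i δ : kˣ) : k) * c δ := by
        intro δ
        rw [hc', Finsupp.sum_apply, Finsupp.sum_eq_single δ]
        · rw [Finsupp.single_eq_same]
        · intro γ _ hne
          exact Finsupp.single_eq_of_ne' hne
        · intro _; simp
      have hLc' : L c' = (x i : T) * v * (((x i)⁻¹ : Tˣ) : T) := by
        have lhs : L c' = ∑ γ ∈ c.support, (((χ i γ : kˣ) : k) * c γ) • (u γ : T) := by
          rw [hc', map_finsuppSum]
          simp only [hL, Finsupp.linearCombination_single]
          rfl
        have rhs : (x i : T) * v * (((x i)⁻¹ : Tˣ) : T)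
            = ∑ γ ∈ c.support, (((χ i γ : kˣ) : k) * c γ) • (u γ : T) := by
          rw [hv, hLapp]
          have e : (c.sum fun γ t => t • (u γ : T)) = ∑ γ ∈ c.support, c γ • (u γ : T) := rfl
          rw [e, Finset.mul_sum, Finset.sum_mul]
          refine Finset.sum_congr rfl fun γ _ => ?_
          rw [mul_smul_comm, smul_mul_assoc, hXMX i γ, smul_smul, mul_comm (c γ)]
        rw [lhs, rhs]
      set d : (Fin n → ℤ) →₀ k := c' - ((χ i γ₀ : kˣ) : k) • c with hd
      have hdI : Imem (L d) := by
        rw [hd, map_sub, map_smul, hLc']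
        exact hIsub _ _ (hIright _ _ (hIleft _ _ hvI)) (hIsmul _ _ hvI)
      have hdapp : ∀ δ, d δ = (((χ i δ : kˣ) : k) - ((χ i γ₀ : kˣ) : k)) * c δ := by
        intro δ
        rw [hd, Finsupp.sub_apply, Finsupp.smul_apply, hc'app, smul_eq_mul, sub_mul]
      have hdsupp : d.support ⊆ c.support.erase γ₀ := by
        intro δ hδ
        rw [Finsupp.mem_support_iff] at hδ
        rw [Finset.mem_erase, Finsupp.mem_support_iff]
        constructor
        · rintro rfl
          exact hδ (by rw [hdapp, sub_self, zero_mul])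
        · intro h
          exact hδ (by rw [hdapp, h, mul_zero])
      have hd0 : d = 0 := hmin d hdI
        (lt_of_le_of_lt (Finset.card_le_card hdsupp) (Finset.card_erase_lt_of_mem hγ₀))
      have hc'eq : c' = ((χ i γ₀ : kˣ) : k) • c := by rwa [hd, sub_eq_zero] at hd0
      rw [← hLc', hc'eq, map_smul]
    set ν : Fin n → ℤ := fun j => -(γ₀ j) with hν
    have hχν : ∀ i, (χ i ν) * (χ i γ₀) = 1 := by
      intro i
      show (∏ j, (q i j) ^ (ν j)) * (∏ j, (q i j) ^ (γ₀ j)) = 1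
      rw [← Finset.prod_mul_distrib]
      refine Finset.prod_eq_one fun j _ => ?_
      show (q i j) ^ (-(γ₀ j)) * (q i j) ^ (γ₀ j) = 1
      rw [zpow_neg, inv_mul_cancel]
    set w : T := (u ν : T) * v with hw
    have hwI : Imem w := hIleft _ _ hvI
    have hw0 : w ≠ 0 := fun h => hv0 ((Units.mul_right_eq_zero (u ν)).mp h)
    have hwx : ∀ i, (x i : T) * w = w * (x i : T) := by
      intro i
      have e : (((x i)⁻¹ : Tˣ) : T) * ((x i : T)) = (1 : T) := Units.inv_mul _
      have h2 : ((x i : T) * (u ν : T) * (((x i)⁻¹ : Tˣ) : T)) *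
          ((x i : T) * v * (((x i)⁻¹ : Tˣ) : T)) = (x i : T) * w * (((x i)⁻¹ : Tˣ) : T) := by
        rw [hw]
        simp only [mul_assoc]
        rw [← mul_assoc (((x i)⁻¹ : Tˣ) : T) ((x i : T)), e, one_mul]
      have h1 : (x i : T) * w * (((x i)⁻¹ : Tˣ) : T) = w := by
        rw [← h2, hXMX i ν, hkey i, smul_mul_assoc, mul_smul_comm, smul_smul]
        have hone : ((χ i ν : kˣ) : k) * ((χ i γ₀ : kˣ) : k) = 1 := by
          rw [← Units.val_mul, hχν i, Units.val_one]
        rw [hone, one_smul, hw]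
      calc (x i : T) * w
          = ((x i : T) * w * (((x i)⁻¹ : Tˣ) : T)) * (x i : T) := by
            rw [mul_assoc ((x i : T) * w), e, mul_one]
        _ = w * (x i : T) := by rw [h1]
    have hwcomm : ∀ g : T, Commute w g := by
      intro g
      obtain ⟨cg, hcg⟩ := hbij.2 g
      rw [← hcg, hLapp]
      have e : (cg.sum fun γ t => t • (u γ : T)) = ∑ γ ∈ cg.support, cg γ • (u γ : T) := rfl
      rw [e]
      refine Commute.sum_right _ _ _ fun γ _ => ?_
      refine Commute.smul_right ?_ _
      rw [show ((u γ : T)) = (List.ofFn fun j => ((x j ^ γ j : Tˣ) : T)).prod from hM γ]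
      refine Commute.list_prod_right _ _ fun y hy => ?_
      obtain ⟨j, rfl⟩ := List.mem_ofFn.mp hy
      exact Commute.units_zpow_right (hwx j).symm (γ j)
    have hwc : w ∈ Subring.center T := Subring.mem_center_iff.mpr fun g => ((hwcomm g).eq).symm
    obtain ⟨aw, haw⟩ := hwI
    have hfw : f w ≠ 0 := hf0 hw0
    have hawc : aw ∈ Subring.center T := by
      rw [Subring.mem_center_iff]
      intro t
      apply hinj
      rw [map_mul, map_mul, ← haw]
      calc f t * (z * f w) = z * (f t * f w) := by rw [← mul_assoc, hzc (f t), mul_assoc]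
        _ = z * f (t * w) := congrArg (z * ·) (map_mul f t w).symm
        _ = z * f (w * t) := by rw [Subring.mem_center_iff.mp hwc t]
        _ = z * (f w * f t) := congrArg (z * ·) (map_mul f w t)
        _ = (z * f w) * f t := by rw [mul_assoc]
    refine ⟨aw, w, hawc, hwc, hw0, ?_⟩
    rw [eq_mul_inv_iff_mul_eq₀ hfw]
    exact haw
  · -- easy direction
    rintro ⟨a, b, ha, hb, hb0, rfl⟩
    have hcent : ∀ t ∈ Subring.center T, ∀ e : E, Commute (f t) e := by
      intro t ht e
      obtain ⟨cc, dd, hdd, rfl⟩ := hfrac e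
      have h1 : Commute (f t) (f cc) := by
        show f t * f cc = f cc * f t
        rw [← map_mul, ← map_mul, ← Subring.mem_center_iff.mp ht cc]
      have h2 : Commute (f t) (f dd) := by
        show f t * f dd = f dd * f t
        rw [← map_mul, ← map_mul, ← Subring.mem_center_iff.mp ht dd]
      exact h1.mul_right h2.inv_right₀
    refine Subring.mem_center_iff.mpr fun g => ?_
    have h1 : Commute (f a) g := hcent a ha g
    have h2 : Commute (f b) g := hcent b hb g
    exact ((h1.mul_left h2.inv_left₀).eq).symm
end

section
/- Let k be a field, n ≥ 1, and q = (q_{ij}) an n×n multiplicatively antisymmetric matrix over kˣ (q_{ii} = 1 and q_{ji} = q_{ij}⁻¹ for all i, j). Let R be a quantum affine space over k with parameters q, and let (E, f) be a ring of fractions of R (R is a left and right noetherian domain). If every q_{ij} is a root of unity, then E is finite-dimensional as a module over its center Z(E) (which is a field): E is a finitely generated module over Z(E). -/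
theorem aux18_prod_split {A : Type*} [Ring A] {ι : Type*} (w h : ι → A)
    (hw : ∀ i, w i ∈ Subring.center A) (l : List ι) :
    (l.map fun i => w i * h i).prod = (l.map w).prod * (l.map h).prod := by
  induction l with
  | nil => simp
  | cons a l ih =>
    have hc : (l.map w).prod ∈ Subring.center A :=
      list_prod_mem (by simp only [List.mem_map]; rintro _ ⟨i, -, rfl⟩; exact hw i)
    simp only [List.map_cons, List.prod_cons, ih, mul_assoc]
    rw [← mul_assoc (h a), Subring.mem_center_iff.mp hc (h a), mul_assoc]

theorem aux18_pow_comm {A : Type*} [Ring A] {a b c : A} (hc : c ∈ Subring.center A)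
    (h : a * b = c * (b * a)) : ∀ m : ℕ, a ^ m * b = c ^ m * (b * a ^ m) := by
  have hcc := Subring.mem_center_iff.mp hc
  intro m
  induction m with
  | zero => simp
  | succ m ih =>
    rw [pow_succ, mul_assoc, h, ← mul_assoc, hcc, mul_assoc c, ← mul_assoc (a ^ m), ih,
      pow_succ, ← mul_assoc, ← mul_assoc, ← hcc, mul_assoc (c ^ m * c), mul_assoc b,
      mul_assoc (c ^ m)]



/-- Let `R` be a quantum affine space over a field `k` with multiplicatively
antisymmetric parameter matrix `q`, and `(E, f)` a ring of fractions of `R`.  If every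
`q i j` is a root of unity, then `E` is a finitely generated module over its center. -/
theorem stmt_18 (k : Type*) [Field k] (n : ℕ) (hn : 1 ≤ n)
    (q : Fin n → Fin n → kˣ)
    (hq1 : ∀ i, q i i = 1) (hq2 : ∀ i j, q j i = (q i j)⁻¹)
    -- `R` is a quantum affine space over `k` with parameters `q`:
    (R : Type*) [Ring R] [Algebra k R]
    (x : Fin n → R)
    (hcomm : ∀ i j, x i * x j = algebraMap k R (q i j : k) * (x j * x i))
    (hbasis : Function.Bijective fun c : (Fin n → ℕ) →₀ k =>
      c.sum fun γ t => t • (List.ofFn fun i => x i ^ γ i).prod)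
    -- a ring of fractions `(E, f)` of `R`:
    (E : Type*) [DivisionRing E] (f : R →+* E)
    (hinj : Function.Injective f)
    (hfrac : ∀ e : E, ∃ a b : R, b ≠ 0 ∧ e = f a * (f b)⁻¹)
    -- every `q i j` is a root of unity:
    (hroot : ∀ i j, ∃ m : ℕ, 1 ≤ m ∧ (q i j) ^ m = 1) :
    -- conclusion: `E` is a finitely generated module over its center `Z(E)`
    ∃ s : Finset E, ∀ e : E, ∃ c : E → E,
      (∀ i ∈ s, c i ∈ Subring.center E) ∧ e = ∑ i ∈ s, c i * i := by
  classical
  choose m hm1 hm2 using hroot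
  set M : ℕ := ∏ p : Fin n × Fin n, m p.1 p.2 with hMdef
  have hMpos : 0 < M := Finset.prod_pos fun p _ => hm1 p.1 p.2
  have hqM : ∀ i j, (q i j) ^ M = 1 := by
    intro i j
    obtain ⟨t, ht⟩ : m i j ∣ M :=
      Finset.dvd_prod_of_mem (fun p : Fin n × Fin n => m p.1 p.2)
        (Finset.mem_univ ((i, j) : Fin n × Fin n))
    rw [ht, pow_mul, hm2, one_pow]
  -- scalars are central in R
  have hscal : ∀ t : k, algebraMap k R t ∈ Subring.center R := fun t =>
    Subring.mem_center_iff.mpr fun g => (Algebra.commutes t g).symm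
  -- the monomials
  set mono : (Fin n → ℕ) → R := fun γ => (List.ofFn fun i => x i ^ γ i).prod with hmono
  -- `x i ^ M` is central in `R`
  have hxMc : ∀ i j, x i ^ M * x j = x j * x i ^ M := by
    intro i j
    rw [aux18_pow_comm (hscal (q i j : k)) (hcomm i j) M, ← map_pow]
    have : ((q i j : k)) ^ M = 1 := by
      rw [← Units.val_pow_eq_pow_val, hqM, Units.val_one]
    rw [this, map_one, one_mul]
  have hxM : ∀ i, x i ^ M ∈ Subring.center R := by
    intro i
    rw [Subring.mem_center_iff]
    intro g
    obtain ⟨c, rfl⟩ := hbasis.2 g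
    show (c.sum fun γ t => t • mono γ) * x i ^ M = x i ^ M * (c.sum fun γ t => t • mono γ)
    rw [Finsupp.sum, Finset.sum_mul, Finset.mul_sum]
    refine Finset.sum_congr rfl fun γ _ => ?_
    rw [smul_mul_assoc, mul_smul_comm]
    congr 1
    refine (Commute.list_prod_right _ _ fun y hy => ?_).eq.symm
    rw [List.mem_ofFn] at hy
    obtain ⟨j, rfl⟩ := hy
    exact Commute.pow_right (hxMc i j) _
  -- transfer of centrality from `R` to `E`
  have hfb0 : ∀ b : R, b ≠ 0 → f b ≠ 0 := by
    intro b hb h0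
    exact hb (hinj (h0.trans (map_zero f).symm))
  have hcen : ∀ z : R, z ∈ Subring.center R → f z ∈ Subring.center E := by
    intro z hz
    have hcz : ∀ r : R, Commute (f r) (f z) := fun r => by
      show f r * f z = f z * f r
      rw [← map_mul, ← map_mul, Subring.mem_center_iff.mp hz r]
    rw [Subring.mem_center_iff]
    intro g
    obtain ⟨a, b, hb, rfl⟩ := hfrac g
    exact ((hcz a).mul_left ((hcz b).inv_left₀)).eq
  -- the spanning finset
  set s : Finset E :=
    Finset.image (fun γ : Fin n → Fin M => f (mono fun i => (γ i : ℕ))) Finset.univ with hsdef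
  set S : Submodule (Subring.center E) E := Submodule.span (Subring.center E) ↑s with hSdef
  -- reduction of monomials to exponents < M
  have hred : ∀ γ : Fin n → ℕ, f (mono γ) ∈ S := by
    intro γ
    set w : Fin n → R := fun i => (x i ^ M) ^ (γ i / M) with hwdef
    have hwc : ∀ i, w i ∈ Subring.center R := fun i => pow_mem (hxM i) _
    have hdecomp : mono γ = (List.ofFn w).prod * mono fun i => γ i % M := by
      have h1 : (fun i : Fin n => x i ^ γ i) = fun i : Fin n => w i * x i ^ (γ i % M) := by
        funext i
        show x i ^ γ i = (x i ^ M) ^ (γ i / M) * x i ^ (γ i % M)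
        rw [← pow_mul, ← pow_add, Nat.div_add_mod]
      show (List.ofFn fun i : Fin n => x i ^ γ i).prod
          = (List.ofFn w).prod * (List.ofFn fun i : Fin n => x i ^ (γ i % M)).prod
      rw [h1, List.ofFn_eq_map, List.ofFn_eq_map, List.ofFn_eq_map,
        aux18_prod_split w (fun i => x i ^ (γ i % M)) hwc]
    have hwcE : f (List.ofFn w).prod ∈ Subring.center E := by
      refine hcen _ (list_prod_mem fun y hy => ?_)
      rw [List.mem_ofFn] at hy
      obtain ⟨i, rfl⟩ := hy
      exact hwc i
    have hmem : f (mono fun i => γ i % M) ∈ S := by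
      apply Submodule.subset_span
      rw [Finset.coe_image]
      exact ⟨fun i => (⟨γ i % M, Nat.mod_lt _ hMpos⟩ : Fin M), Finset.mem_coe.mpr (Finset.mem_univ _), rfl⟩
    have : f (mono γ) = (⟨f (List.ofFn w).prod, hwcE⟩ : Subring.center E) • f (mono fun i => γ i % M) := by
      rw [hdecomp, map_mul]; rfl
    rw [this]
    exact S.smul_mem _ hmem
  -- the image of `R` lies in `S`
  have hfR : ∀ r : R, f r ∈ S := by
    intro r
    obtain ⟨c, rfl⟩ := hbasis.2 r
    show f (c.sum fun γ t => t • mono γ) ∈ S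
    rw [Finsupp.sum, map_sum]
    refine Submodule.sum_mem _ fun γ _ => ?_
    rw [Algebra.smul_def, map_mul]
    exact S.smul_mem ⟨f (algebraMap k R (c γ)), hcen _ (hscal _)⟩ (hred γ)
  -- `S` is closed under multiplication
  have hmul : ∀ a ∈ S, ∀ b ∈ S, a * b ∈ S := by
    intro a ha
    induction ha using Submodule.span_induction with
    | mem a has =>
      intro b hb
      induction hb using Submodule.span_induction with
      | mem b hbs =>
        rw [hsdef, Finset.coe_image] at has hbs
        obtain ⟨γ, -, rfl⟩ := has
        obtain ⟨δ, -, rfl⟩ := hbs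
        rw [← map_mul]
        exact hfR _
      | zero => rw [mul_zero]; exact S.zero_mem
      | add u v hu hv hu' hv' => rw [mul_add]; exact S.add_mem hu' hv'
      | smul c u hu hu' => rw [mul_smul_comm]; exact S.smul_mem _ hu'
    | zero => intro b hb; rw [zero_mul]; exact S.zero_mem
    | add u v hu hv hu' hv' => intro b hb; rw [add_mul]; exact S.add_mem (hu' b hb) (hv' b hb)
    | smul c u hu hu' => intro b hb; rw [smul_mul_assoc]; exact S.smul_mem _ (hu' b hb)
  -- inverses of nonzero elements of `S` stay in `S`
  haveI : FiniteDimensional (Subring.center E) S :=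
    FiniteDimensional.span_of_finite _ s.finite_toSet
  have hone : (1 : E) ∈ S := by simpa using hfR 1
  have hinv : ∀ u : E, u ∈ S → u ≠ 0 → u⁻¹ ∈ S := by
    intro u hu hu0
    let L : S →ₗ[Subring.center E] S :=
      { toFun := fun y => ⟨u * (y : E), hmul u hu _ y.2⟩
        map_add' := by intro y z; ext; simp [mul_add]
        map_smul' := by intro c y; ext; simp [mul_smul_comm] }
    have hLinj : Function.Injective L := by
      intro y z h
      ext
      exact mul_left_cancel₀ hu0 (congrArg Subtype.val h)
    obtain ⟨y, hy⟩ := LinearMap.injective_iff_surjective.mp hLinj ⟨1, hone⟩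
    have huy : u * (y : E) = 1 := congrArg Subtype.val hy
    rw [inv_eq_of_mul_eq_one_right huy]
    exact y.2
  -- conclusion
  refine ⟨s, fun e => ?_⟩
  obtain ⟨a, b, hb, rfl⟩ := hfrac e
  have he : f a * (f b)⁻¹ ∈ S := hmul _ (hfR a) _ (hinv _ (hfR b) (hfb0 b hb))
  rw [hSdef] at he
  obtain ⟨c, -, hc⟩ := Submodule.mem_span_finset.mp he
  refine ⟨fun i => (c i : E), fun i _ => (c i).2, ?_⟩
  exact hc.symm
end
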